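/- arXiv:2506.01589 — 3 statements merged into one kernel-verified Lean document; each statement's English description precedes it below -/
import Mathlib

section
/- For every n ≥ 1 there exists a triangle-free matchstick graph on n vertices with exactly ⌊2n - √(2n - 7/4) - 3/2⌋ edges. (Proposition 2.1.) -/
/-- A *matchstick embedding* (drawing) of a simple graph `G`: the vertices are
represented by distinct points of the Euclidean plane, every edge is a
straight-line segment of unit length, two segments representing distinct edges
intersect in at most a common endpoint, and no vertex point lies in the
relative interior (open segment) of any edge segment. A graph admitting such an
embedding is a *matchstick graph*. -/
structure MatchstickEmbedding {V : Type*} (G : SimpleGraph V) where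
  /-- the position of each vertex in the plane -/
  pos : V → EuclideanSpace ℝ (Fin 2)
  /-- the vertex points are distinct -/
  inj : Function.Injective pos
  /-- every edge has unit length -/
  unit : ∀ u v : V, G.Adj u v → dist (pos u) (pos v) = 1
  /-- no vertex lies in the relative interior of an edge segment -/
  noVertexInterior : ∀ w u v : V, G.Adj u v → pos w ∉ openSegment ℝ (pos u) (pos v)
  /-- segments of distinct edges intersect in at most a common endpoint -/
  noncross : ∀ u v a b : V, G.Adj u v → G.Adj a b → s(u, v) ≠ s(a, b) →
    segment ℝ (pos u) (pos v) ∩ segment ℝ (pos a) (pos b) ⊆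
      ({pos u, pos v} ∩ {pos a, pos b} : Set (EuclideanSpace ℝ (Fin 2)))


namespace TFMS

def T : ℕ → ℕ
  | 0 => 0
  | b+1 => T b + (b+1)

lemma T_succ (b : ℕ) : T (b+1) = T b + (b+1) := rfl

lemma T_strictMono : StrictMono T := strictMono_nat_of_lt_succ (fun b => by rw [T_succ]; omega)

lemma T_pred {b : ℕ} (hb : 1 ≤ b) : T b = T (b-1) + b := by
  cases b with
  | zero => omega
  | succ c => simp [T_succ]

lemma le_T_self (m : ℕ) : m ≤ T m := by
  induction m with
  | zero => simp [T]
  | succ k ih => rw [T_succ]; omega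

noncomputable def blk (m : ℕ) : ℕ := Nat.find (⟨m, le_T_self m⟩ : ∃ b, m ≤ T b)

lemma le_T_blk (m : ℕ) : m ≤ T (blk m) := Nat.find_spec (⟨m, le_T_self m⟩ : ∃ b, m ≤ T b)

lemma blk_min {m b : ℕ} (h : m ≤ T b) : blk m ≤ b := Nat.find_min' _ h

lemma blk_zero : blk 0 = 0 := Nat.le_zero.mp (blk_min (by simp [T]))

lemma blk_pos {m : ℕ} (hm : 1 ≤ m) : 1 ≤ blk m := by
  by_contra h
  have h0 : blk m = 0 := by omega
  have h2 := le_T_blk m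
  rw [h0] at h2
  simp [T] at h2
  omega

lemma T_lt_of_blk {m : ℕ} (hm : 1 ≤ m) : T (blk m - 1) < m := by
  have h1 := blk_pos hm
  by_contra h
  have := blk_min (m := m) (b := blk m - 1) (by omega)
  omega

lemma blk_eq {m b : ℕ} (h1 : T b < m) (h2 : m ≤ T (b+1)) : blk m = b + 1 := by
  refine le_antisymm (blk_min h2) ?_
  by_contra h
  have hb : blk m ≤ b := by omega
  have h3 := le_T_blk m
  have h4 := T_strictMono.monotone hb
  omega

lemma blk_one : blk 1 = 1 := by
  have := blk_eq (m := 1) (b := 0) (by simp [T]) (by simp [T, T_succ])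
  simpa using this

lemma blk_mono : Monotone blk := by
  intro a b hab
  exact blk_min (le_trans hab (le_T_blk b))

noncomputable def Bk (m : ℕ) : ℕ := blk m
noncomputable def Ak (m : ℕ) : ℕ := T (blk m) - m

lemma Ak_add (m : ℕ) : Ak m + m = T (Bk m) := by
  have := le_T_blk m
  unfold Ak Bk
  omega

lemma Ak_lt_Bk {m : ℕ} (hm : 1 ≤ m) : Ak m < Bk m := by
  have h1 := blk_pos hm
  have h2 := T_lt_of_blk hm
  have h3 := le_T_blk m
  have h4 := T_pred h1
  unfold Ak Bk
  omega

lemma Ak_zero : Ak 0 = 0 := by unfold Ak; rw [blk_zero]; simp [T]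
lemma Bk_zero : Bk 0 = 0 := blk_zero

lemma run_inj {m m' : ℕ} (h1 : Ak m = Ak m') (h2 : Bk m = Bk m') : m = m' := by
  have g1 := Ak_add m
  have g2 := Ak_add m'
  rw [h1, h2] at g1
  omega

lemma nonfirst_lb {m : ℕ} (h1 : 1 ≤ m) (hf : Ak m + 1 < Bk m) :
    T (blk m - 1) + 1 < m := by
  have hb := blk_pos h1
  have h3 := le_T_blk m
  have h4 := T_pred hb
  unfold Ak Bk at hf
  omega

/-- for a non-first vertex, predecessor of type "remove left element" -/
lemma run_pred {m : ℕ} (h1 : 1 ≤ m) (hf : Ak m + 1 < Bk m) :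
    Bk (m-1) = Bk m ∧ Ak (m-1) = Ak m + 1 := by
  have hb := blk_pos h1
  have h3 := le_T_blk m
  have hm2 := nonfirst_lb h1 hf
  have hq : blk (m-1) = blk m := by
    have := blk_eq (m := m - 1) (b := blk m - 1) (by omega) (by rw [Nat.sub_add_cancel hb]; omega)
    omega
  refine ⟨hq, ?_⟩
  unfold Ak Bk at hf
  unfold Ak
  rw [hq]
  omega

lemma run_drop {m : ℕ} (h1 : 1 ≤ m) (hf : Ak m + 1 < Bk m) :
    Bk (m - Bk m) = Bk m - 1 ∧ Ak (m - Bk m) = Ak m := by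
  have hb := blk_pos h1
  have h3 := le_T_blk m
  have h4 := T_pred hb
  have hm2 := nonfirst_lb h1 hf
  have hb2 : 2 ≤ blk m := by
    have h6 := Ak_lt_Bk h1
    unfold Ak Bk at h6 hf
    omega
  have h5 : T (blk m - 1) = T (blk m - 2) + (blk m - 1) := by
    have e : blk m - 1 - 1 = blk m - 2 := by omega
    rw [T_pred (by omega : 1 ≤ blk m - 1), e]
  unfold Ak Bk at hf
  have hblk : blk (m - Bk m) = blk m - 1 := by
    have := blk_eq (m := m - Bk m) (b := blk m - 2) (by unfold Bk; omega)
      (by have e : blk m - 2 + 1 = blk m - 1 := by omega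
          rw [e]; unfold Bk; omega)
    omega
  refine ⟨hblk, ?_⟩
  unfold Ak Bk at hblk ⊢
  rw [hblk]
  omega

lemma run_first {m : ℕ} (h1 : 1 ≤ m) (hf : Ak m + 1 = Bk m) :
    m = T (Bk m - 1) + 1 := by
  have hb := blk_pos h1
  have h3 := le_T_blk m
  have h4 := T_pred hb
  unfold Ak Bk at *
  omega

/-- blk step lemma -/
lemma blk_step {m : ℕ} (h1 : 1 ≤ m) :
    blk m = blk (m - 1) + (if Ak m + 1 = Bk m then 1 else 0) := by
  have hb := blk_pos h1
  have h2 := T_lt_of_blk h1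
  have h3 := le_T_blk m
  have hab := Ak_lt_Bk h1
  by_cases hf : Ak m + 1 = Bk m
  · rw [if_pos hf]
    have hm := run_first h1 hf
    have : blk (m - 1) = blk m - 1 := by
      rcases Nat.eq_or_lt_of_le hb with h | h
      · have hm1 : m = 1 := by
          unfold Bk at hm; rw [← h] at hm; simpa [T] using hm
        rw [hm1, blk_one]
        simp [blk_zero]
      · have h6 : T (blk m - 2) < T (blk m - 1) := T_strictMono (by omega)
        have := blk_eq (m := m - 1) (b := blk m - 2)
          (by unfold Bk at hm; omega)
          (by have e : blk m - 2 + 1 = blk m - 1 := by omega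
              rw [e]; unfold Bk at hm; omega)
        omega
    omega
  · rw [if_neg hf]
    have hf' : Ak m + 1 < Bk m := by omega
    have := (run_pred h1 hf').1
    unfold Bk at this
    omega

end TFMS

namespace TFMS

/-- parent relation: `p` is a parent of `m` -/
def par (m p : ℕ) : Prop :=
  1 ≤ m ∧ ((Ak m + 1 = Bk m ∧ p = 0) ∨ (Ak m + 1 < Bk m ∧ (p = m - 1 ∨ p = m - Bk m)))

noncomputable instance (m p : ℕ) : Decidable (par m p) := Classical.dec _

lemma par_lt {m p : ℕ} (h : par m p) : p < m := by
  obtain ⟨h1, h2⟩ := h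
  have hb : 1 ≤ Bk m := by
    have := Ak_lt_Bk h1; omega
  rcases h2 with ⟨_, rfl⟩ | ⟨h3, rfl | rfl⟩ <;> omega

noncomputable def G (n : ℕ) : SimpleGraph (Fin n) where
  Adj i j := par i.val j.val ∨ par j.val i.val
  symm := by constructor; intro i j h; tauto
  loopless := by
    constructor
    intro i h
    rcases h with h | h <;> exact absurd (par_lt h) (lt_irrefl _)

noncomputable def lvl (m : ℕ) : ℕ := Bk m - Ak m

lemma lvl_par {m p : ℕ} (h : par m p) : lvl m = lvl p + 1 := by
  obtain ⟨h1, h2⟩ := h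
  have hab := Ak_lt_Bk h1
  rcases h2 with ⟨hf, rfl⟩ | ⟨hf, rfl | rfl⟩
  · unfold lvl; rw [Ak_zero, Bk_zero]; omega
  · have := run_pred h1 hf
    unfold lvl; omega
  · have := run_drop h1 hf
    unfold lvl; omega

lemma adj_parity {n : ℕ} {a b : Fin n} (h : (G n).Adj a b) :
    (lvl a.val + lvl b.val) % 2 = 1 := by
  rcases h with h | h <;> (have := lvl_par h; omega)

lemma cliquefree (n : ℕ) : (G n).CliqueFree 3 := by
  intro s hs
  obtain ⟨x, y, z, hxy, hxz, hyz, hteq⟩ := Finset.card_eq_three.mp hs.2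
  have hc := hs.1
  rw [hteq] at hc
  have axy := adj_parity (hc (by simp) (by simp) hxy)
  have axz := adj_parity (hc (by simp) (by simp) hxz)
  have ayz := adj_parity (hc (by simp) (by simp) hyz)
  omega

/-! ### Edge counting -/

noncomputable def parFinset (n m : ℕ) : Finset ℕ := (Finset.range n).filter (par m)

lemma parFinset_zero (n : ℕ) : parFinset n 0 = ∅ := by
  unfold parFinset
  ext p
  simp [par]

lemma parFinset_first {n m : ℕ} (h1 : 1 ≤ m) (hn : m < n) (hf : Ak m + 1 = Bk m) :
    parFinset n m = {0} := by
  unfold parFinset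
  ext p
  simp only [Finset.mem_filter, Finset.mem_range, Finset.mem_singleton]
  constructor
  · rintro ⟨_, _, ⟨_, rfl⟩ | ⟨h2, _⟩⟩
    · rfl
    · omega
  · rintro rfl
    exact ⟨by omega, h1, Or.inl ⟨hf, rfl⟩⟩

lemma parFinset_nonfirst {n m : ℕ} (h1 : 1 ≤ m) (hn : m < n) (hf : Ak m + 1 < Bk m) :
    parFinset n m = {m - 1, m - Bk m} := by
  unfold parFinset
  ext p
  simp only [Finset.mem_filter, Finset.mem_range, Finset.mem_insert, Finset.mem_singleton]
  constructor
  · rintro ⟨_, _, ⟨h2, rfl⟩ | ⟨_, h2⟩⟩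
    · omega
    · exact h2
  · rintro (rfl | rfl)
    · exact ⟨by omega, h1, Or.inr ⟨hf, Or.inl rfl⟩⟩
    · have : 1 ≤ Bk m := by have := Ak_lt_Bk h1; omega
      exact ⟨by omega, h1, Or.inr ⟨hf, Or.inr rfl⟩⟩

lemma parFinset_card {n m : ℕ} (hn : m < n) :
    (parFinset n m).card = if m = 0 then 0 else if Ak m + 1 = Bk m then 1 else 2 := by
  rcases Nat.eq_zero_or_pos m with rfl | h1
  · simp [parFinset_zero]
  · rw [if_neg (by omega)]
    have hab := Ak_lt_Bk h1
    by_cases hf : Ak m + 1 = Bk m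
    · rw [if_pos hf, parFinset_first h1 hn hf]; simp
    · have hf' : Ak m + 1 < Bk m := by omega
      rw [if_neg hf, parFinset_nonfirst h1 hn hf']
      have hb2 : 2 ≤ Bk m := by
        by_contra h
        have hb1 : Bk m = 1 := by omega
        have : Ak m = 0 := by omega
        omega
      have hm2 : 2 ≤ m := by have := nonfirst_lb h1 hf'; omega
      rw [Finset.card_insert_of_notMem (by simp; omega), Finset.card_singleton]

lemma sum_w (N : ℕ) :
    (∑ m ∈ Finset.range (N+1), (parFinset (N+1) m).card) + blk N = 2 * N := by
  induction N with
  | zero => simp [parFinset_zero, blk_zero]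
  | succ K ih =>
    have hstep : ∀ M, ∀ m < M, parFinset M m = parFinset (M+1) m := by
      intro M m hm
      unfold parFinset
      ext p
      simp only [Finset.mem_filter, Finset.mem_range]
      constructor
      · rintro ⟨h, h2⟩; exact ⟨by omega, h2⟩
      · rintro ⟨h, h2⟩; exact ⟨(par_lt h2).trans hm, h2⟩
    rw [Finset.sum_range_succ]
    have e1 : ∀ m ∈ Finset.range (K+1), (parFinset (K+2) m).card = (parFinset (K+1) m).card := by
      intro m hm
      rw [hstep (K+1) m (by simpa using hm)]
    rw [Finset.sum_congr rfl e1]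
    have hc := parFinset_card (n := K+2) (m := K+1) (by omega)
    have hs := blk_step (m := K+1) (by omega)
    simp only [Nat.add_sub_cancel] at hs
    rw [hc]
    by_cases hf : Ak (K+1) + 1 = Bk (K+1)
    · rw [if_neg (by omega), if_pos hf]
      rw [if_pos hf] at hs
      omega
    · rw [if_neg (by omega), if_neg hf]
      rw [if_neg hf] at hs
      omega

end TFMS

namespace TFMS

def fm (n : ℕ) (hn : 0 < n) (m : ℕ) : Fin n := ⟨m % n, Nat.mod_lt m hn⟩

lemma fm_val {n m : ℕ} (hn : 0 < n) (hm : m < n) : (fm n hn m).val = m := Nat.mod_eq_of_lt hm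

noncomputable def ES (n : ℕ) : Finset (ℕ × ℕ) :=
  (Finset.range n ×ˢ Finset.range n).filter (fun q => par q.1 q.2)

noncomputable def SS (n : ℕ) (hn : 0 < n) : Finset (Sym2 (Fin n)) :=
  (ES n).image (fun q => s(fm n hn q.1, fm n hn q.2))

lemma mem_ES {n : ℕ} {q : ℕ × ℕ} : q ∈ ES n ↔ q.1 < n ∧ q.2 < n ∧ par q.1 q.2 := by
  unfold ES
  simp only [Finset.mem_filter, Finset.mem_product, Finset.mem_range]
  tauto

lemma edgeSet_eq (n : ℕ) (hn : 0 < n) : (G n).edgeSet = ↑(SS n hn) := by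
  ext e
  induction e with
  | _ x y =>
    simp only [SimpleGraph.mem_edgeSet, SS, Finset.coe_image, Set.mem_image, Finset.mem_coe]
    constructor
    · intro h
      rcases h with h | h
      · refine ⟨(x.val, y.val), mem_ES.mpr ⟨x.isLt, y.isLt, h⟩, ?_⟩
        simp [Sym2.eq_iff]
        left
        constructor <;> [skip; skip] <;>
          · apply Fin.ext
            simp [fm_val hn]
      · refine ⟨(y.val, x.val), mem_ES.mpr ⟨y.isLt, x.isLt, h⟩, ?_⟩
        simp [Sym2.eq_iff]
        right
        constructor <;>
          · apply Fin.ext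
            simp [fm_val hn]
    · rintro ⟨⟨m, p⟩, hq, he⟩
      obtain ⟨hm, hp, hpar⟩ := mem_ES.mp hq
      rw [Sym2.eq_iff] at he
      rcases he with ⟨h1, h2⟩ | ⟨h1, h2⟩
      · left
        have e1 : x.val = m := by rw [← h1]; exact fm_val hn hm
        have e2 : y.val = p := by rw [← h2]; exact fm_val hn hp
        rw [e1, e2]; exact hpar
      · right
        have e1 : y.val = m := by rw [← h1]; exact fm_val hn hm
        have e2 : x.val = p := by rw [← h2]; exact fm_val hn hp
        rw [e1, e2]; exact hpar

lemma SS_card (n : ℕ) (hn : 0 < n) : (SS n hn).card = (ES n).card := by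
  apply Finset.card_image_of_injOn
  rintro ⟨m, p⟩ hq ⟨m', p'⟩ hq' he
  obtain ⟨hm, hp, hpar⟩ := mem_ES.mp hq
  obtain ⟨hm', hp', hpar'⟩ := mem_ES.mp hq'
  have l1 := par_lt hpar
  have l2 := par_lt hpar'
  rw [Sym2.eq_iff] at he
  rcases he with ⟨h1, h2⟩ | ⟨h1, h2⟩
  · have e1 : m = m' := by
      have := congrArg Fin.val h1; rwa [fm_val hn hm, fm_val hn hm'] at this
    have e2 : p = p' := by
      have := congrArg Fin.val h2; rwa [fm_val hn hp, fm_val hn hp'] at this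
    simp [e1, e2]
  · have e1 : m = p' := by
      have := congrArg Fin.val h1; rwa [fm_val hn hm, fm_val hn hp'] at this
    have e2 : p = m' := by
      have := congrArg Fin.val h2; rwa [fm_val hn hp, fm_val hn hm'] at this
    omega

lemma ES_card (n : ℕ) : (ES n).card = ∑ m ∈ Finset.range n, (parFinset n m).card := by
  have he : ES n = (Finset.range n).biUnion
      (fun m => (parFinset n m).image (fun p => (m, p))) := by
    ext ⟨m, p⟩
    rw [mem_ES, Finset.mem_biUnion]
    constructor
    · rintro ⟨h1, h2, h3⟩
      refine ⟨m, Finset.mem_range.mpr h1, Finset.mem_image.mpr ⟨p, ?_, rfl⟩⟩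
      exact Finset.mem_filter.mpr ⟨Finset.mem_range.mpr h2, h3⟩
    · rintro ⟨m', hm', hmem⟩
      obtain ⟨p', hp', he⟩ := Finset.mem_image.mp hmem
      obtain ⟨he1, he2⟩ := Prod.mk.injEq m' p' m p ▸ he
      subst he1; subst he2
      obtain ⟨hr, hpar⟩ := Finset.mem_filter.mp hp'
      exact ⟨Finset.mem_range.mp hm', Finset.mem_range.mp hr, hpar⟩
  rw [he, Finset.card_biUnion]
  · apply Finset.sum_congr rfl
    intro m _
    apply Finset.card_image_of_injOn
    intro p _ p' _ h
    simpa using h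
  · intro x _ y _ hxy
    simp only [Finset.disjoint_left, Finset.mem_image]
    rintro a ⟨p, _, rfl⟩ ⟨p', _, he⟩
    exact hxy (by simpa using (Prod.mk.injEq .. ▸ he).1.symm)

lemma two_T (b : ℕ) : 2 * T b = b * (b + 1) := by
  induction b with
  | zero => simp [T]
  | succ k ih => rw [T_succ]; ring_nf; ring_nf at ih; omega

lemma edge_count (n : ℕ) (hn : 1 ≤ n) :
    ((G n).edgeSet.ncard) + blk (n-1) = 2 * (n-1) := by
  have h0 : 0 < n := hn
  rw [edgeSet_eq n h0, Set.ncard_coe_finset, SS_card, ES_card]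
  have : n = (n-1) + 1 := by omega
  rw [this]
  simp only [Nat.add_sub_cancel]
  exact sum_w (n-1)

lemma floor_formula (n : ℕ) (hn : 1 ≤ n) :
    (2 * ((n:ℤ)-1) - blk (n-1)) = ⌊2 * (n : ℝ) - Real.sqrt (2 * n - 7 / 4) - 3 / 2⌋ := by
  set j := blk (n-1) with hj
  have hTj : n - 1 ≤ T j := le_T_blk (n-1)
  have hx0 : (0:ℝ) ≤ 2 * n - 7/4 := by
    have : (1:ℝ) ≤ n := by exact_mod_cast hn
    nlinarith
  have hTreal : ∀ b : ℕ, 2 * (T b : ℝ) = b * (b+1) := by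
    intro b
    exact_mod_cast two_T b
  have hup : Real.sqrt (2 * n - 7/4) ≤ (j:ℝ) + 1/2 := by
    have h1 : 2 * (n:ℝ) - 7/4 ≤ ((j:ℝ) + 1/2)^2 := by
      have h2 : ((n:ℝ) - 1) ≤ T j := by
        have : ((n - 1 : ℕ) : ℝ) ≤ (T j : ℝ) := by exact_mod_cast hTj
        have hcast : ((n - 1 : ℕ) : ℝ) = (n:ℝ) - 1 := by
          have : 1 ≤ n := hn
          push_cast [this]
          ring
        linarith [hcast ▸ this]
      have := hTreal j
      nlinarith
    calc Real.sqrt (2 * n - 7/4) ≤ Real.sqrt (((j:ℝ) + 1/2)^2) := Real.sqrt_le_sqrt h1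
      _ = (j:ℝ) + 1/2 := Real.sqrt_sq (by positivity)
  have hlow : (j:ℝ) - 1/2 < Real.sqrt (2 * n - 7/4) := by
    rcases Nat.eq_zero_or_pos j with h0 | h0
    · rw [h0]
      simp only [Nat.cast_zero]
      have := Real.sqrt_nonneg (2 * (n:ℝ) - 7/4)
      linarith
    · have hn1 : 1 ≤ n - 1 := by
        by_contra hc
        have h00 : n - 1 = 0 := by omega
        rw [h00, blk_zero] at hj
        omega
      have hj1 : T (j - 1) < n - 1 := T_lt_of_blk hn1
      have h1 : ((j:ℝ) - 1/2)^2 < 2 * (n:ℝ) - 7/4 := by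
        have h2 : (T (j-1) : ℝ) + 1 ≤ ((n:ℝ) - 1) := by
          have : (T (j-1) : ℕ) + 1 ≤ n - 1 := hj1
          have hcast : ((n - 1 : ℕ) : ℝ) = (n:ℝ) - 1 := by
            have : 1 ≤ n := hn
            push_cast [this]
            ring
          calc (T (j-1) : ℝ) + 1 = ((T (j-1) + 1 : ℕ) : ℝ) := by push_cast; ring
            _ ≤ ((n - 1 : ℕ) : ℝ) := by exact_mod_cast hj1
            _ = (n:ℝ) - 1 := hcast
        have h3 := hTreal (j-1)
        have hc : ((j - 1 : ℕ) : ℝ) = (j:ℝ) - 1 := by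
          push_cast [h0]
          ring
        rw [hc] at h3
        nlinarith
      have := Real.sqrt_lt_sqrt (by positivity) h1
      rwa [Real.sqrt_sq (by
        have : (1:ℝ) ≤ j := by exact_mod_cast h0
        linarith)] at this
  rw [eq_comm, Int.floor_eq_iff]
  constructor
  · push_cast
    linarith
  · push_cast
    linarith

end TFMS

namespace TFMS

open Finset

abbrev E2 := EuclideanSpace ℝ (Fin 2)

lemma e2_ext {x y : E2} (h0 : x 0 = y 0) (h1 : x 1 = y 1) : x = y := by
  ext i
  fin_cases i <;> assumption

lemma apply_add_smul (P u : E2) (r : ℝ) (i : Fin 2) : (P + r • u) i = P i + r * u i := rfl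
lemma apply_add (P u : E2) (i : Fin 2) : (P + u) i = P i + u i := rfl
lemma apply_sub (P u : E2) (i : Fin 2) : (P - u) i = P i - u i := rfl

lemma seg_repr {P u z : E2} (h : z ∈ segment ℝ P (P + u)) :
    ∃ r : ℝ, 0 ≤ r ∧ r ≤ 1 ∧ z = P + r • u := by
  rw [segment_eq_image'] at h
  obtain ⟨r, hr, hz⟩ := h
  refine ⟨r, hr.1, hr.2, ?_⟩
  rw [← hz, add_sub_cancel_left]

lemma openseg_repr {P u z : E2} (h : z ∈ openSegment ℝ P (P + u)) :
    ∃ r : ℝ, 0 < r ∧ r < 1 ∧ z = P + r • u := by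
  rw [openSegment_eq_image'] at h
  obtain ⟨r, hr, hz⟩ := h
  refine ⟨r, hr.1, hr.2, ?_⟩
  rw [← hz, add_sub_cancel_left]

/-! ### parameters -/

noncomputable def eps (k : ℕ) : ℝ := 1 / 2 ^ (4*k+16)
noncomputable def cc (k t : ℕ) : ℝ := eps k * 2 ^ t
noncomputable def ss (k t : ℕ) : ℝ := Real.sqrt (1 - cc k t ^ 2)
noncomputable def del (k : ℕ) : ℝ := eps k ^ 2 * 4 ^ k

lemma eps_pos (k : ℕ) : 0 < eps k := by unfold eps; positivity
lemma cc_pos (k t : ℕ) : 0 < cc k t := by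
  have := eps_pos k
  unfold cc; positivity
lemma del_pos (k : ℕ) : 0 < del k := by
  have := eps_pos k
  unfold del; positivity

lemma rpow_mono {a b : ℕ} (h : a ≤ b) : (2:ℝ)^a ≤ 2^b :=
  pow_le_pow_right₀ one_le_two h

lemma div_pow_le {a b c d : ℕ} (h : a + d ≤ c + b) : (2:ℝ)^a / 2^b ≤ 2^c / 2^d := by
  rw [div_le_div_iff₀ (by positivity) (by positivity)]
  calc (2:ℝ)^a * 2^d = 2^(a+d) := (pow_add 2 a d).symm
    _ ≤ 2^(c+b) := rpow_mono h
    _ = 2^c * 2^b := pow_add 2 c b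

lemma div_pow_lt {a b c d : ℕ} (h : a + d < c + b) : (2:ℝ)^a / 2^b < 2^c / 2^d := by
  rw [div_lt_div_iff₀ (by positivity) (by positivity)]
  calc (2:ℝ)^a * 2^d = 2^(a+d) := (pow_add 2 a d).symm
    _ < 2^(c+b) := pow_lt_pow_right₀ one_lt_two h
    _ = 2^c * 2^b := pow_add 2 c b

lemma four_eq (k : ℕ) : (4:ℝ)^k = 2^(2*k) := by
  rw [pow_mul]; norm_num

lemma del_eq (k : ℕ) : del k = 2^(2*k) / 2^(8*k+32) := by
  unfold del eps
  rw [div_pow, one_pow, four_eq, ← pow_mul]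
  rw [show (4*k+16)*2 = 8*k+32 from by ring]
  ring

lemma eps_eq (k : ℕ) : eps k = (2:ℝ)^0 / 2^(4*k+16) := by
  rw [pow_zero]; rfl

lemma nat_lt_pow (j : ℕ) : (j:ℝ) < 2^j := by
  have := Nat.lt_two_pow_self (n := j)
  exact_mod_cast this

lemma cc_eq (k t : ℕ) : cc k t = 2^t / 2^(4*k+16) := by
  unfold cc eps; ring

lemma cc_le_half {k t : ℕ} (ht : t ≤ k) : cc k t ≤ 1/2 := by
  rw [cc_eq, show (1:ℝ)/2 = 2^0/2^1 from by norm_num]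
  exact div_pow_le (by omega)

lemma cc_sq_le_del {k t : ℕ} (ht : t ≤ k) : cc k t ^ 2 ≤ del k := by
  unfold cc del
  have h4 : (2:ℝ)^t * 2^t ≤ 4^k := by
    calc (2:ℝ)^t * 2^t = 4^t := by rw [← mul_pow]; norm_num
    _ ≤ 4^k := pow_le_pow_right₀ (by norm_num) ht
  nlinarith [sq_nonneg (eps k), eps_pos k]

lemma del_le_eps (k : ℕ) : del k ≤ eps k := by
  rw [del_eq, eps_eq]
  exact div_pow_le (by omega)

lemma del_small (k : ℕ) : ((k:ℝ) + 2) * del k ≤ 1/2 := by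
  have h1 : ((k:ℝ) + 2) ≤ 2^(k+2) := by
    have := nat_lt_pow (k+2)
    push_cast at this
    linarith
  have h2 : (0:ℝ) ≤ del k := (del_pos k).le
  calc ((k:ℝ)+2) * del k ≤ 2^(k+2) * del k := by nlinarith
    _ = 2^(k+2) * (2^(2*k) / 2^(8*k+32)) := by rw [del_eq]
    _ = 2^(k+2+2*k) / 2^(8*k+32) := by rw [← mul_div_assoc, ← pow_add]
    _ ≤ 2^0/2^1 := div_pow_le (by omega)
    _ = 1/2 := by norm_num

lemma del_le_half (k : ℕ) : del k ≤ 1/2 := by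
  have h := del_small k
  have h2 := (del_pos k).le
  nlinarith

lemma four_del_lt_eps (k : ℕ) : 4*((k:ℝ) + 1) * del k < eps k := by
  have h1 : 4*((k:ℝ) + 1) ≤ 2^(k+4) := by
    have := nat_lt_pow (k+2)
    push_cast at this
    have e : (2:ℝ)^(k+4) = 4 * 2^(k+2) := by rw [pow_add]; ring
    rw [e]
    nlinarith
  have h2 := (del_pos k).le
  calc 4*((k:ℝ)+1) * del k ≤ 2^(k+4) * del k := by nlinarith
    _ = 2^(k+4+2*k) / 2^(8*k+32) := by rw [del_eq, ← mul_div_assoc, ← pow_add]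
    _ < 2^0 / 2^(4*k+16) := div_pow_lt (by omega)
    _ = eps k := (eps_eq k).symm

end TFMS

namespace TFMS

/-! ### sine bounds -/

lemma cc_sq_lt_one {k t : ℕ} (ht : t ≤ k) : cc k t ^ 2 < 1 := by
  have h1 := cc_le_half ht
  have h2 := (cc_pos k t).le
  nlinarith

lemma ss_sq {k t : ℕ} (ht : t ≤ k) : ss k t ^ 2 = 1 - cc k t ^ 2 := by
  unfold ss
  rw [Real.sq_sqrt]
  have := cc_sq_lt_one ht
  linarith

lemma ss_le_one (k t : ℕ) : ss k t ≤ 1 := by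
  unfold ss
  rw [Real.sqrt_le_one]
  nlinarith [sq_nonneg (cc k t)]

lemma one_sub_del_le_ss {k t : ℕ} (ht : t ≤ k) : 1 - del k ≤ ss k t := by
  unfold ss
  have h1 := cc_sq_le_del ht
  have h2 := del_le_half k
  have h3 := del_pos k
  rw [Real.le_sqrt (by linarith) (by nlinarith)]
  nlinarith

lemma ss_pos {k t : ℕ} (ht : t ≤ k) : 0 < ss k t := by
  unfold ss
  apply Real.sqrt_pos.mpr
  have := cc_sq_lt_one ht
  linarith

lemma half_le_ss {k t : ℕ} (ht : t ≤ k) : 1/2 ≤ ss k t := by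
  have h1 := one_sub_del_le_ss ht
  have h2 := del_le_half k
  linarith

/-- cross product positivity : for t < t' the direction u_{t'} is clockwise from u_t -/
lemma crosspos {k t t' : ℕ} (h : t < t') (ht' : t' ≤ k) :
    0 < ss k t * cc k t' - cc k t * ss k t' := by
  have ht : t ≤ k := by omega
  have hccm : cc k t < cc k t' := by
    unfold cc
    have := eps_pos k
    have : (2:ℝ)^t < 2^t' := pow_lt_pow_right₀ one_lt_two h
    nlinarith [eps_pos k]
  have h1 : (cc k t * ss k t')^2 < (ss k t * cc k t')^2 := by
    have e1 := ss_sq ht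
    have e2 := ss_sq ht'
    have p1 := (cc_pos k t).le
    have p2 := (cc_pos k t').le
    have q1 := cc_sq_lt_one ht
    have q2 := cc_sq_lt_one ht'
    calc (cc k t * ss k t')^2 = cc k t^2 * (1 - cc k t'^2) := by rw [mul_pow, e2]
      _ < cc k t'^2 * (1 - cc k t^2) := by nlinarith
      _ = (ss k t * cc k t')^2 := by rw [mul_pow, e1]; ring
  have h2 : 0 ≤ ss k t * cc k t' := by
    have := (ss_pos ht).le
    have := (cc_pos k t').le
    positivity
  have h3 : 0 ≤ cc k t * ss k t' := by
    have := (ss_pos ht').le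
    have := (cc_pos k t).le
    positivity
  have := lt_of_pow_lt_pow_left₀ 2 h2 h1
  linarith

/-! ### positions -/

def znx (a b : ℕ) : ℤ := 2^(b+1) - 2^(a+1)

lemma zpow_mono {a b : ℕ} (h : a ≤ b) : (2:ℤ)^a ≤ 2^b :=
  pow_le_pow_right₀ one_le_two h

lemma zpow_strict {a b : ℕ} (h : a < b) : (2:ℤ)^a < 2^b :=
  pow_lt_pow_right₀ one_lt_two h

lemma znx_nonneg {a b : ℕ} (h : a ≤ b) : 0 ≤ znx a b := by
  unfold znx
  have := zpow_mono (show a+1 ≤ b+1 by omega)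
  omega

lemma znx_pos {a b : ℕ} (h : a < b) : 0 < znx a b := by
  unfold znx
  have := zpow_strict (show a+1 < b+1 by omega)
  omega

lemma znx_diag (a : ℕ) : znx a a = 0 := by unfold znx; omega

lemma znx_inj {a b a' b' : ℕ} (h : a < b) (h' : a' < b') (he : znx a b = znx a' b') :
    a = a' ∧ b = b' := by
  unfold znx at he
  have hb : b = b' := by
    by_contra hbb
    rcases Nat.lt_or_ge b b' with hlt | hge
    · have k1 : (2:ℤ)^(b+1) ≤ 2^b' := zpow_mono (by omega)
      have k2 : (2:ℤ)^(b') + 2^(b') = 2^(b'+1) := by ring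
      have k3 : (2:ℤ)^(a'+1) ≤ 2^b' := zpow_mono (by omega)
      have k4 : (0:ℤ) < 2^(a+1) := by positivity
      omega
    · have hlt : b' < b := by omega
      have k1 : (2:ℤ)^(b'+1) ≤ 2^b := zpow_mono (by omega)
      have k2 : (2:ℤ)^(b) + 2^(b) = 2^(b+1) := by ring
      have k3 : (2:ℤ)^(a+1) ≤ 2^b := zpow_mono (by omega)
      have k4 : (0:ℤ) < 2^(a'+1) := by positivity
      omega
  subst hb
  have : (2:ℤ)^(a+1) = 2^(a'+1) := by omega
  have ha : a + 1 = a' + 1 := by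
    by_contra haa
    rcases Nat.lt_or_ge a a' with hlt | hge
    · have := zpow_strict (show a+1 < a'+1 by omega)
      omega
    · have : a' < a := by omega
      have := zpow_strict (show a'+1 < a+1 by omega)
      omega
  omega

/-- separation for an L-edge : `d ≥ 1` -/
lemma sepL {p q d : ℕ} (hpq : p < q) (hd : 1 ≤ d) :
    znx p q + 2^p < znx (p+d) (q+d) := by
  have key : znx (p+d) (q+d) = 2^d * znx p q := by
    unfold znx
    rw [show p+d+1 = (p+1)+d from by ring, show q+d+1 = (q+1)+d from by ring,
      pow_add, pow_add]
    ring
  have h1 : (2:ℤ)^(p+1) ≤ znx p q := by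
    unfold znx
    have := zpow_mono (show p+2 ≤ q+1 by omega)
    have : (2:ℤ)^(p+1) + 2^(p+1) = 2^(p+2) := by ring
    omega
  have h2 : (2:ℤ) ≤ 2^d := by
    calc (2:ℤ) = 2^1 := by ring
      _ ≤ 2^d := zpow_mono hd
  have h3 : 0 < znx p q := znx_pos hpq
  have h4 : 2 * znx p q ≤ 2^d * znx p q := by nlinarith
  have h5 : (2:ℤ)^p < 2^(p+1) := zpow_strict (by omega)
  rw [key]
  omega

/-- separation for an R-edge : `d ≥ 2` -/
lemma sepR {p q d : ℕ} (hpq : p < q) (hd : 2 ≤ d) :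
    znx p q + 2^(q+1) < znx (p+d) (q+d) := by
  have key : znx (p+d) (q+d) = 2^d * znx p q := by
    unfold znx
    rw [show p+d+1 = (p+1)+d from by ring, show q+d+1 = (q+1)+d from by ring,
      pow_add, pow_add]
    ring
  have h1 : (2:ℤ)^(p+1) ≤ znx p q := by
    unfold znx
    have := zpow_mono (show p+2 ≤ q+1 by omega)
    have : (2:ℤ)^(p+1) + 2^(p+1) = 2^(p+2) := by ring
    omega
  have h15 : (2:ℤ)^(q+1) ≤ 2 * znx p q := by
    unfold znx
    have : (0:ℤ) < 2^(p+1) := by positivity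
    unfold znx at h1
    omega
  have h2 : (4:ℤ) ≤ 2^d := by
    calc (4:ℤ) = 2^2 := by ring
      _ ≤ 2^d := zpow_mono hd
  have h3 : 0 < znx p q := znx_pos hpq
  have h4 : 4 * znx p q ≤ 2^d * znx p q := by nlinarith
  rw [key]
  omega

end TFMS

namespace TFMS

noncomputable def Yr (k a b : ℕ) : ℝ := ∑ t ∈ Finset.Ioc a b, ss k t

noncomputable def Pt (k a b : ℕ) : E2 := WithLp.toLp 2 ![eps k * (znx a b : ℝ), Yr k a b]

noncomputable def udir (k t : ℕ) : E2 := WithLp.toLp 2 ![cc k t, ss k t]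

lemma Pt0 (k a b : ℕ) : Pt k a b 0 = eps k * (znx a b : ℝ) := rfl
lemma Pt1 (k a b : ℕ) : Pt k a b 1 = Yr k a b := rfl
lemma udir0 (k t : ℕ) : udir k t 0 = cc k t := rfl
lemma udir1 (k t : ℕ) : udir k t 1 = ss k t := rfl

lemma Yr_diag (k a : ℕ) : Yr k a a = 0 := by simp [Yr]

lemma Pt_diag (k a c : ℕ) : Pt k a a = Pt k c c := by
  apply e2_ext
  · rw [Pt0, Pt0, znx_diag, znx_diag]
  · rw [Pt1, Pt1, Yr_diag, Yr_diag]

lemma Ioc_insert_left {a b : ℕ} (h : a < b) :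
    Finset.Ioc a b = insert (a+1) (Finset.Ioc (a+1) b) := by
  ext x
  simp only [Finset.mem_Ioc, Finset.mem_insert]
  omega

lemma Ioc_insert_right {a b : ℕ} (h : a ≤ b) :
    Finset.Ioc a (b+1) = insert (b+1) (Finset.Ioc a b) := by
  ext x
  simp only [Finset.mem_Ioc, Finset.mem_insert]
  omega

lemma Yr_left {k a b : ℕ} (h : a < b) : Yr k a b = ss k (a+1) + Yr k (a+1) b := by
  unfold Yr
  rw [Ioc_insert_left h, Finset.sum_insert (by simp)]

lemma Yr_right {k a b : ℕ} (h : a ≤ b) : Yr k a (b+1) = ss k (b+1) + Yr k a b := by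
  unfold Yr
  rw [Ioc_insert_right h, Finset.sum_insert (by simp)]

lemma znx_left (a b : ℕ) (h : a < b) : (znx a b : ℝ) = 2^(a+1) + (znx (a+1) b : ℝ) := by
  unfold znx
  push_cast
  ring

lemma znx_right (a b : ℕ) : (znx a (b+1) : ℝ) = 2^(b+1) + (znx a b : ℝ) := by
  unfold znx
  push_cast
  ring

lemma Pt_left {k a b : ℕ} (h : a < b) : Pt k a b = Pt k (a+1) b + udir k (a+1) := by
  apply e2_ext
  · rw [apply_add, Pt0, Pt0, udir0, znx_left a b h]
    unfold cc
    ring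
  · rw [apply_add, Pt1, Pt1, udir1, Yr_left h]
    ring

lemma Pt_right {k a b : ℕ} (h : a ≤ b) : Pt k a (b+1) = Pt k a b + udir k (b+1) := by
  apply e2_ext
  · rw [apply_add, Pt0, Pt0, udir0, znx_right a b]
    unfold cc
    ring
  · rw [apply_add, Pt1, Pt1, udir1, Yr_right h]
    ring

lemma Yr_le {k a b : ℕ} : Yr k a b ≤ ((b:ℝ) - a) ∨ b < a := by
  rcases Nat.lt_or_ge b a with h | h
  · exact Or.inr h
  · left
    unfold Yr
    calc ∑ t ∈ Finset.Ioc a b, ss k t ≤ ∑ t ∈ Finset.Ioc a b, 1 :=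
        Finset.sum_le_sum (fun t _ => ss_le_one k t)
      _ = ((b - a : ℕ) : ℝ) := by rw [Finset.sum_const, Nat.card_Ioc]; simp
      _ = (b:ℝ) - a := by
        push_cast [h]
        ring

lemma Yr_le' {k a b : ℕ} (h : a ≤ b) : Yr k a b ≤ ((b:ℝ) - a) := by
  rcases Yr_le (k := k) (a := a) (b := b) with h1 | h1
  · exact h1
  · omega

lemma Yr_ge {k a b : ℕ} (hab : a ≤ b) (hb : b ≤ k) :
    ((b:ℝ) - a) * (1 - del k) ≤ Yr k a b := by
  unfold Yr
  calc ((b:ℝ) - a) * (1 - del k) = ((b - a : ℕ):ℝ) * (1 - del k) := by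
        push_cast [hab]; ring
    _ = ∑ t ∈ Finset.Ioc a b, (1 - del k) := by
        rw [Finset.sum_const, Nat.card_Ioc, nsmul_eq_mul]
    _ ≤ ∑ t ∈ Finset.Ioc a b, ss k t := by
        apply Finset.sum_le_sum
        intro t ht
        rw [Finset.mem_Ioc] at ht
        exact one_sub_del_le_ss (by omega)

lemma Pt_inj {a b a' b' : ℕ} {k : ℕ} (h : a < b) (h' : a' < b')
    (he : Pt k a b = Pt k a' b') : a = a' ∧ b = b' := by
  have h0 := congrFun (congrArg WithLp.ofLp he) 0
  rw [Pt0, Pt0] at h0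
  have hz : (znx a b : ℝ) = znx a' b' := by
    have := eps_pos k
    exact mul_left_cancel₀ (ne_of_gt this) h0
  exact znx_inj h h' (by exact_mod_cast hz)

/-- distinct runs at x-distance at least eps -/
lemma Pt_gap {a b a' b' : ℕ} {k : ℕ} (h : a < b) (h' : a' < b')
    (hne : ¬(a = a' ∧ b = b')) : eps k ≤ |Pt k a b 0 - Pt k a' b' 0| := by
  rw [Pt0, Pt0]
  have hz : znx a b ≠ znx a' b' := fun hc => hne (znx_inj h h' hc)
  have h1 : (1:ℝ) ≤ |(znx a b : ℝ) - (znx a' b' : ℝ)| := by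
    have : (1:ℤ) ≤ |znx a b - znx a' b'| := Int.one_le_abs (by omega)
    calc (1:ℝ) = ((1:ℤ):ℝ) := by norm_num
      _ ≤ ((|znx a b - znx a' b'| : ℤ) : ℝ) := by exact_mod_cast this
      _ = |(znx a b : ℝ) - (znx a' b' : ℝ)| := by
          push_cast
          rfl
  calc eps k = eps k * 1 := by ring
    _ ≤ eps k * |(znx a b:ℝ) - (znx a' b':ℝ)| := by
        have := eps_pos k
        nlinarith
    _ = |eps k * (znx a b:ℝ) - eps k * (znx a' b':ℝ)| := by
        rw [← mul_sub, abs_mul, abs_of_pos (eps_pos k)]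

end TFMS

namespace TFMS

noncomputable def bot (k a b t : ℕ) : E2 := Pt k a b - udir k t

lemma top_eq (k a b t : ℕ) : Pt k a b = bot k a b t + udir k t := by
  unfold bot; abel

lemma bot_spec {k a b t : ℕ} (hab : a < b) (ht : t = a+1 ∨ t = b) :
    (t = a+1 ∧ bot k a b t = Pt k (a+1) b) ∨ (t = b ∧ bot k a b t = Pt k a (b-1)) := by
  rcases ht with h1 | h1
  · left
    subst h1
    refine ⟨rfl, ?_⟩
    unfold bot
    rw [Pt_left hab]
    abel
  · right
    refine ⟨h1, ?_⟩
    unfold bot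
    rw [h1]
    have hb : b = (b-1) + 1 := by omega
    conv_lhs => rw [hb, Pt_right (show a ≤ b - 1 by omega)]
    rw [← hb]
    abel

lemma seg_repr' {k a b t : ℕ} {z : E2} (hz : z ∈ segment ℝ (bot k a b t) (Pt k a b)) :
    ∃ r : ℝ, 0 ≤ r ∧ r ≤ 1 ∧ z = bot k a b t + r • udir k t := by
  rw [top_eq k a b t] at hz
  exact seg_repr hz

lemma seg_bounds {k a b t : ℕ} (htk : t ≤ k) {z : E2}
    (hz : z ∈ segment ℝ (bot k a b t) (Pt k a b)) :
    bot k a b t 0 ≤ z 0 ∧ z 0 ≤ bot k a b t 0 + cc k t ∧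
    bot k a b t 1 ≤ z 1 ∧ z 1 ≤ bot k a b t 1 + ss k t := by
  obtain ⟨r, hr0, hr1, hzr⟩ := seg_repr' hz
  have e0 : z 0 = bot k a b t 0 + r * cc k t := by rw [hzr]; rfl
  have e1 : z 1 = bot k a b t 1 + r * ss k t := by rw [hzr]; rfl
  have hc := (cc_pos k t).le
  have hs := (ss_pos htk).le
  refine ⟨?_, ?_, ?_, ?_⟩
  · rw [e0]; nlinarith
  · rw [e0]; nlinarith
  · rw [e1]; nlinarith
  · rw [e1]; nlinarith

lemma sharedPt {k t t' : ℕ} (h : t < t') (ht' : t' ≤ k) {S z : E2} {r r' : ℝ}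
    (h1 : z = S + r • udir k t) (h2 : z = S + r' • udir k t') : z = S := by
  have c0 : r * cc k t = r' * cc k t' := by
    have e1 : z 0 = S 0 + r * cc k t := by rw [h1]; rfl
    have e2 : z 0 = S 0 + r' * cc k t' := by rw [h2]; rfl
    linarith
  have c1 : r * ss k t = r' * ss k t' := by
    have e1 : z 1 = S 1 + r * ss k t := by rw [h1]; rfl
    have e2 : z 1 = S 1 + r' * ss k t' := by rw [h2]; rfl
    linarith
  have hcr := crosspos h ht'
  have hr : r = 0 := by
    have key : r * (ss k t * cc k t' - cc k t * ss k t') = 0 := by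
      linear_combination (cc k t') * c1 - (ss k t') * c0
    rcases mul_eq_zero.mp key with h2 | h2
    · exact h2
    · linarith
  rw [h1, hr, zero_smul, add_zero]

/-- reparametrize from the top -/
lemma seg_repr_top {k a b t : ℕ} {z : E2} (hz : z ∈ segment ℝ (bot k a b t) (Pt k a b)) :
    ∃ r : ℝ, 0 ≤ r ∧ r ≤ 1 ∧ z = Pt k a b + (r - 1) • udir k t := by
  obtain ⟨r, hr0, hr1, hzr⟩ := seg_repr' hz
  refine ⟨r, hr0, hr1, ?_⟩
  rw [hzr, top_eq k a b t, sub_smul, one_smul]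
  abel

end TFMS

namespace TFMS

lemma seg_bounds2 {k t : ℕ} (htk : t ≤ k) {P z : E2} (hz : z ∈ segment ℝ P (P + udir k t)) :
    P 0 ≤ z 0 ∧ z 0 ≤ P 0 + cc k t ∧ P 1 ≤ z 1 ∧ z 1 ≤ P 1 + ss k t := by
  obtain ⟨r, hr0, hr1, hzr⟩ := seg_repr hz
  have e0 : z 0 = P 0 + r * cc k t := by rw [hzr]; rfl
  have e1 : z 1 = P 1 + r * ss k t := by rw [hzr]; rfl
  have hc := (cc_pos k t).le
  have hs := (ss_pos htk).le
  refine ⟨?_, ?_, ?_, ?_⟩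
  · rw [e0]; nlinarith
  · rw [e0]; nlinarith
  · rw [e1]; nlinarith
  · rw [e1]; nlinarith

lemma top1_bounds {k a b : ℕ} (hab : a < b) (hbk : b ≤ k) :
    ((b:ℝ) - a) * (1 - del k) ≤ Pt k a b 1 ∧ Pt k a b 1 ≤ (b:ℝ) - a := by
  rw [Pt1]
  exact ⟨Yr_ge hab.le hbk, Yr_le' hab.le⟩

lemma bot1_bounds {k a b t : ℕ} (hab : a < b) (hbk : b ≤ k) (ht : t = a+1 ∨ t = b) :
    ((b:ℝ) - a - 1) * (1 - del k) ≤ bot k a b t 1 ∧ bot k a b t 1 ≤ (b:ℝ) - a - 1 := by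
  rcases bot_spec hab ht with ⟨h1, he⟩ | ⟨h1, he⟩
  · rw [he, Pt1]
    have g1 := Yr_ge (k:=k) (a:=a+1) (b:=b) (by omega) hbk
    have g2 := Yr_le' (k:=k) (a:=a+1) (b:=b) (by omega)
    push_cast at g1 g2
    constructor
    · calc ((b:ℝ) - a - 1) * (1 - del k) = ((b:ℝ) - (a+1)) * (1 - del k) := by ring
        _ ≤ Yr k (a+1) b := g1
    · calc Yr k (a+1) b ≤ (b:ℝ) - (a+1) := g2
        _ = (b:ℝ) - a - 1 := by ring
  · rw [he, Pt1]
    have g1 := Yr_ge (k:=k) (a:=a) (b:=b-1) (by omega) (by omega)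
    have g2 := Yr_le' (k:=k) (a:=a) (b:=b-1) (by omega)
    have hc : ((b-1:ℕ):ℝ) = (b:ℝ) - 1 := by
      have h1b : 1 ≤ b := by omega
      push_cast [h1b]
      ring
    rw [hc] at g1 g2
    constructor
    · calc ((b:ℝ) - a - 1) * (1 - del k) = ((b:ℝ) - 1 - a) * (1 - del k) := by ring
        _ ≤ Yr k a (b-1) := g1
    · calc Yr k a (b-1) ≤ (b:ℝ) - 1 - a := g2
        _ = (b:ℝ) - a - 1 := by ring

lemma top1_eq (k a b t : ℕ) : Pt k a b 1 = bot k a b t 1 + ss k t := by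
  conv_lhs => rw [top_eq k a b t]
  rfl

lemma top0_eq (k a b t : ℕ) : Pt k a b 0 = bot k a b t 0 + cc k t := by
  conv_lhs => rw [top_eq k a b t]
  rfl

lemma ht_le {a b t : ℕ} (hab : a < b) (ht : t = a+1 ∨ t = b) : 1 ≤ t ∧ t ≤ b := by
  rcases ht with h | h <;> omega

/-- edges whose bands are at least two apart are disjoint -/
lemma farBand {k a b t a' b' t' : ℕ} (hab : a < b) (hbk : b ≤ k) (ht : t = a+1 ∨ t = b)
    (hab' : a' < b') (hbk' : b' ≤ k) (ht' : t' = a'+1 ∨ t' = b')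
    (hlt : b + 2 + a' ≤ b' + a) {z : E2}
    (hz1 : z ∈ segment ℝ (bot k a b t) (Pt k a b))
    (hz2 : z ∈ segment ℝ (bot k a' b' t') (Pt k a' b')) : False := by
  have htk : t ≤ k := by have := ht_le hab ht; omega
  have htk' : t' ≤ k := by have := ht_le hab' ht'; omega
  have h1 := (seg_bounds htk hz1).2.2.2
  have h2 := (seg_bounds htk' hz2).2.2.1
  have h3 := (bot1_bounds hab hbk ht).2
  have h4 := (bot1_bounds hab' hbk' ht').1
  have h5 : ss k t ≤ 1 := ss_le_one k t
  have h6 : (b:ℝ) + 2 + a' ≤ (b':ℝ) + a := by exact_mod_cast hlt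
  have h7 : (b':ℝ) ≤ k := by exact_mod_cast hbk'
  have h8 : (0:ℝ) ≤ a' := by positivity
  have h9 := del_small k
  have h10 := del_pos k
  have key : (b:ℝ) - a < ((b':ℝ) - a' - 1) * (1 - del k) := by nlinarith
  linarith

/-- edges in adjacent bands -/
lemma bandAdj {k a b t a' b' t' : ℕ} (hab : a < b) (hbk : b ≤ k) (ht : t = a+1 ∨ t = b)
    (hab' : a' < b') (hbk' : b' ≤ k) (ht' : t' = a'+1 ∨ t' = b')
    (hlv : b + a' + 1 = b' + a) {z : E2}
    (hz1 : z ∈ segment ℝ (bot k a b t) (Pt k a b))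
    (hz2 : z ∈ segment ℝ (bot k a' b' t') (Pt k a' b')) :
    z ∈ ({bot k a b t, Pt k a b} : Set E2) ∩ {bot k a' b' t', Pt k a' b'} := by
  have htk : t ≤ k := by have := ht_le hab ht; omega
  have htk' : t' ≤ k := by have := ht_le hab' ht'; omega
  have htb := ht_le hab ht
  have htb' := ht_le hab' ht'
  obtain ⟨pf, qf, hpfqf, he, htcmp, hlin⟩ :
      ∃ pf qf, pf < qf ∧ bot k a' b' t' = Pt k pf qf ∧ (t' = pf ∨ t' = qf + 1) ∧
        qf + a = pf + b ∧ qf ≤ k := by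
    rcases bot_spec hab' ht' with ⟨h1, hee⟩ | ⟨h1, hee⟩
    · exact ⟨a'+1, b', by omega, hee, Or.inl h1, by omega, hbk'⟩
    · exact ⟨a', b'-1, by omega, hee, Or.inr (by omega), by omega, by omega⟩
  obtain ⟨hlin, hqfk⟩ := hlin
  by_cases hsh : Pt k a b = Pt k pf qf
  · -- shared point : the top of e is the bottom of f
    obtain ⟨ea, eb⟩ := Pt_inj hab hpfqf hsh
    obtain ⟨r, hr0, hr1, hzr⟩ := seg_repr_top hz1
    obtain ⟨r', hr0', hr1', hzr'⟩ := seg_repr' hz2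
    rw [he, ← hsh] at hzr'
    have hz_eq : z = Pt k a b := by
      rcases htcmp with h2 | h2
      · -- t' = pf = a < t
        have hlt : t' < t := by omega
        exact sharedPt hlt htk hzr' hzr
      · -- t' = qf + 1 = b + 1 > t
        have hlt : t < t' := by omega
        exact sharedPt hlt htk' hzr hzr'
    constructor
    · rw [hz_eq]; right; rfl
    · rw [hz_eq, hsh, ← he]; left; rfl
  · exfalso
    obtain ⟨r, hr0, hr1, hzr⟩ := seg_repr' hz1
    obtain ⟨r', hr0', hr1', hzr'⟩ := seg_repr' hz2
    rw [he] at hzr'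
    have ez0 : z 0 = bot k a b t 0 + r * cc k t := by rw [hzr]; rfl
    have ez1 : z 1 = bot k a b t 1 + r * ss k t := by rw [hzr]; rfl
    have ez0' : z 0 = Pt k pf qf 0 + r' * cc k t' := by rw [hzr']; rfl
    have ez1' : z 1 = Pt k pf qf 1 + r' * ss k t' := by rw [hzr']; rfl
    have A1 := (top1_bounds hab hbk).2
    have B1 := (top1_bounds hpfqf hqfk).1
    have hLq : (qf:ℝ) - pf = (b:ℝ) - a := by
      have : ((qf:ℝ)) + a = pf + b := by exact_mod_cast hlin
      linarith
    rw [hLq] at B1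
    have t1e := top1_eq k a b t
    have hss := half_le_ss htk
    have hss' := half_le_ss htk'
    have hssu := ss_le_one k t
    have hssu' := ss_le_one k t'
    have hcc : cc k t ≤ 1 := by have := cc_le_half htk; linarith
    have hcc' : cc k t' ≤ 1 := by have := cc_le_half htk'; linarith
    have hccp := (cc_pos k t).le
    have hccp' := (cc_pos k t').le
    have hssp := (ss_pos htk).le
    have hssp' := (ss_pos htk').le
    have hd := del_pos k
    have hLk : (b:ℝ) - a ≤ k := by
      have h7 : (b:ℝ) ≤ k := by exact_mod_cast hbk
      have h8 : (0:ℝ) ≤ a := by positivity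
      linarith
    have hL1 : (1:ℝ) ≤ (b:ℝ) - a := by
      have : (a:ℝ) + 1 ≤ b := by exact_mod_cast hab
      linarith
    -- closeness of r to 1
    have hz_le : z 1 ≤ Pt k a b 1 := by
      have g := mul_le_of_le_one_left hssp hr1
      rw [ez1, t1e]
      linarith
    have hz_ge : ((b:ℝ) - a) * (1 - del k) ≤ z 1 := by
      have g := mul_nonneg hr0' hssp'
      rw [ez1']
      linarith
    have heq : (1 - r) * ss k t = Pt k a b 1 - z 1 := by
      rw [t1e, ez1]; ring
    have hring : ((b:ℝ) - a) - ((b:ℝ) - a) * (1 - del k) = ((b:ℝ) - a) * del k := by ring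
    have hr_close : (1 - r) * ss k t ≤ ((b:ℝ) - a) * del k := by linarith
    have hr1c : 1 - r ≤ 2 * (((b:ℝ) - a) * del k) := by
      have g : (1 - r) * (1/2) ≤ (1 - r) * ss k t :=
        mul_le_mul_of_nonneg_left hss (by linarith)
      linarith
    have hr'_close : r' * ss k t' ≤ ((b:ℝ) - a) * del k := by
      rw [ez1'] at hz_le
      linarith
    have hr'c : r' ≤ 2 * (((b:ℝ) - a) * del k) := by
      have g : r' * (1/2) ≤ r' * ss k t' := mul_le_mul_of_nonneg_left hss' hr0'
      linarith
    -- x-coordinates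
    have x1 : Pt k a b 0 - z 0 = (1 - r) * cc k t := by
      rw [ez0, top0_eq k a b t]; ring
    have x2 : z 0 - Pt k pf qf 0 = r' * cc k t' := by
      rw [ez0']; ring
    have x1b : (1 - r) * cc k t ≤ 1 - r := by
      have := mul_le_mul_of_nonneg_left hcc (by linarith : (0:ℝ) ≤ 1 - r)
      linarith
    have x2b : r' * cc k t' ≤ r' := by
      have := mul_le_mul_of_nonneg_left hcc' hr0'
      linarith
    have x1nn : 0 ≤ (1 - r) * cc k t := mul_nonneg (by linarith) hccp
    have x2nn : 0 ≤ r' * cc k t' := mul_nonneg hr0' hccp'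
    have hgap := Pt_gap hab hpfqf (fun hc => hsh (by rw [hc.1, hc.2])) (k := k)
    have xsum : Pt k a b 0 - Pt k pf qf 0 = (1 - r) * cc k t + r' * cc k t' := by
      linarith
    have habs : |Pt k a b 0 - Pt k pf qf 0| ≤ 4 * (((b:ℝ) - a) * del k) := by
      rw [abs_le]
      have hLd : 0 ≤ ((b:ℝ) - a) * del k := by
        apply mul_nonneg (by linarith) hd.le
      constructor
      · linarith
      · linarith
    have hfinal := four_del_lt_eps k
    have hkr : ((b:ℝ) - a) ≤ (k:ℝ) + 1 := by linarith
    have hmono : 4 * (((b:ℝ) - a) * del k) ≤ 4*((k:ℝ)+1) * del k := by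
      have := mul_le_mul_of_nonneg_right (by linarith : 4*((b:ℝ) - a) ≤ 4*((k:ℝ)+1)) hd.le
      linarith
    linarith
  done

end TFMS

namespace TFMS

/-- the hard case : two parallel-ish `R` edges on consecutive bottoms -/
lemma funcRR {k p q : ℕ} (hpq : p < q) (hk : q + 2 ≤ k) {z : E2}
    (hz1 : z ∈ segment ℝ (Pt k p q) (Pt k p q + udir k (q+1)))
    (hz2 : z ∈ segment ℝ (Pt k (p+1) (q+1)) (Pt k (p+1) (q+1) + udir k (q+2))) : False := by
  obtain ⟨r, hr0, hr1, hzr⟩ := seg_repr hz1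
  obtain ⟨r', hr0', hr1', hzr'⟩ := seg_repr hz2
  have key : Pt k p q = Pt k (p+1) (q+1) + udir k (p+1) - udir k (q+1) := by
    have h1 : Pt k p (q+1) = Pt k (p+1) (q+1) + udir k (p+1) := Pt_left (by omega)
    have h2 : Pt k p (q+1) = Pt k p q + udir k (q+1) := Pt_right (by omega)
    rw [h2] at h1
    rw [← h1]
    abel
  rw [key] at hzr
  have e0 : z 0 = Pt k (p+1) (q+1) 0 + cc k (p+1) - cc k (q+1) + r * cc k (q+1) := by
    rw [hzr]; rfl
  have e1 : z 1 = Pt k (p+1) (q+1) 1 + ss k (p+1) - ss k (q+1) + r * ss k (q+1) := by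
    rw [hzr]; rfl
  have f0 : z 0 = Pt k (p+1) (q+1) 0 + r' * cc k (q+2) := by
    rw [hzr']; rfl
  have f1 : z 1 = Pt k (p+1) (q+1) 1 + r' * ss k (q+2) := by
    rw [hzr']; rfl
  have eq0 : cc k (p+1) + (r - 1) * cc k (q+1) = r' * cc k (q+2) := by linarith
  have eq1 : ss k (p+1) + (r - 1) * ss k (q+1) = r' * ss k (q+2) := by linarith
  have w1 := crosspos (show p+1 < q+1 by omega) (show q+1 ≤ k by omega)
  have w2 := crosspos (show p+1 < q+2 by omega) hk
  have hrw : r' * (ss k (p+1) * cc k (q+2) - cc k (p+1) * ss k (q+2)) =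
      (r - 1) * (ss k (p+1) * cc k (q+1) - cc k (p+1) * ss k (q+1)) := by
    linear_combination cc k (p+1) * eq1 - ss k (p+1) * eq0
  have hA : 0 ≤ r' * (ss k (p+1) * cc k (q+2) - cc k (p+1) * ss k (q+2)) :=
    mul_nonneg hr0' w2.le
  have hB : (r - 1) * (ss k (p+1) * cc k (q+1) - cc k (p+1) * ss k (q+1)) ≤ 0 := by
    apply mul_nonpos_of_nonpos_of_nonneg (by linarith) w1.le
  have hzero : r' * (ss k (p+1) * cc k (q+2) - cc k (p+1) * ss k (q+2)) = 0 := by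
    linarith
  have hr'0 : r' = 0 := by
    rcases mul_eq_zero.mp hzero with h | h
    · exact h
    · linarith
  have hrr1 : r = 1 := by
    rw [hzero] at hrw
    rcases mul_eq_zero.mp hrw.symm with h | h
    · linarith
    · linarith
  -- z is both the top of e and the bottom of f
  have hz1' : z = Pt k p (q+1) := by
    rw [hzr, hrr1, one_smul, ← key, Pt_right (show p ≤ q by omega)]
  have hz2' : z = Pt k (p+1) (q+1) := by
    rw [hzr', hr'0, zero_smul, add_zero]
  have := Pt_inj (show p < q+1 by omega) (show p+1 < q+1 by omega) (hz1' ▸ hz2')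
  omega

/-- same band, bottom of `e` strictly to the left : the segments are disjoint -/
lemma sameBandLow {k pe qe te pf qf tf : ℕ}
    (h1 : pe < qe) (h2 : pf < qf) (hk : qe ≤ k) (hk' : qf ≤ k)
    (hte : te = pe ∨ te = qe + 1) (htf : tf = pf ∨ tf = qf + 1)
    (htek : te ≤ k) (htfk : tf ≤ k)
    (hlt : pe < pf) (hlv : qe + pf = qf + pe)
    (hRL : ¬(te = qe + 1 ∧ tf = pf ∧ pf = pe + 1))
    {z : E2}
    (hz1 : z ∈ segment ℝ (Pt k pe qe) (Pt k pe qe + udir k te))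
    (hz2 : z ∈ segment ℝ (Pt k pf qf) (Pt k pf qf + udir k tf)) : False := by
  have hb1 := seg_bounds2 htek hz1
  have hb2 := seg_bounds2 htfk hz2
  have hepos := eps_pos k
  set d := pf - pe with hd
  have hdpos : 1 ≤ d := by omega
  have hpf : pf = pe + d := by omega
  have hqf : qf = qe + d := by omega
  rcases hte with h3 | h3
  · -- e is an L-edge : x-separation with any farther edge
    have hsep := sepL h1 hdpos
    have hsepr : (znx pe qe : ℝ) + 2^pe < (znx pf qf : ℝ) := by
      rw [hpf, hqf]
      exact_mod_cast hsep
    have hcc : cc k te = eps k * 2^pe := by rw [h3]; rfl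
    have hx1 : z 0 ≤ eps k * (znx pe qe : ℝ) + eps k * 2^pe := by
      have := hb1.2.1
      rw [Pt0, hcc] at this
      linarith
    have hx2 : eps k * (znx pf qf : ℝ) ≤ z 0 := by
      have := hb2.1
      rw [Pt0] at this
      linarith
    nlinarith
  · rcases Nat.lt_or_ge (pe + 1) pf with hfar | hnear
    · -- d ≥ 2 : x-separation
      have hsep := sepR h1 (show 2 ≤ d by omega)
      have hsepr : (znx pe qe : ℝ) + 2^(qe+1) < (znx pf qf : ℝ) := by
        rw [hpf, hqf]
        exact_mod_cast hsep
      have hcc : cc k te = eps k * 2^(qe+1) := by rw [h3]; rfl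
      have hx1 : z 0 ≤ eps k * (znx pe qe : ℝ) + eps k * 2^(qe+1) := by
        have := hb1.2.1
        rw [Pt0, hcc] at this
        linarith
      have hx2 : eps k * (znx pf qf : ℝ) ≤ z 0 := by
        have := hb2.1
        rw [Pt0] at this
        linarith
      nlinarith
    · -- pf = pe + 1
      have hpf1 : pf = pe + 1 := by omega
      rcases htf with h4 | h4
      · -- R followed by L : excluded (the children coincide)
        exact hRL ⟨h3, h4, hpf1⟩
      · -- R followed by R : the functional argument
        have hqf1 : qf = qe + 1 := by omega
        apply funcRR h1 (show qe + 2 ≤ k by omega) (z := z)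
        · rw [← h3]; exact hz1
        · rw [hpf1, hqf1, show tf = qe + 2 from by omega] at hz2
          exact hz2

end TFMS

namespace TFMS

lemma sameBand {k a b t a' b' t' : ℕ} (hab : a < b) (hbk : b ≤ k) (ht : t = a+1 ∨ t = b)
    (hab' : a' < b') (hbk' : b' ≤ k) (ht' : t' = a'+1 ∨ t' = b')
    (hlv : b + a' = b' + a)
    (htri : ¬(a = a' ∧ b = b' ∧ t = t')) {z : E2}
    (hz1 : z ∈ segment ℝ (bot k a b t) (Pt k a b))
    (hz2 : z ∈ segment ℝ (bot k a' b' t') (Pt k a' b')) :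
    z ∈ ({bot k a b t, Pt k a b} : Set E2) ∩ {bot k a' b' t', Pt k a' b'} := by
  have htk : t ≤ k := by have := ht_le hab ht; omega
  have htk' : t' ≤ k := by have := ht_le hab' ht'; omega
  have htb := ht_le hab ht
  have htb' := ht_le hab' ht'
  by_cases hch : a = a' ∧ b = b'
  · -- children equal, so shared top
    have htt : t ≠ t' := fun hc => htri ⟨hch.1, hch.2, hc⟩
    obtain ⟨r, hr0, hr1, hzr⟩ := seg_repr_top hz1
    obtain ⟨r', hr0', hr1', hzr'⟩ := seg_repr_top hz2
    rw [← hch.1, ← hch.2] at hzr'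
    have hz_eq : z = Pt k a b := by
      rcases lt_or_gt_of_ne htt with hc | hc
      · exact sharedPt hc htk' hzr hzr'
      · exact sharedPt hc htk hzr' hzr
    constructor
    · rw [hz_eq]; right; rfl
    · rw [hz_eq, hch.1, hch.2]; right; rfl
  · by_cases hsh : bot k a b t = bot k a' b' t'
    · -- shared bottom
      have htt : t ≠ t' := by
        intro hc
        apply hch
        have he : Pt k a b = Pt k a' b' := by
          rw [top_eq k a b t, top_eq k a' b' t', hsh, hc]
        have := Pt_inj hab hab' he
        exact ⟨this.1, this.2⟩
      obtain ⟨r, hr0, hr1, hzr⟩ := seg_repr' hz1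
      obtain ⟨r', hr0', hr1', hzr'⟩ := seg_repr' hz2
      rw [← hsh] at hzr'
      have hz_eq : z = bot k a b t := by
        rcases lt_or_gt_of_ne htt with hc | hc
        · exact sharedPt hc htk' hzr hzr'
        · exact sharedPt hc htk hzr' hzr
      constructor
      · rw [hz_eq]; left; rfl
      · rw [hz_eq, hsh]; left; rfl
    · exfalso
      -- level is at least 2, otherwise both bottoms are the origin
      have hL2 : a + 2 ≤ b := by
        by_contra hc
        have hb1 : b = a + 1 := by omega
        have hb1' : b' = a' + 1 := by omega
        apply hsh
        rcases bot_spec hab ht with ⟨e1, he⟩ | ⟨e1, he⟩ <;>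
          rcases bot_spec hab' ht' with ⟨f1, hf⟩ | ⟨f1, hf⟩ <;>
          rw [he, hf]
        · rw [hb1, hb1']; exact Pt_diag k (a+1) (a'+1)
        · rw [hb1, show b' - 1 = a' from by omega]; exact Pt_diag k (a+1) a'
        · rw [hb1', show b - 1 = a from by omega]; exact Pt_diag k a (a'+1)
        · rw [show b - 1 = a from by omega, show b' - 1 = a' from by omega]
          exact Pt_diag k a a'
      have hL2' : a' + 2 ≤ b' := by omega
      obtain ⟨pe, qe, hpeqe, he, hinfo⟩ :
          ∃ pe qe, pe < qe ∧ bot k a b t = Pt k pe qe ∧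
            ((pe = a + 1 ∧ qe = b ∧ t = pe) ∨ (pe = a ∧ qe = b - 1 ∧ t = qe + 1)) := by
        rcases bot_spec hab ht with ⟨e1, he⟩ | ⟨e1, he⟩
        · exact ⟨a+1, b, by omega, he, Or.inl ⟨rfl, rfl, e1⟩⟩
        · exact ⟨a, b-1, by omega, he, Or.inr ⟨rfl, rfl, by omega⟩⟩
      obtain ⟨pf, qf, hpfqf, hf, hinfo'⟩ :
          ∃ pf qf, pf < qf ∧ bot k a' b' t' = Pt k pf qf ∧
            ((pf = a' + 1 ∧ qf = b' ∧ t' = pf) ∨ (pf = a' ∧ qf = b' - 1 ∧ t' = qf + 1)) := by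
        rcases bot_spec hab' ht' with ⟨f1, hf⟩ | ⟨f1, hf⟩
        · exact ⟨a'+1, b', by omega, hf, Or.inl ⟨rfl, rfl, f1⟩⟩
        · exact ⟨a', b'-1, by omega, hf, Or.inr ⟨rfl, rfl, by omega⟩⟩
      have hqe_k : qe ≤ k := by rcases hinfo with ⟨_,h2,_⟩ | ⟨_,h2,_⟩ <;> omega
      have hqf_k : qf ≤ k := by rcases hinfo' with ⟨_,h2,_⟩ | ⟨_,h2,_⟩ <;> omega
      have hlev : qe + pf = qf + pe := by
        rcases hinfo with ⟨e1,e2,_⟩ | ⟨e1,e2,_⟩ <;> rcases hinfo' with ⟨f1,f2,_⟩ | ⟨f1,f2,_⟩ <;> omega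
      have hte2 : t = pe ∨ t = qe + 1 := by
        rcases hinfo with ⟨_,_,e3⟩ | ⟨_,_,e3⟩
        · exact Or.inl e3
        · exact Or.inr e3
      have htf2 : t' = pf ∨ t' = qf + 1 := by
        rcases hinfo' with ⟨_,_,f3⟩ | ⟨_,_,f3⟩
        · exact Or.inl f3
        · exact Or.inr f3
      have hz1' : z ∈ segment ℝ (Pt k pe qe) (Pt k pe qe + udir k t) := by
        rw [top_eq k a b t, he] at hz1
        exact hz1
      have hz2' : z ∈ segment ℝ (Pt k pf qf) (Pt k pf qf + udir k t') := by
        rw [top_eq k a' b' t', hf] at hz2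
        exact hz2
      have hpp : pe ≠ pf := by
        intro hc
        apply hsh
        have : qe = qf := by omega
        rw [he, hf, hc, this]
      rcases Nat.lt_or_ge pe pf with hlt | hge
      · refine sameBandLow hpeqe hpfqf hqe_k hqf_k hte2 htf2 htk htk' hlt (by omega) ?_ hz1' hz2'
        rintro ⟨c1, c2, c3⟩
        apply hch
        rcases hinfo with ⟨e1,e2,e3⟩ | ⟨e1,e2,e3⟩ <;>
          rcases hinfo' with ⟨f1,f2,f3⟩ | ⟨f1,f2,f3⟩ <;>
          constructor <;> omega
      · have hlt : pf < pe := by omega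
        refine sameBandLow hpfqf hpeqe hqf_k hqe_k htf2 hte2 htk' htk hlt (by omega) ?_ hz2' hz1'
        rintro ⟨c1, c2, c3⟩
        apply hch
        rcases hinfo with ⟨e1,e2,e3⟩ | ⟨e1,e2,e3⟩ <;>
          rcases hinfo' with ⟨f1,f2,f3⟩ | ⟨f1,f2,f3⟩ <;>
          constructor <;> omega

/-- the main geometric lemma : two distinct edges intersect in at most a common endpoint -/
lemma core {k a b t a' b' t' : ℕ} (hab : a < b) (hbk : b ≤ k) (ht : t = a+1 ∨ t = b)
    (hab' : a' < b') (hbk' : b' ≤ k) (ht' : t' = a'+1 ∨ t' = b')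
    (htri : ¬(a = a' ∧ b = b' ∧ t = t')) {z : E2}
    (hz1 : z ∈ segment ℝ (bot k a b t) (Pt k a b))
    (hz2 : z ∈ segment ℝ (bot k a' b' t') (Pt k a' b')) :
    z ∈ ({bot k a b t, Pt k a b} : Set E2) ∩ {bot k a' b' t', Pt k a' b'} := by
  rcases Nat.lt_trichotomy (b + a') (b' + a) with h | h | h
  · rcases Nat.lt_or_ge (b + a' + 1) (b' + a) with h2 | h2
    · exact absurd (farBand hab hbk ht hab' hbk' ht' (by omega) hz1 hz2) (by simp)
    · exact bandAdj hab hbk ht hab' hbk' ht' (by omega) hz1 hz2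
  · exact sameBand hab hbk ht hab' hbk' ht' (by omega) htri hz1 hz2
  · rcases Nat.lt_or_ge (b' + a + 1) (b + a') with h2 | h2
    · exact absurd (farBand hab' hbk' ht' hab hbk ht (by omega) hz2 hz1) (by simp)
    · have := bandAdj hab' hbk' ht' hab hbk ht (by omega) hz2 hz1
      exact ⟨this.2, this.1⟩

end TFMS

namespace TFMS

/-- no grid vertex lies in the open part of an edge -/
lemma noVert {k a b t c d : ℕ} (hab : a < b) (hbk : b ≤ k) (ht : t = a+1 ∨ t = b)
    (hcd : c ≤ d) (hdk : d ≤ k)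
    (hz : Pt k c d ∈ openSegment ℝ (bot k a b t) (Pt k a b)) : False := by
  have htk : t ≤ k := by have := ht_le hab ht; omega
  rw [top_eq k a b t] at hz
  obtain ⟨r, hr0, hr1, hzr⟩ := openseg_repr hz
  have ez0 : Pt k c d 0 = bot k a b t 0 + r * cc k t := by rw [hzr]; rfl
  have ez1 : Pt k c d 1 = bot k a b t 1 + r * ss k t := by rw [hzr]; rfl
  have B1 := bot1_bounds hab hbk ht
  have hss := half_le_ss htk
  have hssu := ss_le_one k t
  have hssp := (ss_pos htk).le
  have hcp := cc_pos k t
  have hcu : cc k t ≤ 1 := by have := cc_le_half htk; linarith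
  have hz1g := Yr_ge hcd hdk
  have hz1l := Yr_le' (k := k) hcd
  rw [← Pt1] at hz1g hz1l
  have hd := del_pos k
  have h9 := del_small k
  have hLk : (b:ℝ) ≤ k := by exact_mod_cast hbk
  have hL1 : (a:ℝ) + 1 ≤ b := by exact_mod_cast hab
  have ha0 : (0:ℝ) ≤ a := by positivity
  have hc0 : (0:ℝ) ≤ c := by positivity
  have hdk' : (d:ℝ) ≤ k := by exact_mod_cast hdk
  have hcd' : (c:ℝ) ≤ d := by exact_mod_cast hcd
  have hid1 : ((b:ℝ)-a-1)*(1-del k) = ((b:ℝ)-a-1) - ((b:ℝ)-a-1)*del k := by ring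
  have hm1 : ((b:ℝ)-a-1)*del k ≤ 1/2 := by
    have h1 : (b:ℝ)-a-1 ≤ (k:ℝ)+2 := by linarith
    have := mul_le_mul_of_nonneg_right h1 hd.le
    linarith
  have hid2 : ((d:ℝ)-c)*(1-del k) = ((d:ℝ)-c) - ((d:ℝ)-c)*del k := by ring
  have hm2 : ((d:ℝ)-c)*del k ≤ 1/2 := by
    have h1 : (d:ℝ)-c ≤ (k:ℝ)+2 := by linarith
    have := mul_le_mul_of_nonneg_right h1 hd.le
    linarith
  -- compare levels
  rcases Nat.lt_trichotomy (d + a + 1) (b + c) with hlev | hlev | hlev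
  · -- level of w at most level of bottom minus one
    have hw : (d:ℝ) + a + 2 ≤ (b:ℝ) + c := by
      have hq : ((d + a + 2 : ℕ) : ℝ) ≤ ((b + c : ℕ):ℝ) := by exact_mod_cast hlev
      push_cast at hq
      linarith
    have g1 : 0 < r * ss k t := mul_pos hr0 (ss_pos htk)
    linarith [B1.1]
  · -- level of w equals the level of the bottom
    rcases Nat.lt_or_ge a (b-1) with hlam | hlam
    · -- positive level : quantitative contradiction near the bottom
      have hw : (d:ℝ) + a + 1 = (b:ℝ) + c := by exact_mod_cast hlev
      have hrc : r * ss k t ≤ ((b:ℝ) - a - 1) * del k := by linarith [B1.1]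
      have hr2 : r ≤ 2 * (((b:ℝ) - a - 1) * del k) := by
        have g : r * (1/2) ≤ r * ss k t := mul_le_mul_of_nonneg_left hss hr0.le
        linarith
      have hx : Pt k c d 0 - bot k a b t 0 = r * cc k t := by linarith [ez0]
      obtain ⟨pe, qe, hpeqe, he⟩ :
          ∃ pe qe, pe < qe ∧ bot k a b t = Pt k pe qe := by
        rcases bot_spec hab ht with ⟨e1, he⟩ | ⟨e1, he⟩
        · exact ⟨a+1, b, by omega, he⟩
        · exact ⟨a, b-1, by omega, he⟩
      have hcd2 : c < d := by omega
      have hne : ¬(c = pe ∧ d = qe) := by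
        rintro ⟨rfl, rfl⟩
        rw [← he] at ez0
        have : 0 < r * cc k t := mul_pos hr0 hcp
        linarith
      have hgap := Pt_gap hcd2 hpeqe hne (k := k)
      rw [← he] at hgap
      have habs : |Pt k c d 0 - bot k a b t 0| ≤ 2 * (((b:ℝ) - a - 1) * del k) := by
        rw [abs_le]
        have g1 : 0 ≤ r * cc k t := mul_nonneg hr0.le hcp.le
        have g2 : r * cc k t ≤ r := by
          have := mul_le_mul_of_nonneg_left hcu hr0.le
          linarith
        constructor <;> linarith
      have hfinal := four_del_lt_eps k
      have hmono : 2 * (((b:ℝ)-a-1) * del k) ≤ 4*((k:ℝ)+1) * del k := by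
        have := mul_le_mul_of_nonneg_right
          (by linarith : 2*((b:ℝ)-a-1) ≤ 4*((k:ℝ)+1)) hd.le
        linarith
      linarith
    · -- level zero : the point and the bottom are both the origin
      have hb1 : b = a + 1 := by omega
      have hzero : bot k a b t 0 = 0 := by
        rcases bot_spec hab ht with ⟨e1, he⟩ | ⟨e1, he⟩ <;> rw [he, Pt0]
        · rw [show b = a + 1 from hb1, znx_diag]; ring
        · rw [show b - 1 = a from by omega, znx_diag]; ring
      have hcd0 : c = d := by omega
      have hzz : Pt k c d 0 = 0 := by
        rw [Pt0, hcd0, znx_diag]; ring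
      have : 0 < r * cc k t := mul_pos hr0 hcp
      linarith
  · -- level of w at least the level of the child
    have t1e := top1_eq k a b t
    rcases Nat.lt_or_ge (b + c) (d + a) with hbig | hsame
    · -- more : y separation
      have hw : (b:ℝ) + c + 1 ≤ (d:ℝ) + a := by
        have hq : ((b + c + 1 : ℕ):ℝ) ≤ ((d + a : ℕ):ℝ) := by exact_mod_cast hbig
        push_cast at hq
        linarith
      have g1 : (1 - r) * ss k t > 0 := mul_pos (by linarith) (ss_pos htk)
      linarith [B1.2]
    · -- equal to the level of the child : quantitative contradiction near the top
      have hw : (d:ℝ) + a = (b:ℝ) + c := by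
        have hq : d + a = b + c := by omega
        exact_mod_cast hq
      have hdc : ((d:ℝ)-c)*(1-del k) = ((b:ℝ)-a)*(1-del k) := by
        have : (d:ℝ) - c = (b:ℝ) - a := by linarith
        rw [this]
      have hid3 : ((b:ℝ)-a)*(1-del k) = ((b:ℝ)-a) - ((b:ℝ)-a)*del k := by ring
      have hrc : (1 - r) * ss k t ≤ ((b:ℝ) - a) * del k := by linarith [B1.2]
      have hr2 : 1 - r ≤ 2 * (((b:ℝ) - a) * del k) := by
        have g : (1-r) * (1/2) ≤ (1-r) * ss k t := mul_le_mul_of_nonneg_left hss (by linarith)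
        linarith
      have t0e := top0_eq k a b t
      have hx : Pt k a b 0 - Pt k c d 0 = (1 - r) * cc k t := by
        rw [t0e, ez0]; ring
      have hcd2 : c < d := by omega
      have hne : ¬(c = a ∧ d = b) := by
        rintro ⟨rfl, rfl⟩
        have : (1 - r) * cc k t > 0 := mul_pos (by linarith) hcp
        linarith
      have hgap := Pt_gap hcd2 hab (fun hcc => hne ⟨hcc.1, hcc.2⟩) (k := k)
      have habs : |Pt k c d 0 - Pt k a b 0| ≤ 2 * (((b:ℝ) - a) * del k) := by
        rw [abs_le]
        have g1 : 0 ≤ (1 - r) * cc k t := mul_nonneg (by linarith) hcp.le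
        have g2 : (1 - r) * cc k t ≤ 1 - r := by
          have := mul_le_mul_of_nonneg_left hcu (by linarith : (0:ℝ) ≤ 1 - r)
          linarith
        constructor <;> linarith
      have hfinal := four_del_lt_eps k
      have hmono : 2 * (((b:ℝ)-a) * del k) ≤ 4*((k:ℝ)+1) * del k := by
        have := mul_le_mul_of_nonneg_right
          (by linarith : 2*((b:ℝ)-a) ≤ 4*((k:ℝ)+1)) hd.le
        linarith
      linarith

end TFMS

namespace TFMS

lemma Ak_le_Bk (m : ℕ) : Ak m ≤ Bk m := by
  rcases Nat.eq_zero_or_pos m with rfl | h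
  · rw [Ak_zero, Bk_zero]
  · exact (Ak_lt_Bk h).le

lemma vpos_inj {k m m' : ℕ} (h : Pt k (Ak m) (Bk m) = Pt k (Ak m') (Bk m')) : m = m' := by
  rcases Nat.eq_zero_or_pos m with rfl | hm <;> rcases Nat.eq_zero_or_pos m' with rfl | hm'
  · rfl
  · exfalso
    have h0 := congrFun (congrArg WithLp.ofLp h) 0
    rw [Pt0, Pt0, Ak_zero, Bk_zero, znx_diag] at h0
    have hzp := znx_pos (Ak_lt_Bk hm')
    have he := eps_pos k
    have hpos : (0:ℝ) < (znx (Ak m') (Bk m') : ℝ) := by exact_mod_cast hzp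
    push_cast at h0
    nlinarith
  · exfalso
    have h0 := congrFun (congrArg WithLp.ofLp h) 0
    rw [Pt0, Pt0, Ak_zero, Bk_zero, znx_diag] at h0
    have hzp := znx_pos (Ak_lt_Bk hm)
    have he := eps_pos k
    have hpos : (0:ℝ) < (znx (Ak m) (Bk m) : ℝ) := by exact_mod_cast hzp
    push_cast at h0
    nlinarith
  · have := Pt_inj (Ak_lt_Bk hm) (Ak_lt_Bk hm') h
    exact run_inj this.1 this.2

lemma par_spec {k m p : ℕ} (hpar : par m p) (hk : Bk m ≤ k) :
    ∃ t, (t = Ak m + 1 ∨ t = Bk m) ∧ Pt k (Ak p) (Bk p) = bot k (Ak m) (Bk m) t := by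
  obtain ⟨h1, h2⟩ := hpar
  have hab := Ak_lt_Bk h1
  rcases h2 with ⟨hf, rfl⟩ | ⟨hf, rfl | rfl⟩
  · refine ⟨Bk m, Or.inr rfl, ?_⟩
    rcases bot_spec hab (Or.inr rfl) with ⟨he1, he⟩ | ⟨he1, he⟩
    · rw [he, Ak_zero, Bk_zero, ← hf]
      exact Pt_diag k 0 (Ak m + 1)
    · rw [he, Ak_zero, Bk_zero, show Bk m - 1 = Ak m from by omega]
      exact Pt_diag k 0 (Ak m)
  · have hp := run_pred h1 hf
    refine ⟨Ak m + 1, Or.inl rfl, ?_⟩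
    rcases bot_spec hab (Or.inl rfl) with ⟨he1, he⟩ | ⟨he1, he⟩
    · rw [he, hp.1, hp.2]
    · omega
  · have hp := run_drop h1 hf
    refine ⟨Bk m, Or.inr rfl, ?_⟩
    rcases bot_spec hab (Or.inr rfl) with ⟨he1, he⟩ | ⟨he1, he⟩
    · omega
    · rw [he, hp.1, hp.2]

lemma dist_unit {k a b t : ℕ} (hab : a < b) (hbk : b ≤ k) (ht : t = a+1 ∨ t = b) :
    dist (Pt k a b) (bot k a b t) = 1 := by
  have htk : t ≤ k := by have := ht_le hab ht; omega
  rw [EuclideanSpace.dist_eq]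
  rw [Fin.sum_univ_two]
  have e0 : Pt k a b 0 - bot k a b t 0 = cc k t := by
    rw [top0_eq k a b t]; ring
  have e1 : Pt k a b 1 - bot k a b t 1 = ss k t := by
    rw [top1_eq k a b t]; ring
  rw [Real.dist_eq, Real.dist_eq, e0, e1]
  rw [sq_abs, sq_abs, ss_sq htk]
  rw [show cc k t ^2 + (1 - cc k t ^2) = 1 from by ring]
  exact Real.sqrt_one

/-- the matchstick embedding of `G n` -/
noncomputable def emb (n : ℕ) (hn : 1 ≤ n) : MatchstickEmbedding (G n) := by
  classical
  set k := blk (n-1) with hkdef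
  have hkb : ∀ i : Fin n, Bk i.val ≤ k := by
    intro i
    exact blk_mono (by omega : i.val ≤ n - 1)
  refine ⟨fun i => Pt k (Ak i.val) (Bk i.val), ?_, ?_, ?_, ?_⟩
  · intro i j h
    exact Fin.ext (vpos_inj h)
  · intro u v h
    show dist (Pt k (Ak u.val) (Bk u.val)) (Pt k (Ak v.val) (Bk v.val)) = 1
    rcases h with hpar | hpar
    · obtain ⟨t, ht, hbot⟩ := par_spec hpar (hkb u)
      rw [hbot]
      exact dist_unit (Ak_lt_Bk hpar.1) (hkb u) ht
    · obtain ⟨t, ht, hbot⟩ := par_spec hpar (hkb v)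
      rw [hbot, dist_comm]
      exact dist_unit (Ak_lt_Bk hpar.1) (hkb v) ht
  · intro w u v h hmem
    change Pt k (Ak w.val) (Bk w.val) ∈
      openSegment ℝ (Pt k (Ak u.val) (Bk u.val)) (Pt k (Ak v.val) (Bk v.val)) at hmem
    rcases h with hpar | hpar
    · obtain ⟨t, ht, hbot⟩ := par_spec hpar (hkb u)
      rw [hbot, openSegment_symm] at hmem
      exact noVert (Ak_lt_Bk hpar.1) (hkb u) ht (Ak_le_Bk w.val) (hkb w) hmem
    · obtain ⟨t, ht, hbot⟩ := par_spec hpar (hkb v)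
      rw [hbot] at hmem
      exact noVert (Ak_lt_Bk hpar.1) (hkb v) ht (Ak_le_Bk w.val) (hkb w) hmem
  · intro u v x y huv hxy hne z hz
    change z ∈ segment ℝ (Pt k (Ak u.val) (Bk u.val)) (Pt k (Ak v.val) (Bk v.val)) ∩
      segment ℝ (Pt k (Ak x.val) (Bk x.val)) (Pt k (Ak y.val) (Bk y.val)) at hz
    show z ∈ ({Pt k (Ak u.val) (Bk u.val), Pt k (Ak v.val) (Bk v.val)} : Set E2) ∩
      {Pt k (Ak x.val) (Bk x.val), Pt k (Ak y.val) (Bk y.val)}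
    obtain ⟨m1, p1, hs1, hpar1⟩ : ∃ m1 p1 : Fin n, s(u,v) = s(m1,p1) ∧ par m1.val p1.val := by
      rcases huv with h | h
      · exact ⟨u, v, rfl, h⟩
      · exact ⟨v, u, Sym2.eq_swap, h⟩
    obtain ⟨m2, p2, hs2, hpar2⟩ : ∃ m2 p2 : Fin n, s(x,y) = s(m2,p2) ∧ par m2.val p2.val := by
      rcases hxy with h | h
      · exact ⟨x, y, rfl, h⟩
      · exact ⟨y, x, Sym2.eq_swap, h⟩
    obtain ⟨t1, ht1, hbot1⟩ := par_spec hpar1 (hkb m1)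
    obtain ⟨t2, ht2, hbot2⟩ := par_spec hpar2 (hkb m2)
    set a1 := Ak m1.val
    set b1 := Bk m1.val
    set a2 := Ak m2.val
    set b2 := Bk m2.val
    have hab1 : a1 < b1 := Ak_lt_Bk hpar1.1
    have hab2 : a2 < b2 := Ak_lt_Bk hpar2.1
    have hseg1 : segment ℝ (Pt k (Ak u.val) (Bk u.val)) (Pt k (Ak v.val) (Bk v.val)) =
        segment ℝ (bot k a1 b1 t1) (Pt k a1 b1) := by
      rcases Sym2.eq_iff.mp hs1 with ⟨rfl, rfl⟩ | ⟨rfl, rfl⟩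
      · rw [hbot1, segment_symm]
      · rw [hbot1]
    have hseg2 : segment ℝ (Pt k (Ak x.val) (Bk x.val)) (Pt k (Ak y.val) (Bk y.val)) =
        segment ℝ (bot k a2 b2 t2) (Pt k a2 b2) := by
      rcases Sym2.eq_iff.mp hs2 with ⟨rfl, rfl⟩ | ⟨rfl, rfl⟩
      · rw [hbot2, segment_symm]
      · rw [hbot2]
    have hset1 : ({Pt k (Ak u.val) (Bk u.val), Pt k (Ak v.val) (Bk v.val)} : Set E2) =
        {bot k a1 b1 t1, Pt k a1 b1} := by
      rcases Sym2.eq_iff.mp hs1 with ⟨rfl, rfl⟩ | ⟨rfl, rfl⟩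
      · rw [hbot1, Set.pair_comm]
      · rw [hbot1]
    have hset2 : ({Pt k (Ak x.val) (Bk x.val), Pt k (Ak y.val) (Bk y.val)} : Set E2) =
        {bot k a2 b2 t2, Pt k a2 b2} := by
      rcases Sym2.eq_iff.mp hs2 with ⟨rfl, rfl⟩ | ⟨rfl, rfl⟩
      · rw [hbot2, Set.pair_comm]
      · rw [hbot2]
    have htri : ¬(a1 = a2 ∧ b1 = b2 ∧ t1 = t2) := by
      rintro ⟨e1, e2, e3⟩
      apply hne
      have hm : m1 = m2 := by
        apply Fin.ext
        apply vpos_inj (k := k)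
        rw [show Ak m1.val = a1 from rfl, show Bk m1.val = b1 from rfl, e1, e2]
      have hp : p1 = p2 := by
        apply Fin.ext
        apply vpos_inj (k := k)
        rw [hbot1, hbot2, e1, e2, e3]
      rw [hs1, hs2, hm, hp]
    rw [hseg1, hseg2] at hz
    rw [hset1, hset2]
    exact core hab1 (hkb m1) ht1 hab2 (hkb m2) ht2 htri hz.1 hz.2

end TFMS



/-- **Proposition 2.1.** For every `n ≥ 1` there exists a triangle-free
matchstick graph on `n` vertices with exactly `⌊2n - √(2n - 7/4) - 3/2⌋` edges. -/
theorem exists_triangleFree_matchstick_with_floor_edges (n : ℕ) (hn : 1 ≤ n) :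
    ∃ G : SimpleGraph (Fin n), G.CliqueFree 3 ∧ Nonempty (MatchstickEmbedding G) ∧
      (G.edgeSet.ncard : ℤ) = ⌊2 * (n : ℝ) - Real.sqrt (2 * n - 7 / 4) - 3 / 2⌋ := by
  refine ⟨TFMS.G n, TFMS.cliquefree n, ⟨TFMS.emb n hn⟩, ?_⟩
  rw [← TFMS.floor_formula n hn]
  have hc := TFMS.edge_count n hn
  have h2 : ((2 * (n-1) : ℕ) : ℤ) = 2 * ((n:ℤ) - 1) := by
    push_cast [hn]
    ring
  omega
end

section
/- For every integer k ≥ 2 there exists a triangle-free matchstick graph with exactly (k+1)k/2 + 1 vertices and exactly k² edges. (This is the core construction of Proposition 2.1, obtained by tiling a regular 2k-gon with unit side lengths by k(k-1)/2 unit rhombi.) -/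
open Real Finset

noncomputable section

namespace MSG

def th (k t : ℕ) : ℝ := t * π / (k + 1)

lemma th_sub (k r t : ℕ) : th k r - th k t = ((r : ℝ) - t) * π / (k + 1) := by
  unfold th; ring

lemma th_zero (k : ℕ) : th k 0 = 0 := by simp [th]

lemma sin_th_pos {k t r : ℕ} (h : t < r) (hr : r ≤ k) :
    0 < sin (th k r - th k t) := by
  rw [th_sub]
  have h1 : 0 < (r : ℝ) - t := by
    have := (Nat.cast_lt (α := ℝ)).mpr h; linarith
  have h2 : (r : ℝ) - t < k + 1 := by
    have h3 : (r : ℝ) ≤ k := Nat.cast_le.mpr hr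
    have h4 : (0 : ℝ) ≤ t := Nat.cast_nonneg t
    linarith
  have hπ := pi_pos
  apply sin_pos_of_pos_of_lt_pi
  · exact div_pos (mul_pos h1 hπ) (by positivity)
  · rw [div_lt_iff₀ (by positivity)]
    nlinarith

lemma sin_th_nonneg {k t r : ℕ} (h : t ≤ r) (hr : r ≤ k) :
    0 ≤ sin (th k r - th k t) := by
  rcases eq_or_lt_of_le h with rfl | h'
  · simp
  · exact (sin_th_pos h' hr).le

lemma sin_th_neg {k t r : ℕ} (h : r < t) (ht : t ≤ k) :
    sin (th k r - th k t) < 0 := by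
  have := sin_th_pos h ht
  rw [show th k r - th k t = -(th k t - th k r) by ring, Real.sin_neg]; linarith

lemma sin_th_nonpos {k t r : ℕ} (h : r ≤ t) (ht : t ≤ k) :
    sin (th k r - th k t) ≤ 0 := by
  have := sin_th_nonneg h ht
  rw [show th k r - th k t = -(th k t - th k r) by ring, Real.sin_neg]; linarith

/-- the directed sum of sines -/
def sg (k a b t : ℕ) : ℝ := ∑ r ∈ Ioc a b, sin (th k r - th k t)

lemma sg_self (k a t : ℕ) : sg k a a t = 0 := by simp [sg]

lemma sg_split {a m b : ℕ} (k t : ℕ) (h1 : a ≤ m) (h2 : m ≤ b) :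
    sg k a m t + sg k m b t = sg k a b t :=
  Finset.sum_Ioc_consecutive _ h1 h2

lemma sg_nonneg {k a b t : ℕ} (ht : t ≤ a) (hb : b ≤ k) : 0 ≤ sg k a b t := by
  apply Finset.sum_nonneg
  intro r hr
  rw [Finset.mem_Ioc] at hr
  exact (sin_th_pos (lt_of_le_of_lt ht hr.1) (le_trans hr.2 hb)).le

lemma sg_pos {k a b t : ℕ} (ht : t ≤ a) (hab : a < b) (hb : b ≤ k) : 0 < sg k a b t := by
  apply Finset.sum_pos
  · intro r hr
    rw [Finset.mem_Ioc] at hr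
    exact sin_th_pos (lt_of_le_of_lt ht hr.1) (le_trans hr.2 hb)
  · exact Finset.nonempty_Ioc.mpr hab

lemma sg_nonpos {k a b t : ℕ} (hb : b ≤ t) (ht : t ≤ k) : sg k a b t ≤ 0 := by
  apply Finset.sum_nonpos
  intro r hr
  rw [Finset.mem_Ioc] at hr
  exact sin_th_nonpos (le_trans hr.2 hb) ht

lemma sg_neg {k a b t : ℕ} (hab : a < b) (hb : b < t) (ht : t ≤ k) : sg k a b t < 0 := by
  apply Finset.sum_neg
  · intro r hr
    rw [Finset.mem_Ioc] at hr
    exact sin_th_neg (lt_of_le_of_lt hr.2 hb) ht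
  · exact Finset.nonempty_Ioc.mpr hab

lemma sg_top {k a b : ℕ} (t : ℕ) (h : a < b) :
    sg k a b t = sg k a (b - 1) t + sin (th k b - th k t) := by
  have hb : b - 1 + 1 = b := by omega
  unfold sg
  rw [← hb, Finset.sum_Ioc_succ_top (by omega : a ≤ b - 1)]
  rw [hb]

lemma sg_singleton' {k a b : ℕ} (t : ℕ) (h : a + 1 = b) :
    sg k a b t = sin (th k b - th k t) := by
  rw [sg_top t (by omega), show b - 1 = a by omega, sg_self, zero_add]

lemma neg_sg (k a b t : ℕ) : -sg k a b t = ∑ r ∈ Ioc a b, sin (th k t - th k r) := by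
  unfold sg
  rw [← Finset.sum_neg_distrib]
  apply Finset.sum_congr rfl
  intro r _
  rw [← Real.sin_neg, neg_sub]


abbrev E2 := EuclideanSpace ℝ (Fin 2)

def uu (k t : ℕ) : E2 := WithLp.toLp 2 ![Real.cos (th k t), Real.sin (th k t)]

def pp (k a b : ℕ) : E2 := ∑ r ∈ Ioc a b, uu k r

lemma coord_sum (s : Finset ℕ) (f : ℕ → E2) (i : Fin 2) :
    (∑ r ∈ s, f r) i = ∑ r ∈ s, f r i := by
  induction s using Finset.cons_induction with
  | empty => rfl
  | cons a s ha ih =>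
    rw [Finset.sum_cons, Finset.sum_cons, ← ih]
    rfl

def ph (k t : ℕ) (v : E2) : ℝ := cos (th k t) * v 1 - sin (th k t) * v 0

lemma ph_add (k t : ℕ) (v w : E2) : ph k t (v + w) = ph k t v + ph k t w := by
  unfold ph
  have h1 : (v + w) 1 = v 1 + w 1 := rfl
  have h0 : (v + w) 0 = v 0 + w 0 := rfl
  rw [h1, h0]; ring

lemma ph_smul (k t : ℕ) (c : ℝ) (v : E2) : ph k t (c • v) = c * ph k t v := by
  unfold ph
  have h1 : (c • v) 1 = c * v 1 := rfl
  have h0 : (c • v) 0 = c * v 0 := rfl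
  rw [h1, h0]; ring

lemma ph_uu (k t r : ℕ) : ph k t (uu k r) = sin (th k r - th k t) := by
  unfold ph uu
  rw [Real.sin_sub]
  simp only [PiLp.toLp_apply, Matrix.cons_val_one, Matrix.head_cons, Matrix.cons_val_zero]
  ring

lemma ph_pp (k t a b : ℕ) : ph k t (pp k a b) = sg k a b t := by
  unfold ph pp sg
  rw [coord_sum, coord_sum, Finset.mul_sum, Finset.mul_sum, ← Finset.sum_sub_distrib]
  apply Finset.sum_congr rfl
  intro r _
  have := ph_uu k t r
  unfold ph at this
  linarith [this]

lemma eqn {k a b c a' b' d : ℕ} {β₁ β₂ : ℝ}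
    (heq : pp k a b + β₁ • uu k c = pp k a' b' + β₂ • uu k d) (t : ℕ) :
    sg k a b t + β₁ * sin (th k c - th k t) = sg k a' b' t + β₂ * sin (th k d - th k t) := by
  have h := congrArg (ph k t) heq
  rw [ph_add, ph_add, ph_smul, ph_smul, ph_uu, ph_uu, ph_pp, ph_pp] at h
  exact h

lemma cross_id (x y z w : ℝ) :
    sin (y - z) * sin (w - x) - sin (x - z) * sin (w - y) = sin (w - z) * sin (y - x) := by
  rw [Real.sin_sub, Real.sin_sub, Real.sin_sub, Real.sin_sub, Real.sin_sub, Real.sin_sub]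
  ring

lemma cross_le {k r M c d : ℕ} (hrM : r ≤ M) (hcd : c ≤ d) (hMk : M ≤ k) (hdk : d ≤ k) :
    sin (th k r - th k c) * sin (th k d - th k M) ≤
      sin (th k M - th k c) * sin (th k d - th k r) := by
  have h1 := sin_th_nonneg hcd hdk
  have h2 := sin_th_nonneg hrM hMk
  have := cross_id (th k r) (th k M) (th k c) (th k d)
  nlinarith [mul_nonneg h1 h2]

lemma cross_lt {k r M c d : ℕ} (hrM : r < M) (hcd : c < d) (hMk : M ≤ k) (hdk : d ≤ k) :
    sin (th k r - th k c) * sin (th k d - th k M) <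
      sin (th k M - th k c) * sin (th k d - th k r) := by
  have h1 := sin_th_pos hcd hdk
  have h2 := sin_th_pos hrM hMk
  have := cross_id (th k r) (th k M) (th k c) (th k d)
  nlinarith [mul_pos h1 h2]



lemma pivot {k c m M d : ℕ} (hcm : c ≤ m) (hmM : m ≤ M) (hMd : M + 1 ≤ d) (hdk : d ≤ k)
    (h2 : sg k M (d - 1) c ≤ sg k c m c) (h1 : sg k M (d - 1) d ≤ sg k c m d) :
    m = c ∧ M = d - 1 := by
  by_cases hmc : m = c
  · subst hmc
    rw [sg_self] at h2
    constructor
    · rfl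
    · by_contra hM
      have hMd1 : M < d - 1 := by omega
      have : 0 < sg k M (d - 1) m := sg_pos hmM hMd1 (by omega)
      linarith
  · have hcm' : c < m := lt_of_le_of_ne hcm (Ne.symm hmc)
    exfalso
    by_cases hM : M = d - 1
    · rw [hM, sg_self] at h1
      have : sg k c m d < 0 := sg_neg hcm' (by omega) hdk
      linarith
    · have hMd1 : M < d - 1 := by omega
      set M' := M + 1 with hM'
      have hM'k : M' ≤ k := by omega
      have hs2 : 0 < sin (th k d - th k M') := sin_th_pos (by omega) hdk
      have hs3 : 0 ≤ sin (th k M' - th k c) := sin_th_nonneg (by omega) hM'k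
      -- key1
      have key1 : sg k c m c * sin (th k d - th k M') <
          sin (th k M' - th k c) * (∑ r ∈ Ioc c m, sin (th k d - th k r)) := by
        rw [Finset.mul_sum]
        unfold sg
        rw [Finset.sum_mul]
        apply Finset.sum_lt_sum_of_nonempty (Finset.nonempty_Ioc.mpr hcm')
        intro r hr
        rw [Finset.mem_Ioc] at hr
        exact cross_lt (by omega) (by omega) hM'k hdk
      have key3 : sin (th k M' - th k c) * (∑ r ∈ Ioc M (d - 1), sin (th k d - th k r)) ≤
          sg k M (d - 1) c * sin (th k d - th k M') := by
        rw [Finset.mul_sum]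
        unfold sg
        rw [Finset.sum_mul]
        apply Finset.sum_le_sum
        intro r hr
        rw [Finset.mem_Ioc] at hr
        exact cross_le (by omega) (by omega) (by omega) hdk
      have key2 : (∑ r ∈ Ioc c m, sin (th k d - th k r)) ≤
          (∑ r ∈ Ioc M (d - 1), sin (th k d - th k r)) := by
        rw [← neg_sg, ← neg_sg]
        linarith
      have hmul := mul_le_mul_of_nonneg_left key2 hs3
      have hfin : sg k c m c * sin (th k d - th k M') <
          sg k M (d - 1) c * sin (th k d - th k M') := by linarith
      have := lt_of_mul_lt_mul_right hfin hs2.le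
      linarith


def EdgeOK (k c a b : ℕ) : Prop :=
  1 ≤ c ∧ c ≤ k ∧ ((a = c ∧ c ≤ b ∧ b ≤ k) ∨ (b + 1 = c ∧ a + 2 ≤ c))

lemma force_zero {S β x y : ℝ} (hS : 0 < S) (hβ : 0 ≤ β) (hE : β * S = x + y)
    (hx : x ≤ 0) (hy : y ≤ 0) : β = 0 ∧ x = 0 ∧ y = 0 := by
  have h1 : 0 ≤ β * S := mul_nonneg hβ hS.le
  have hx0 : x = 0 := by linarith
  have hy0 : y = 0 := by linarith
  have hβS : β * S = 0 := by linarith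
  exact ⟨(mul_eq_zero.mp hβS).resolve_right hS.ne', hx0, hy0⟩

lemma force_one {S β x y : ℝ} (hS : 0 < S) (hβ : β ≤ 1) (hE : β * S = S + x + y)
    (hx : 0 ≤ x) (hy : 0 ≤ y) : β = 1 ∧ x = 0 ∧ y = 0 := by
  have h1 : β * S ≤ 1 * S := mul_le_mul_of_nonneg_right hβ hS.le
  have hx0 : x = 0 := by linarith
  have hy0 : y = 0 := by linarith
  refine ⟨mul_right_cancel₀ hS.ne' ?_, hx0, hy0⟩
  rw [one_mul]; linarith

lemma core_par {k c a b a' b' : ℕ} {β₁ β₂ : ℝ}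
    (h1 : EdgeOK k c a b) (h2 : EdgeOK k c a' b') (hne : ¬(a = a' ∧ b = b'))
    (heq : pp k a b + β₁ • uu k c = pp k a' b' + β₂ • uu k c) : False := by
  obtain ⟨hc1, hck, hcase1⟩ := h1
  obtain ⟨-, -, hcase2⟩ := h2
  have E0 : sg k a b c = sg k a' b' c := by
    have h := eqn heq c
    rw [sub_self, Real.sin_zero] at h
    linarith
  have key : ∀ x y : ℕ, c ≤ x → x < y → y ≤ k → sg k c x c ≠ sg k c y c := by
    intro x y hx hxy hyk hsg
    have hs := sg_split k c hx hxy.le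
    have := sg_pos hx hxy hyk
    linarith
  have keyL : ∀ x y : ℕ, x < y → y + 2 ≤ c → sg k x (c-1) c ≠ sg k y (c-1) c := by
    intro x y hxy hyc hsg
    have hs := sg_split k c (le_of_lt hxy) (by omega : y ≤ c - 1)
    have := sg_neg hxy (by omega : y < c) hck
    linarith
  rcases hcase1 with ⟨ha, hcb, hbk⟩ | ⟨hbc, hac⟩ <;>
    rcases hcase2 with ⟨ha', hcb', hb'k⟩ | ⟨hb'c, ha'c⟩
  · -- both right
    rw [ha, ha'] at E0
    have hbb : b ≠ b' := fun h => hne ⟨by omega, h⟩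
    rcases lt_or_gt_of_ne hbb with h | h
    · exact key b b' hcb h hb'k E0
    · exact (key b' b hcb' h hbk) E0.symm
  · -- right, left
    have h3 : sg k a' b' c < 0 := sg_neg (by omega) (by omega) hck
    rw [ha] at E0
    have h4 : 0 ≤ sg k c b c := sg_nonneg le_rfl hbk
    linarith
  · have h3 : sg k a b c < 0 := sg_neg (by omega) (by omega) hck
    rw [ha'] at E0
    have h4 : 0 ≤ sg k c b' c := sg_nonneg le_rfl hb'k
    linarith
  · -- both left
    have hbb : b = b' := by omega
    have haa : a ≠ a' := fun h => hne ⟨h, hbb⟩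
    rw [hbb, show b' = c - 1 by omega] at E0
    rcases lt_or_gt_of_ne haa with h | h
    · exact keyL a a' h (by omega) E0
    · exact (keyL a' a h (by omega)) E0.symm


lemma core_lt {k c a b d a' b' : ℕ} {β₁ β₂ : ℝ}
    (h1 : EdgeOK k c a b) (h2 : EdgeOK k d a' b') (hcd : c < d)
    (hβ₁0 : 0 ≤ β₁) (hβ₁1 : β₁ ≤ 1) (hβ₂0 : 0 ≤ β₂) (hβ₂1 : β₂ ≤ 1)
    (heq : pp k a b + β₁ • uu k c = pp k a' b' + β₂ • uu k d) :
    (β₁ = 0 ∨ β₁ = 1) ∧ (β₂ = 0 ∨ β₂ = 1) := by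
  obtain ⟨hc1, hck, hcase1⟩ := h1
  obtain ⟨hd1, hdk, hcase2⟩ := h2
  have hS : 0 < sin (th k d - th k c) := sin_th_pos hcd hdk
  have hsneg : sin (th k c - th k d) = -sin (th k d - th k c) := by
    rw [show th k c - th k d = -(th k d - th k c) by ring, Real.sin_neg]
  have E2 : β₂ * sin (th k d - th k c) = sg k a b c - sg k a' b' c := by
    have h := eqn heq c
    rw [sub_self, Real.sin_zero] at h
    linarith
  have E1 : β₁ * sin (th k d - th k c) = sg k a b d - sg k a' b' d := by
    have h := eqn heq d
    rw [sub_self, Real.sin_zero, hsneg] at h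
    linarith
  rcases hcase1 with ⟨ha, hcb, hbk⟩ | ⟨hbc, hac⟩ <;>
    rcases hcase2 with ⟨ha', hdb', hb'k⟩ | ⟨hb'd, ha'd⟩
  · -- RIGHT / RIGHT
    rw [ha, ha'] at E2 E1
    by_cases hbd : b ≤ d
    · have h3 : sg k c b d ≤ 0 := sg_nonpos hbd hdk
      have h4 : 0 ≤ sg k d b' d := sg_nonneg le_rfl hb'k
      obtain ⟨hβ₁z, h6, h5⟩ := force_zero hS hβ₁0
        (show β₁ * sin (th k d - th k c) = sg k c b d + -(sg k d b' d) by linarith)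
        h3 (by linarith)
      have h5' : sg k d b' d = 0 := by linarith
      have hb'd2 : b' = d := by
        by_contra hne
        exact absurd h5' (ne_of_gt (sg_pos le_rfl (by omega) hb'k))
      by_cases hbc2 : b = c
      · refine ⟨Or.inl hβ₁z, Or.inl ?_⟩
        rw [hbc2, hb'd2, sg_self, sg_self] at E2
        have hE : β₂ * sin (th k d - th k c) = 0 := by linarith
        exact (mul_eq_zero.mp hE).resolve_right hS.ne'
      · have hbd2 : b = d := by
          by_contra hne
          exact absurd h6 (ne_of_lt (sg_neg (by omega) (by omega) hdk))
        rw [hbd2] at h6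
        have h8 := sg_top (k := k) d hcd
        rw [sub_self, Real.sin_zero, add_zero] at h8
        have hcd1 : c = d - 1 := by
          by_contra hne
          have := sg_neg (show c < d - 1 by omega) (show d - 1 < d by omega) hdk
          linarith
        refine ⟨Or.inl hβ₁z, Or.inr ?_⟩
        rw [hbd2, hb'd2, sg_self] at E2
        have h9 := sg_top (k := k) c hcd
        rw [← hcd1, sg_self] at h9
        have hE : β₂ * sin (th k d - th k c) = 1 * sin (th k d - th k c) := by
          rw [one_mul]; linarith
        exact mul_right_cancel₀ hS.ne' hE
    · push_neg at hbd
      have hbb' : b ≤ b' := by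
        by_contra hcon
        push_neg at hcon
        have hs1 := sg_split k c hcd.le hbd.le
        have hs2 := sg_split k c hdb' hcon.le
        have h7 : 0 ≤ sg k c (d-1) c := sg_nonneg le_rfl (by omega)
        have h8 : 0 < sg k b' b c := sg_pos (le_trans hcd.le hdb') hcon hbk
        have h9 := sg_top (k := k) c hcd
        have h10 : β₂ * sin (th k d - th k c) ≤ 1 * sin (th k d - th k c) :=
          mul_le_mul_of_nonneg_right hβ₂1 hS.le
        linarith
      have hs1 := sg_split k d hcd.le hbd.le
      have hs2 := sg_split k d hbd.le hbb'
      have h3 : sg k c d d ≤ 0 := sg_nonpos le_rfl hdk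
      have h4 : 0 ≤ sg k b b' d := sg_nonneg hbd.le hb'k
      obtain ⟨hβ₁z, h6, h5⟩ := force_zero hS hβ₁0
        (show β₁ * sin (th k d - th k c) = sg k c d d + -(sg k b b' d) by linarith)
        h3 (by linarith)
      have h5' : sg k b b' d = 0 := by linarith
      have hbb2 : b' = b := by
        by_contra hne
        exact absurd h5' (ne_of_gt (sg_pos hbd.le (by omega) hb'k))
      have h8 := sg_top (k := k) d hcd
      rw [sub_self, Real.sin_zero, add_zero] at h8
      have hcd1 : c = d - 1 := by
        by_contra hne
        have := sg_neg (show c < d - 1 by omega) (show d - 1 < d by omega) hdk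
        linarith
      refine ⟨Or.inl hβ₁z, Or.inr ?_⟩
      have hs3 := sg_split k c hcd.le hbd.le
      have h9 := sg_top (k := k) c hcd
      rw [← hcd1, sg_self] at h9
      rw [hbb2] at E2
      have hE : β₂ * sin (th k d - th k c) = 1 * sin (th k d - th k c) := by
        rw [one_mul]; linarith
      exact mul_right_cancel₀ hS.ne' hE
  · -- RIGHT / LEFT
    rw [ha] at E2 E1
    have hb'e : b' = d - 1 := by omega
    subst hb'e
    by_cases hI : a' < c
    · by_cases hbefore : b < d
      · have s1 := sg_split k d (show a' ≤ c - 1 by omega) (show c - 1 ≤ d - 1 by omega)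
        have s2 := sg_split k d (show c - 1 ≤ c by omega) (show c ≤ d - 1 by omega)
        have s3 := sg_split k d hcb (show b ≤ d - 1 by omega)
        have s4 : sg k (c-1) c d = sin (th k c - th k d) := sg_singleton' d (by omega)
        rw [hsneg] at s4
        have h7 : sg k a' (c-1) d ≤ 0 := sg_nonpos (by omega) hdk
        have h8 : sg k b (d-1) d ≤ 0 := sg_nonpos (by omega) hdk
        obtain ⟨hβ₁o, h9, h10⟩ := force_one hS hβ₁1
          (show β₁ * sin (th k d - th k c) =
            sin (th k d - th k c) + -(sg k a' (c-1) d) + -(sg k b (d-1) d) by linarith)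
          (by linarith) (by linarith)
        have h9' : sg k a' (c-1) d = 0 := by linarith
        have h10' : sg k b (d-1) d = 0 := by linarith
        have ha'c : a' = c - 1 := by
          by_contra hne
          exact absurd h9' (ne_of_lt (sg_neg (by omega) (by omega) hdk))
        have hbd1 : b = d - 1 := by
          by_contra hne
          exact absurd h10' (ne_of_lt (sg_neg (by omega) (by omega) hdk))
        refine ⟨Or.inr hβ₁o, Or.inl ?_⟩
        rw [ha'c, hbd1] at E2
        have s5 := sg_split k c (show c - 1 ≤ c by omega) (show c ≤ d - 1 by omega)
        have s6 : sg k (c-1) c c = sin (th k c - th k c) := sg_singleton' c (by omega)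
        rw [sub_self, Real.sin_zero] at s6
        have hE : β₂ * sin (th k d - th k c) = 0 := by linarith
        exact (mul_eq_zero.mp hE).resolve_right hS.ne'
      · push_neg at hbefore
        have s1 := sg_split k d hcd.le hbefore
        have s2 := sg_top (k := k) d hcd
        rw [sub_self, Real.sin_zero, add_zero] at s2
        have s3 := sg_split k d (show a' ≤ c - 1 by omega) (show c - 1 ≤ d - 1 by omega)
        have s4 := sg_split k d (show c - 1 ≤ c by omega) (show c ≤ d - 1 by omega)
        have s5 : sg k (c-1) c d = sin (th k c - th k d) := sg_singleton' d (by omega)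
        rw [hsneg] at s5
        have h7 : 0 ≤ sg k d b d := sg_nonneg le_rfl hbk
        have h8 : sg k a' (c-1) d ≤ 0 := sg_nonpos (by omega) hdk
        obtain ⟨hβ₁o, h9, h10⟩ := force_one hS hβ₁1
          (show β₁ * sin (th k d - th k c) =
            sin (th k d - th k c) + sg k d b d + -(sg k a' (c-1) d) by linarith)
          h7 (by linarith)
        have h10' : sg k a' (c-1) d = 0 := by linarith
        have hbd2 : b = d := by
          by_contra hne
          exact absurd h9 (ne_of_gt (sg_pos le_rfl (by omega) hbk))
        have ha'c : a' = c - 1 := by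
          by_contra hne
          exact absurd h10' (ne_of_lt (sg_neg (by omega) (by omega) hdk))
        refine ⟨Or.inr hβ₁o, Or.inr ?_⟩
        rw [ha'c, hbd2] at E2
        have s6 := sg_split k c (show c - 1 ≤ c by omega) (show c ≤ d - 1 by omega)
        have s7 : sg k (c-1) c c = sin (th k c - th k c) := sg_singleton' c (by omega)
        rw [sub_self, Real.sin_zero] at s7
        have s8 := sg_top (k := k) c hcd
        have hE : β₂ * sin (th k d - th k c) = 1 * sin (th k d - th k c) := by
          rw [one_mul]; linarith
        exact mul_right_cancel₀ hS.ne' hE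
    · push_neg at hI
      by_cases hdb : d ≤ b
      · have s1 := sg_split k c hI (show a' ≤ b by omega)
        have s2 := sg_split k c (show a' ≤ d - 1 by omega) (show d - 1 ≤ b by omega)
        have s3 := sg_split k c (show d - 1 ≤ d by omega) hdb
        have s4 : sg k (d-1) d c = sin (th k d - th k c) := sg_singleton' c (by omega)
        have h7 : 0 ≤ sg k c a' c := sg_nonneg le_rfl (by omega)
        have h8 : 0 ≤ sg k d b c := sg_nonneg hcd.le hbk
        obtain ⟨hβ₂o, h9, h10⟩ := force_one hS hβ₂1
          (show β₂ * sin (th k d - th k c) =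
            sin (th k d - th k c) + sg k c a' c + sg k d b c by linarith)
          h7 h8
        have ha'c : a' = c := by
          by_contra hne
          exact absurd h9 (ne_of_gt (sg_pos le_rfl (by omega) (by omega)))
        have hbd2 : b = d := by
          by_contra hne
          exact absurd h10 (ne_of_gt (sg_pos hcd.le (by omega) hbk))
        refine ⟨Or.inl ?_, Or.inr hβ₂o⟩
        rw [ha'c, hbd2] at E1
        have s5 := sg_top (k := k) d hcd
        rw [sub_self, Real.sin_zero, add_zero] at s5
        have hE : β₁ * sin (th k d - th k c) = 0 := by linarith
        exact (mul_eq_zero.mp hE).resolve_right hS.ne'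
      · push_neg at hdb
        have key : ∀ t : ℕ, sg k c b t - sg k a' (d-1) t =
            sg k c (min a' b) t - sg k (max a' b) (d-1) t := by
          intro t
          rcases le_total a' b with h | h
          · rw [min_eq_left h, max_eq_right h]
            have s1 := sg_split k t hI h
            have s2 := sg_split k t h (show b ≤ d - 1 by omega)
            linarith
          · rw [min_eq_right h, max_eq_left h]
        have hmax : max a' b ≤ d - 1 :=
          max_le (by omega) (by omega)
        have h2' : sg k (max a' b) (d-1) c ≤ sg k c (min a' b) c := by
          have hk2 := key c
          have := mul_nonneg hβ₂0 hS.le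
          linarith
        have h1' : sg k (max a' b) (d-1) d ≤ sg k c (min a' b) d := by
          have hk1 := key d
          have := mul_nonneg hβ₁0 hS.le
          linarith
        obtain ⟨hm, hM⟩ := pivot (le_min hI hcb) min_le_max
          (show max a' b + 1 ≤ d by omega) hdk h2' h1'
        have hfin : a' = c ∧ b = d - 1 := by
          rcases le_total a' b with h | h
          · rw [max_eq_right h] at hM
            rw [min_eq_left h] at hm
            exact ⟨hm, hM⟩
          · rw [max_eq_left h] at hM
            omega
        obtain ⟨ha'c, hbd1⟩ := hfin
        rw [ha'c, hbd1] at E2 E1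
        constructor
        · left
          have hE : β₁ * sin (th k d - th k c) = 0 := by linarith
          exact (mul_eq_zero.mp hE).resolve_right hS.ne'
        · left
          have hE : β₂ * sin (th k d - th k c) = 0 := by linarith
          exact (mul_eq_zero.mp hE).resolve_right hS.ne'
  · -- LEFT / RIGHT
    exfalso
    rw [ha'] at E2
    have h3 : sg k a b c < 0 := sg_neg (by omega) (by omega) hck
    have h4 : 0 ≤ sg k d b' c := sg_nonneg hcd.le hb'k
    have h5 : 0 ≤ β₂ * sin (th k d - th k c) := mul_nonneg hβ₂0 hS.le
    linarith
  · -- LEFT / LEFT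
    have hbe : b = c - 1 := by omega
    subst hbe
    have hb'e : b' = d - 1 := by omega
    subst hb'e
    by_cases hI : c - 1 ≤ a'
    · exfalso
      have h3 : sg k a (c-1) c < 0 := sg_neg (by omega) (by omega) hck
      have h4 : 0 ≤ sg k a' (d-1) c := by
        by_cases hc : c ≤ a'
        · exact sg_nonneg hc (by omega)
        · have ha'e : a' = c - 1 := by omega
          rw [ha'e]
          have s1 := sg_split k c (show c - 1 ≤ c by omega) (show c ≤ d - 1 by omega)
          have s2 : sg k (c-1) c c = sin (th k c - th k c) := sg_singleton' c (by omega)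
          rw [sub_self, Real.sin_zero] at s2
          have h6 : 0 ≤ sg k c (d-1) c := sg_nonneg le_rfl (by omega)
          linarith
      have h5 : 0 ≤ β₂ * sin (th k d - th k c) := mul_nonneg hβ₂0 hS.le
      linarith
    · push_neg at hI
      by_cases haa : a < a'
      · exfalso
        have s1 := sg_split k c haa.le (show a' ≤ c - 1 by omega)
        have s2 := sg_split k c (show a' ≤ c - 1 by omega) (show c - 1 ≤ d - 1 by omega)
        have s3 := sg_split k c (show c - 1 ≤ c by omega) (show c ≤ d - 1 by omega)
        have s4 : sg k (c-1) c c = sin (th k c - th k c) := sg_singleton' c (by omega)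
        rw [sub_self, Real.sin_zero] at s4
        have h3 : sg k a a' c < 0 := sg_neg haa (by omega) hck
        have h4 : 0 ≤ sg k c (d-1) c := sg_nonneg le_rfl (by omega)
        have h5 : 0 ≤ β₂ * sin (th k d - th k c) := mul_nonneg hβ₂0 hS.le
        linarith
      · push_neg at haa
        have s1 := sg_split k d haa (show a ≤ c - 1 by omega)
        have s2 := sg_split k d (show a' ≤ c - 1 by omega) (show c - 1 ≤ d - 1 by omega)
        have s3 := sg_split k d (show c - 1 ≤ c by omega) (show c ≤ d - 1 by omega)
        have s4 : sg k (c-1) c d = sin (th k c - th k d) := sg_singleton' d (by omega)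
        rw [hsneg] at s4
        have h7 : sg k a' a d ≤ 0 := sg_nonpos (by omega) hdk
        have h8 : sg k c (d-1) d ≤ 0 := sg_nonpos (by omega) hdk
        obtain ⟨hβ₁o, h9, h10⟩ := force_one hS hβ₁1
          (show β₁ * sin (th k d - th k c) =
            sin (th k d - th k c) + -(sg k a' a d) + -(sg k c (d-1) d) by linarith)
          (by linarith) (by linarith)
        have h9' : sg k a' a d = 0 := by linarith
        have h10' : sg k c (d-1) d = 0 := by linarith
        have haa2 : a' = a := by
          by_contra hne
          exact absurd h9' (ne_of_lt (sg_neg (by omega) (by omega) hdk))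
        have hcd1 : c = d - 1 := by
          by_contra hne
          exact absurd h10' (ne_of_lt (sg_neg (by omega) (by omega) hdk))
        refine ⟨Or.inr hβ₁o, Or.inl ?_⟩
        rw [haa2, ← hcd1] at E2
        have s5 := sg_top (k := k) c (show a < c by omega)
        rw [sub_self, Real.sin_zero, add_zero] at s5
        have hE : β₂ * sin (th k d - th k c) = 0 := by linarith
        exact (mul_eq_zero.mp hE).resolve_right hS.ne'


-- ### combinatorial setup

abbrev Vt (k : ℕ) := Option (Σ j : Fin (k+1), Fin (j : ℕ))

def VV (k i j : ℕ) : Vt k :=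
  if h : i < j ∧ j ≤ k then some ⟨⟨j, by omega⟩, ⟨i, h.1⟩⟩ else none

lemma VV_eq_iff {k i j i' j' : ℕ} (hij : i ≤ j) (hjk : j ≤ k) (hij' : i' ≤ j') (hj'k : j' ≤ k) :
    VV k i j = VV k i' j' ↔ ((i = i' ∧ j = j') ∨ (i = j ∧ i' = j')) := by
  unfold VV
  split_ifs with h1 h2 h2
  · constructor
    · intro h
      have h' := congrArg (Option.map
        (fun x : Σ m : Fin (k+1), Fin (m : ℕ) => ((x.1 : ℕ), (x.2 : ℕ)))) h
      simp only [Option.map_some] at h'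
      have h'' : (j, i) = (j', i') := by
        injection h' with h''
      left
      have := Prod.mk.injEq j i j' i' ▸ h''
      constructor
      · exact (Prod.mk.injEq _ _ _ _ ▸ h'').2
      · exact (Prod.mk.injEq _ _ _ _ ▸ h'').1
    · rintro (⟨rfl, rfl⟩ | ⟨h3, h4⟩)
      · rfl
      · omega
  · constructor
    · intro h; exact absurd h (by simp)
    · rintro (⟨rfl, rfl⟩ | ⟨h3, h4⟩) <;> omega
  · constructor
    · intro h; exact absurd h (by simp)
    · rintro (⟨rfl, rfl⟩ | ⟨h3, h4⟩) <;> omega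
  · constructor
    · intro _; right; omega
    · intro _; rfl

lemma VV_cases {k i j i' j' : ℕ} (hij : i ≤ j) (hjk : j ≤ k) (hij' : i' ≤ j') (hj'k : j' ≤ k)
    (h : VV k i j = VV k i' j') : (i = i' ∧ j = j') ∨ (i = j ∧ i' = j') :=
  (VV_eq_iff hij hjk hij' hj'k).mp h

def posW (k : ℕ) (w : Vt k) : E2 := w.elim 0 (fun x => pp k (x.2 : ℕ) (x.1 : ℕ))

lemma pp_split {a m b : ℕ} (k : ℕ) (h1 : a ≤ m) (h2 : m ≤ b) :
    pp k a m + pp k m b = pp k a b :=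
  Finset.sum_Ioc_consecutive _ h1 h2

lemma pp_diag (k a : ℕ) : pp k a a = 0 := by simp [pp]

lemma pp_singleton' {k a b : ℕ} (h : a + 1 = b) : pp k a b = uu k b := by
  subst h
  unfold pp
  rw [Finset.sum_Ioc_succ_top (le_refl a)]
  simp

lemma posW_VV {k i j : ℕ} (hij : i ≤ j) (hjk : j ≤ k) : posW k (VV k i j) = pp k i j := by
  unfold VV posW
  split_ifs with h
  · rfl
  · have hij2 : i = j := by omega
    subst hij2
    simp [pp_diag]

def Ec (k c : ℕ) : Finset (Sym2 (Vt k)) :=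
  ((Finset.Icc c k).image (fun b => s(VV k c b, VV k (c-1) b))) ∪
  ((Finset.Icc 1 (c-1)).image (fun a => s(VV k (a-1) (c-1), VV k (a-1) c)))

def EF (k : ℕ) : Finset (Sym2 (Vt k)) := (Finset.Icc 1 k).biUnion (Ec k)

def GG (k : ℕ) : SimpleGraph (Vt k) := SimpleGraph.fromEdgeSet (EF k)

lemma mem_EF {k : ℕ} {e : Sym2 (Vt k)} :
    e ∈ EF k ↔ ∃ c, 1 ≤ c ∧ c ≤ k ∧
      ((∃ b, c ≤ b ∧ b ≤ k ∧ e = s(VV k c b, VV k (c-1) b)) ∨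
       (∃ a, 1 ≤ a ∧ a ≤ c - 1 ∧ e = s(VV k (a-1) (c-1), VV k (a-1) c))) := by
  unfold EF Ec
  simp only [Finset.mem_biUnion, Finset.mem_union, Finset.mem_image, Finset.mem_Icc]
  constructor
  · rintro ⟨c, ⟨hc1, hck⟩, ⟨b, ⟨hcb, hbk⟩, he⟩ | ⟨a, ⟨ha1, hac⟩, he⟩⟩
    · exact ⟨c, hc1, hck, Or.inl ⟨b, hcb, hbk, he.symm⟩⟩
    · exact ⟨c, hc1, hck, Or.inr ⟨a, ha1, hac, he.symm⟩⟩
  · rintro ⟨c, hc1, hck, ⟨b, hcb, hbk, he⟩ | ⟨a, ha1, hac, he⟩⟩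
    · exact ⟨c, ⟨hc1, hck⟩, Or.inl ⟨b, ⟨hcb, hbk⟩, he.symm⟩⟩
    · exact ⟨c, ⟨hc1, hck⟩, Or.inr ⟨a, ⟨ha1, hac⟩, he.symm⟩⟩

lemma adj_struct {k : ℕ} {x y : Vt k} (h : (GG k).Adj x y) :
    ∃ c a b, EdgeOK k c a b ∧
      ((posW k x = pp k a b ∧ posW k y = pp k a b + uu k c) ∨
       (posW k y = pp k a b ∧ posW k x = pp k a b + uu k c)) := by
  rw [GG, SimpleGraph.fromEdgeSet_adj] at h
  obtain ⟨hmem, hne⟩ := h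
  rw [Finset.mem_coe, mem_EF] at hmem
  obtain ⟨c, hc1, hck, hcase⟩ := hmem
  rcases hcase with ⟨b, hcb, hbk, he⟩ | ⟨a, ha1, hac, he⟩
  · refine ⟨c, c, b, ⟨hc1, hck, Or.inl ⟨rfl, hcb, hbk⟩⟩, ?_⟩
    have hx := posW_VV (k := k) hcb hbk
    have hy := posW_VV (k := k) (show c - 1 ≤ b by omega) hbk
    have hsplit : pp k (c-1) b = pp k c b + uu k c := by
      rw [← pp_split k (show c - 1 ≤ c by omega) hcb,
        pp_singleton' (show c - 1 + 1 = c by omega)]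
      exact add_comm _ _
    rw [Sym2.eq_iff] at he
    rcases he with ⟨hxe, hye⟩ | ⟨hxe, hye⟩
    · left; rw [hxe, hye, hx, hy, hsplit]; exact ⟨rfl, rfl⟩
    · right; rw [hxe, hye, hx, hy, hsplit]; exact ⟨rfl, rfl⟩
  · refine ⟨c, a - 1, c - 1, ⟨hc1, hck, Or.inr ⟨by omega, by omega⟩⟩, ?_⟩
    have hx := posW_VV (k := k) (show a - 1 ≤ c - 1 by omega) (show c - 1 ≤ k by omega)
    have hy := posW_VV (k := k) (show a - 1 ≤ c by omega) hck
    have hsplit : pp k (a-1) c = pp k (a-1) (c-1) + uu k c := by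
      rw [← pp_split k (show a - 1 ≤ c - 1 by omega) (show c - 1 ≤ c by omega),
        pp_singleton' (show c - 1 + 1 = c by omega)]
    rw [Sym2.eq_iff] at he
    rcases he with ⟨hxe, hye⟩ | ⟨hxe, hye⟩
    · left; rw [hxe, hye, hx, hy, hsplit]; exact ⟨rfl, rfl⟩
    · right; rw [hxe, hye, hx, hy, hsplit]; exact ⟨rfl, rfl⟩


def lenW (k : ℕ) (w : Vt k) : ℕ := w.elim 0 (fun x => (x.1 : ℕ) - (x.2 : ℕ))

lemma lenW_VV {k i j : ℕ} (hij : i ≤ j) (hjk : j ≤ k) : lenW k (VV k i j) = j - i := by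
  unfold VV lenW
  split_ifs with h
  · rfl
  · simp only [Option.elim_none]
    omega

lemma adj_len {k : ℕ} {x y : Vt k} (h : (GG k).Adj x y) :
    lenW k x = lenW k y + 1 ∨ lenW k y = lenW k x + 1 := by
  rw [GG, SimpleGraph.fromEdgeSet_adj] at h
  obtain ⟨hmem, hne⟩ := h
  rw [Finset.mem_coe, mem_EF] at hmem
  obtain ⟨c, hc1, hck, hcase⟩ := hmem
  rcases hcase with ⟨b, hcb, hbk, he⟩ | ⟨a, ha1, hac, he⟩ <;>
    rw [Sym2.eq_iff] at he <;>
    rcases he with ⟨hxe, hye⟩ | ⟨hxe, hye⟩ <;>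
    rw [hxe, hye] <;>
    rw [lenW_VV (by omega) (by omega), lenW_VV (by omega) (by omega)] <;>
    omega

lemma no_tri {k : ℕ} {x y z : Vt k} (h1 : (GG k).Adj x y) (h2 : (GG k).Adj x z)
    (h3 : (GG k).Adj y z) : False := by
  have l1 := adj_len h1
  have l2 := adj_len h2
  have l3 := adj_len h3
  omega

lemma pp_ne_zero {k i j : ℕ} (hij : i < j) (hjk : j ≤ k) : pp k i j ≠ 0 := by
  intro h
  have h1 := congrArg (ph k 0) h
  rw [ph_pp] at h1
  have h0 : ph k 0 (0 : E2) = 0 := by simp [ph]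
  have h2 := sg_pos (Nat.zero_le i) hij hjk
  rw [h0] at h1
  linarith

lemma pp_inj_aux2 {k i j j' : ℕ} (hij : i < j) (hjj : j < j') (hj'k : j' ≤ k) :
    pp k i j ≠ pp k i j' := by
  intro h
  have h1 := congrArg (ph k 0) h
  rw [ph_pp, ph_pp] at h1
  have s1 := sg_split k 0 (le_of_lt hij) (le_of_lt hjj)
  have h2 := sg_pos (Nat.zero_le j) hjj hj'k
  linarith

lemma pp_inj_aux {k i j i' j' : ℕ} (hii : i < i') (hij : i < j) (hij' : i' < j')
    (hjk : j ≤ k) (hj'k : j' ≤ k) : pp k i j ≠ pp k i' j' := by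
  intro h
  have hsg : ∀ t, sg k i j t = sg k i' j' t := fun t => by
    have := congrArg (ph k t) h; rwa [ph_pp, ph_pp] at this
  by_cases h1 : j ≤ i'
  · have ha := hsg j
    have hb : sg k i j j ≤ 0 := sg_nonpos le_rfl hjk
    have hcpos : 0 < sg k i' j' j := sg_pos h1 hij' hj'k
    linarith
  · push_neg at h1
    rcases lt_trichotomy j j' with h2 | h2 | h2
    · have ha := hsg i'
      have s1 := sg_split k i' hii.le (le_of_lt h1)
      have s2 := sg_split k i' (le_of_lt h1) h2.le
      have hb : sg k i i' i' ≤ 0 := sg_nonpos le_rfl (by omega)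
      have hcpos : 0 < sg k j j' i' := sg_pos (by omega) h2 hj'k
      linarith
    · have ha := hsg 0
      rw [← h2] at ha
      have s1 := sg_split k 0 hii.le (le_of_lt h1)
      have hcpos : 0 < sg k i i' 0 := sg_pos (Nat.zero_le _) hii (by omega)
      linarith
    · have ha := hsg 0
      have s1 := sg_split k 0 hii.le (show i' ≤ j' by omega)
      have s2 := sg_split k 0 (show i ≤ j' by omega) h2.le
      have p1 : 0 < sg k i i' 0 := sg_pos (Nat.zero_le _) hii (by omega)
      have p2 : 0 < sg k j' j 0 := sg_pos (Nat.zero_le _) h2 hjk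
      linarith

lemma posW_inj (k : ℕ) : Function.Injective (posW k) := by
  intro x y h
  match x, y with
  | none, none => rfl
  | none, some z =>
    exact absurd h.symm (pp_ne_zero z.2.isLt (Nat.lt_succ_iff.mp z.1.isLt))
  | some z, none =>
    exact absurd h (pp_ne_zero z.2.isLt (Nat.lt_succ_iff.mp z.1.isLt))
  | some z, some w =>
    have hz2 : ((z.2 : ℕ) < (z.1 : ℕ)) := z.2.isLt
    have hw2 : ((w.2 : ℕ) < (w.1 : ℕ)) := w.2.isLt
    have hz1 : ((z.1 : ℕ) ≤ k) := Nat.lt_succ_iff.mp z.1.isLt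
    have hw1 : ((w.1 : ℕ) ≤ k) := Nat.lt_succ_iff.mp w.1.isLt
    have hps : pp k (z.2 : ℕ) (z.1 : ℕ) = pp k (w.2 : ℕ) (w.1 : ℕ) := h
    have hvals : (z.2 : ℕ) = (w.2 : ℕ) ∧ (z.1 : ℕ) = (w.1 : ℕ) := by
      rcases lt_trichotomy (z.2 : ℕ) (w.2 : ℕ) with h2 | h2 | h2
      · exact absurd hps (pp_inj_aux h2 hz2 hw2 hz1 hw1)
      · refine ⟨h2, ?_⟩
        rcases lt_trichotomy (z.1 : ℕ) (w.1 : ℕ) with h3 | h3 | h3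
        · rw [h2] at hps
          exact absurd hps (pp_inj_aux2 (h2 ▸ hz2) h3 hw1)
        · exact h3
        · rw [h2] at hps
          exact absurd hps.symm (pp_inj_aux2 hw2 h3 hz1)
      · exact absurd hps.symm (pp_inj_aux h2 hw2 hz2 hw1 hz1)
    obtain ⟨hi, hj⟩ := hvals
    have hfst : z.1 = w.1 := Fin.ext hj
    have : z = w := Sigma.ext hfst ((Fin.heq_ext_iff (by rw [hj])).mpr hi)
    rw [this]


lemma card_Ec {k c : ℕ} (hc1 : 1 ≤ c) (hck : c ≤ k) : (Ec k c).card = k := by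
  unfold Ec
  rw [Finset.card_union_of_disjoint, Finset.card_image_of_injOn, Finset.card_image_of_injOn,
    Nat.card_Icc, Nat.card_Icc]
  · omega
  · -- injOn for the second image
    intro a ha a' ha' he
    simp only [Finset.coe_Icc, Set.mem_Icc] at ha ha'
    rw [Sym2.eq_iff] at he
    rcases he with ⟨h1, h2⟩ | ⟨h1, h2⟩ <;>
      rcases VV_cases (by omega) (by omega) (by omega) (by omega) h1 with h3 | h3 <;>
      rcases VV_cases (by omega) (by omega) (by omega) (by omega) h2 with h4 | h4 <;>
      omega
  · -- injOn for the first image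
    intro b hb b' hb' he
    simp only [Finset.coe_Icc, Set.mem_Icc] at hb hb'
    rw [Sym2.eq_iff] at he
    rcases he with ⟨h1, h2⟩ | ⟨h1, h2⟩ <;>
      rcases VV_cases (by omega) (by omega) (by omega) (by omega) h1 with h3 | h3 <;>
      rcases VV_cases (by omega) (by omega) (by omega) (by omega) h2 with h4 | h4 <;>
      omega
  · -- disjointness of the two images
    rw [Finset.disjoint_left]
    rintro e he1 he2
    simp only [Finset.mem_image, Finset.mem_Icc] at he1 he2
    obtain ⟨b, ⟨hcb, hbk⟩, rfl⟩ := he1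
    obtain ⟨a, ⟨ha1, hac⟩, he⟩ := he2
    rw [Sym2.eq_iff] at he
    rcases he with ⟨h1, h2⟩ | ⟨h1, h2⟩ <;>
      rcases VV_cases (by omega) (by omega) (by omega) (by omega) h1 with h3 | h3 <;>
      rcases VV_cases (by omega) (by omega) (by omega) (by omega) h2 with h4 | h4 <;>
      omega

lemma Ec_disj {k c d : ℕ} (hc : 1 ≤ c) (hck : c ≤ k) (hd : 1 ≤ d) (hdk : d ≤ k)
    (hcd : c ≠ d) : Disjoint (Ec k c) (Ec k d) := by
  rw [Finset.disjoint_left]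
  intro e hec hed
  simp only [Ec, Finset.mem_union, Finset.mem_image, Finset.mem_Icc] at hec hed
  rcases hec with ⟨b, ⟨hcb, hbk⟩, rfl⟩ | ⟨a, ⟨ha1, hac⟩, rfl⟩ <;>
    rcases hed with ⟨b', ⟨hdb', hb'k⟩, he⟩ | ⟨a', ⟨ha'1, ha'd⟩, he⟩ <;>
    rw [Sym2.eq_iff] at he <;>
    rcases he with ⟨h1, h2⟩ | ⟨h1, h2⟩ <;>
    rcases VV_cases (by omega) (by omega) (by omega) (by omega) h1 with h3 | h3 <;>
    rcases VV_cases (by omega) (by omega) (by omega) (by omega) h2 with h4 | h4 <;>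
    omega

lemma card_EF (k : ℕ) : (EF k).card = k * k := by
  unfold EF
  rw [Finset.card_biUnion (fun x hx y hy hxy => by
    rw [Finset.mem_coe, Finset.mem_Icc] at hx hy
    exact Ec_disj hx.1 hx.2 hy.1 hy.2 hxy)]
  have hcongr : ∑ c ∈ Finset.Icc 1 k, (Ec k c).card = ∑ _c ∈ Finset.Icc 1 k, k :=
    Finset.sum_congr rfl (fun c hc => by
      rw [Finset.mem_Icc] at hc
      exact card_Ec hc.1 hc.2)
  rw [hcongr, Finset.sum_const, Nat.card_Icc, smul_eq_mul,
    show k + 1 - 1 = k by omega]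

lemma EF_no_diag {k : ℕ} {e : Sym2 (Vt k)} (he : e ∈ EF k) : ¬e.IsDiag := by
  rw [mem_EF] at he
  obtain ⟨c, hc1, hck, ⟨b, hcb, hbk, rfl⟩ | ⟨a, ha1, hac, rfl⟩⟩ := he <;>
    rw [Sym2.mk_isDiag_iff] <;>
    intro h <;>
    rcases VV_cases (by omega) (by omega) (by omega) (by omega) h with h3 | h3 <;>
    omega

lemma edgeSet_GG (k : ℕ) : (GG k).edgeSet = ↑(EF k) := by
  rw [GG, SimpleGraph.edgeSet_fromEdgeSet, sdiff_eq_left]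
  rw [Set.disjoint_left]
  intro e he
  exact EF_no_diag (Finset.mem_coe.mp he)

lemma ncard_GG (k : ℕ) : (GG k).edgeSet.ncard = k * k := by
  rw [edgeSet_GG, Set.ncard_coe_finset, card_EF]

lemma VV_self (k t : ℕ) : VV k t t = none := by simp [VV]

lemma exists_nbr {k : ℕ} (hk1 : 1 ≤ k) (x : Vt k) : ∃ y, (GG k).Adj x y := by
  match x with
  | none =>
    refine ⟨VV k 0 1, ?_⟩
    rw [GG, SimpleGraph.fromEdgeSet_adj]
    constructor
    · rw [Finset.mem_coe, mem_EF]
      refine ⟨1, le_rfl, hk1, Or.inl ⟨1, le_rfl, hk1, ?_⟩⟩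
      rw [VV_self]
    · intro hcon
      have h01 : VV k 0 1 = none := hcon.symm
      unfold VV at h01
      rw [dif_pos ⟨Nat.zero_lt_one, hk1⟩] at h01
      exact Option.some_ne_none _ h01
  | some z =>
    have hz2 : ((z.2 : ℕ) < (z.1 : ℕ)) := z.2.isLt
    have hz1 : ((z.1 : ℕ) ≤ k) := Nat.lt_succ_iff.mp z.1.isLt
    refine ⟨VV k ((z.2 : ℕ) + 1) (z.1 : ℕ), ?_⟩
    rw [GG, SimpleGraph.fromEdgeSet_adj]
    have hxv : VV k (z.2 : ℕ) (z.1 : ℕ) = some z := by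
      unfold VV
      rw [dif_pos ⟨hz2, hz1⟩]
    constructor
    · rw [Finset.mem_coe, mem_EF]
      refine ⟨(z.2 : ℕ) + 1, by omega, by omega,
        Or.inl ⟨(z.1 : ℕ), by omega, hz1, ?_⟩⟩
      rw [show (z.2 : ℕ) + 1 - 1 = (z.2 : ℕ) from rfl, hxv]
      rw [Sym2.eq_iff]
      right; exact ⟨rfl, rfl⟩
    · intro hcon
      rw [← hxv] at hcon
      rcases VV_cases (by omega) hz1 (by omega) hz1 hcon with h3 | h3 <;> omega


lemma segpair {k : ℕ} {x y : Vt k} {c a b : ℕ}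
    (hor : (posW k x = pp k a b ∧ posW k y = pp k a b + uu k c) ∨
      (posW k y = pp k a b ∧ posW k x = pp k a b + uu k c)) :
    segment ℝ (posW k x) (posW k y) = segment ℝ (pp k a b) (pp k a b + uu k c) ∧
    ({posW k x, posW k y} : Set E2) = {pp k a b, pp k a b + uu k c} := by
  rcases hor with ⟨h1, h2⟩ | ⟨h1, h2⟩
  · rw [h1, h2]; exact ⟨rfl, rfl⟩
  · rw [h1, h2]; exact ⟨segment_symm ℝ _ _, Set.pair_comm _ _⟩

lemma seg_param {p u x : E2} (h : x ∈ segment ℝ p (p + u)) :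
    ∃ β : ℝ, 0 ≤ β ∧ β ≤ 1 ∧ x = p + β • u := by
  rw [segment_eq_image'] at h
  obtain ⟨β, hβ, hx⟩ := h
  rw [add_sub_cancel_left] at hx
  exact ⟨β, hβ.1, hβ.2, hx.symm⟩

lemma GG_noncross {k : ℕ} (u v a b : Vt k) (huv : (GG k).Adj u v) (hab : (GG k).Adj a b)
    (hne : s(u,v) ≠ s(a,b)) :
    segment ℝ (posW k u) (posW k v) ∩ segment ℝ (posW k a) (posW k b) ⊆
      ({posW k u, posW k v} ∩ {posW k a, posW k b} : Set E2) := by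
  obtain ⟨c, p, q, hok1, hor1⟩ := adj_struct huv
  obtain ⟨d, p', q', hok2, hor2⟩ := adj_struct hab
  obtain ⟨hseg1, hset1⟩ := segpair hor1
  obtain ⟨hseg2, hset2⟩ := segpair hor2
  intro x hx
  obtain ⟨hx1, hx2⟩ := hx
  rw [hseg1] at hx1
  rw [hseg2] at hx2
  obtain ⟨β₁, hβ₁0, hβ₁1, hxe1⟩ := seg_param hx1
  obtain ⟨β₂, hβ₂0, hβ₂1, hxe2⟩ := seg_param hx2
  have heq : pp k p q + β₁ • uu k c = pp k p' q' + β₂ • uu k d := by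
    rw [← hxe1, ← hxe2]
  have hpair : ({posW k u, posW k v} : Set E2) ≠ {posW k a, posW k b} := by
    intro hpe
    apply hne
    have hau : posW k a ∈ ({posW k u, posW k v} : Set E2) := by
      rw [hpe]; exact Set.mem_insert _ _
    have hbv : posW k b ∈ ({posW k u, posW k v} : Set E2) := by
      rw [hpe]; exact Set.mem_insert_of_mem _ rfl
    rw [Set.mem_insert_iff, Set.mem_singleton_iff] at hau hbv
    have hau' : a = u ∨ a = v := by
      rcases hau with h | h
      · exact Or.inl (posW_inj k h)
      · exact Or.inr (posW_inj k h)
    have hbv' : b = u ∨ b = v := by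
      rcases hbv with h | h
      · exact Or.inl (posW_inj k h)
      · exact Or.inr (posW_inj k h)
    rw [Sym2.eq_iff]
    rcases hau' with rfl | rfl <;> rcases hbv' with rfl | rfl
    · exact absurd rfl hab.ne
    · exact Or.inl ⟨rfl, rfl⟩
    · exact Or.inr ⟨rfl, rfl⟩
    · exact absurd rfl hab.ne
  have hcored : (β₁ = 0 ∨ β₁ = 1) ∧ (β₂ = 0 ∨ β₂ = 1) := by
    rcases lt_trichotomy c d with h | h | h
    · exact core_lt hok1 hok2 h hβ₁0 hβ₁1 hβ₂0 hβ₂1 heq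
    · subst h
      exfalso
      apply core_par hok1 hok2 _ heq
      rintro ⟨rfl, rfl⟩
      apply hpair
      rw [hset1, hset2]
    · have hsw := core_lt hok2 hok1 h hβ₂0 hβ₂1 hβ₁0 hβ₁1 heq.symm
      exact ⟨hsw.2, hsw.1⟩
  constructor
  · rw [hset1]
    rcases hcored.1 with h | h
    · rw [hxe1, h, zero_smul, add_zero]; exact Set.mem_insert _ _
    · rw [hxe1, h, one_smul]; exact Set.mem_insert_of_mem _ rfl
  · rw [hset2]
    rcases hcored.2 with h | h
    · rw [hxe2, h, zero_smul, add_zero]; exact Set.mem_insert _ _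
    · rw [hxe2, h, one_smul]; exact Set.mem_insert_of_mem _ rfl

lemma GG_noVI {k : ℕ} (hk1 : 1 ≤ k) (w u v : Vt k) (h : (GG k).Adj u v) :
    posW k w ∉ openSegment ℝ (posW k u) (posW k v) := by
  intro hmem
  have hne' : posW k u ≠ posW k v := fun hc => h.ne (posW_inj k hc)
  by_cases hw : w = u ∨ w = v
  · rcases hw with rfl | rfl
    · rw [left_mem_openSegment_iff] at hmem
      exact hne' hmem
    · rw [right_mem_openSegment_iff] at hmem
      exact hne' hmem
  · push_neg at hw
    obtain ⟨hwu, hwv⟩ := hw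
    obtain ⟨z, hz⟩ := exists_nbr hk1 w
    have hnes : s(w, z) ≠ s(u, v) := by
      intro hcon
      rw [Sym2.eq_iff] at hcon
      rcases hcon with ⟨rfl, rfl⟩ | ⟨rfl, rfl⟩
      · exact hwu rfl
      · exact hwv rfl
    have hsub := GG_noncross w z u v hz h hnes
    have hxmem : posW k w ∈ segment ℝ (posW k w) (posW k z) ∩
        segment ℝ (posW k u) (posW k v) :=
      ⟨left_mem_segment ℝ _ _, openSegment_subset_segment ℝ _ _ hmem⟩
    obtain ⟨-, h1⟩ := hsub hxmem
    rw [Set.mem_insert_iff, Set.mem_singleton_iff] at h1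
    rcases h1 with h1 | h1
    · exact hwu (posW_inj k h1)
    · exact hwv (posW_inj k h1)

lemma norm_uu (k t : ℕ) : ‖uu k t‖ = 1 := by
  rw [EuclideanSpace.norm_eq, Fin.sum_univ_two]
  unfold uu
  simp only [PiLp.toLp_apply, Matrix.cons_val_zero, Matrix.cons_val_one, Matrix.head_cons,
    Real.norm_eq_abs, sq_abs]
  rw [Real.cos_sq_add_sin_sq, Real.sqrt_one]

lemma GG_unit {k : ℕ} (u v : Vt k) (h : (GG k).Adj u v) :
    dist (posW k u) (posW k v) = 1 := by
  obtain ⟨c, p, q, hok, hor⟩ := adj_struct h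
  have key : ∀ A : E2, dist A (A + uu k c) = 1 := by
    intro A
    rw [dist_eq_norm]
    rw [show A - (A + uu k c) = -uu k c by abel, norm_neg, norm_uu]
  rcases hor with ⟨h1, h2⟩ | ⟨h1, h2⟩
  · rw [h1, h2]; exact key _
  · rw [h1, h2, dist_comm]; exact key _

lemma card_Vt (k : ℕ) : Fintype.card (Vt k) = (k + 1) * k / 2 + 1 := by
  rw [Fintype.card_option, Fintype.card_sigma]
  simp only [Fintype.card_fin]
  rw [show (∑ x : Fin (k+1), ((x : ℕ))) = ∑ i ∈ Finset.range (k+1), i from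
    Fin.sum_univ_eq_sum_range (fun i => i) (k+1)]
  have h2 := Finset.sum_range_id_mul_two (k + 1)
  rw [show k + 1 - 1 = k from rfl] at h2
  rw [← h2, Nat.mul_div_cancel _ (by norm_num : (0:ℕ) < 2)]

end MSG

/-- For every integer `k ≥ 2` there is a triangle-free matchstick graph with
exactly `(k+1)k/2 + 1` vertices and exactly `k²` edges (the rhombic tiling of a
regular `2k`-gon with unit side lengths). -/
theorem exists_triangleFree_matchstick_rhombic_tiling (k : ℕ) (hk : 2 ≤ k) :
    ∃ G : SimpleGraph (Fin ((k + 1) * k / 2 + 1)),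
      G.CliqueFree 3 ∧ Nonempty (MatchstickEmbedding G) ∧
      G.edgeSet.ncard = k ^ 2 := by
  classical
  have hk1 : 1 ≤ k := by omega
  have hcard : Fintype.card (MSG.Vt k) = (k + 1) * k / 2 + 1 := MSG.card_Vt k
  let e : MSG.Vt k ≃ Fin ((k + 1) * k / 2 + 1) := Fintype.equivFinOfCardEq hcard
  refine ⟨(MSG.GG k).comap ⇑e.symm, ?_, ?_, ?_⟩
  · intro s hs
    rw [SimpleGraph.is3Clique_iff] at hs
    obtain ⟨x, y, z, h1, h2, h3, -⟩ := hs
    exact MSG.no_tri h1 h2 h3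
  · refine ⟨⟨MSG.posW k ∘ ⇑e.symm, ?_, ?_, ?_, ?_⟩⟩
    · exact (MSG.posW_inj k).comp e.symm.injective
    · intro u v h
      exact MSG.GG_unit _ _ h
    · intro w u v h
      exact MSG.GG_noVI hk1 _ _ _ h
    · intro u v a b h1 h2 hne
      refine MSG.GG_noncross _ _ _ _ h1 h2 ?_
      intro hcon
      apply hne
      rw [Sym2.eq_iff] at hcon ⊢
      rcases hcon with ⟨ha, hb⟩ | ⟨ha, hb⟩
      · exact Or.inl ⟨e.symm.injective ha, e.symm.injective hb⟩
      · exact Or.inr ⟨e.symm.injective ha, e.symm.injective hb⟩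
  · have hpre : ((MSG.GG k).comap ⇑e.symm).edgeSet =
        Sym2.map ⇑e.symm ⁻¹' (MSG.GG k).edgeSet := by
      ext w
      induction w using Sym2.ind with
      | _ x y =>
        simp only [SimpleGraph.mem_edgeSet, Set.mem_preimage, Sym2.map_pair_eq,
          SimpleGraph.comap_adj]
    have hsurj : Function.Surjective (Sym2.map ⇑e.symm) := by
      intro z
      refine ⟨Sym2.map ⇑e z, ?_⟩
      rw [Sym2.map_map, show (⇑e.symm ∘ ⇑e) = id by funext t; simp, Sym2.map_id, id_eq]
    have himg : (MSG.GG k).edgeSet =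
        Sym2.map ⇑e.symm '' ((MSG.GG k).comap ⇑e.symm).edgeSet := by
      rw [hpre, Set.image_preimage_eq _ hsurj]
    have hinj : Function.Injective (Sym2.map ⇑e.symm) :=
      Sym2.map.injective e.symm.injective
    have hcount := MSG.ncard_GG k
    rw [himg, Set.ncard_image_of_injective _ hinj] at hcount
    rw [pow_two]
    exact hcount

end
end

section
/- Let r ≥ 2 be a fixed real number and let D be a closed disk of radius r in the plane. For every ε > 0 there exists n₀ such that for every n ≥ n₀ there is a matchstick graph on n vertices, all of whose vertices are contained in D, that has at least (2 - 5/r - ε)·n edges. (Proposition 3.1, the lower bound of Theorem 3 with c₁(r) = 5/r + o(1).) -/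
namespace MSAux

noncomputable def pt (x y : ℝ) : EuclideanSpace ℝ (Fin 2) := !₂[x, y]

lemma pt_ext {z : EuclideanSpace ℝ (Fin 2)} {x y : ℝ} (h0 : z 0 = x) (h1 : z 1 = y) :
    z = pt x y := by
  ext i; fin_cases i
  · exact h0
  · exact h1

lemma pt_fst (x y : ℝ) : pt x y 0 = x := rfl
lemma pt_snd (x y : ℝ) : pt x y 1 = y := rfl

lemma pt_inj {x y x' y' : ℝ} (h : pt x y = pt x' y') : x = x' ∧ y = y' :=
  ⟨congrArg (fun f : EuclideanSpace ℝ (Fin 2) => f 0) h,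
   congrArg (fun f : EuclideanSpace ℝ (Fin 2) => f 1) h⟩

lemma dist_pt (x y x' y' : ℝ) :
    dist (pt x y) (pt x' y') = Real.sqrt ((x - x')^2 + (y - y')^2) := by
  rw [EuclideanSpace.dist_eq]
  simp only [Fin.sum_univ_two, pt, Real.dist_eq, sq_abs]
  norm_num

lemma norm_pt (x y : ℝ) : ‖pt x y‖ = Real.sqrt (x^2 + y^2) := by
  have h0 : (pt 0 0 : EuclideanSpace ℝ (Fin 2)) = 0 := by
    ext i; fin_cases i <;> rfl
  have := dist_pt x y 0 0
  rw [h0, dist_zero_right] at this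
  simpa using this

lemma seg_pt {z : EuclideanSpace ℝ (Fin 2)} {ax ay bx by' : ℝ}
    (h : z ∈ segment ℝ (pt ax ay) (pt bx by')) :
    ∃ t : ℝ, 0 ≤ t ∧ t ≤ 1 ∧ z 0 = (1-t)*ax + t*bx ∧ z 1 = (1-t)*ay + t*by' := by
  rw [segment_eq_image'] at h
  obtain ⟨t, ht, rfl⟩ := h
  refine ⟨t, ht.1, ht.2, ?_, ?_⟩ <;>
  · show (pt ax ay + t • (pt bx by' - pt ax ay)) _ = _
    simp [pt]; ring

lemma oseg_pt {z : EuclideanSpace ℝ (Fin 2)} {ax ay bx by' : ℝ}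
    (h : z ∈ openSegment ℝ (pt ax ay) (pt bx by')) :
    ∃ t : ℝ, 0 < t ∧ t < 1 ∧ z 0 = (1-t)*ax + t*bx ∧ z 1 = (1-t)*ay + t*by' := by
  rw [openSegment_eq_image'] at h
  obtain ⟨t, ht, rfl⟩ := h
  refine ⟨t, ht.1, ht.2, ?_, ?_⟩ <;>
  · show (pt ax ay + t • (pt bx by' - pt ax ay)) _ = _
    simp [pt]; ring

noncomputable def ox (c : ℝ) (j : ℕ) : ℝ := if j % 2 = 1 then c else 0

lemma ox_nonneg {c : ℝ} (hc : 0 ≤ c) (j : ℕ) : 0 ≤ ox c j := by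
  unfold ox; split <;> simp [hc]

lemma ox_le {c : ℝ} (hc : 0 ≤ c) (j : ℕ) : ox c j ≤ c := by
  unfold ox; split <;> simp [hc]

lemma ox_succ (c : ℝ) (j : ℕ) : ox c j + ox c (j+1) = c := by
  rcases Nat.mod_two_eq_zero_or_one j with h | h
  · have h' : (j+1) % 2 = 1 := by omega
    simp [ox, h, h']
  · have h' : (j+1) % 2 = 0 := by omega
    simp [ox, h, h']

lemma ox_sq (c : ℝ) (j : ℕ) : (ox c j - ox c (j+1))^2 = c^2 := by
  rcases Nat.mod_two_eq_zero_or_one j with h | h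
  · have h' : (j+1) % 2 = 1 := by omega
    simp [ox, h, h']
  · have h' : (j+1) % 2 = 0 := by omega
    simp [ox, h, h']

noncomputable def Q (δ c x0 : ℝ) (i j : ℕ) : EuclideanSpace ℝ (Fin 2) :=
  pt (x0 + i + ox c j) (j * δ)

noncomputable def P (m : ℕ) (δ c x0 : ℝ) (v : ℕ) : EuclideanSpace ℝ (Fin 2) :=
  Q δ c x0 (v % m) (v / m)

def msRel (m mk a b : ℕ) : Prop := b < mk ∧ ((b = a + 1 ∧ b % m ≠ 0) ∨ b = a + m)

lemma succ_div_mod {m a : ℕ} (hm : 0 < m) (h : (a+1) % m ≠ 0) :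
    (a+1)/m = a/m ∧ (a+1)%m = a%m + 1 := by
  have h1 : a % m < m := Nat.mod_lt _ hm
  have hd := Nat.div_add_mod a m
  rcases eq_or_lt_of_le (Nat.succ_le_of_lt h1) with he | hl
  · exfalso; apply h
    have h2 : a + 1 = m*(a/m+1) := by rw [Nat.mul_add, Nat.mul_one]; omega
    rw [h2]; simp [Nat.mul_mod_right]
  · constructor
    · conv_lhs => rw [show a+1 = (a%m+1) + m*(a/m) by omega]
      rw [Nat.add_mul_div_left _ _ hm, Nat.div_eq_of_lt hl]; omega
    · conv_lhs => rw [show a+1 = (a%m+1) + m*(a/m) by omega]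
      rw [Nat.add_mul_mod_self_left, Nat.mod_eq_of_lt hl]

lemma P_succ {m a : ℕ} (δ c x0 : ℝ) (hm : 0 < m) (h : (a+1) % m ≠ 0) :
    P m δ c x0 (a+1) = Q δ c x0 (a%m+1) (a/m) := by
  obtain ⟨h1, h2⟩ := succ_div_mod hm h
  rw [P, h1, h2]

lemma P_add_m {m : ℕ} (a : ℕ) (δ c x0 : ℝ) (hm : 0 < m) :
    P m δ c x0 (a+m) = Q δ c x0 (a%m) (a/m+1) := by
  rw [P, Nat.add_div_right _ hm, Nat.add_mod_right]

lemma dist_H (δ c x0 : ℝ) (i j : ℕ) : dist (Q δ c x0 i j) (Q δ c x0 (i+1) j) = 1 := by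
  rw [Q, Q, dist_pt]
  have : (x0 + (i:ℝ) + ox c j - (x0 + ((i:ℕ)+1 : ℕ) + ox c j))^2 + ((j:ℝ)*δ - j*δ)^2 = 1 := by
    push_cast; ring
  rw [this, Real.sqrt_one]

lemma dist_V {δ c : ℝ} (x0 : ℝ) (hcd : c^2 + δ^2 = 1) (i j : ℕ) :
    dist (Q δ c x0 i j) (Q δ c x0 i (j+1)) = 1 := by
  rw [Q, Q, dist_pt]
  have : (x0 + (i:ℝ) + ox c j - (x0 + i + ox c (j+1)))^2 + ((j:ℝ)*δ - ((j:ℕ)+1 : ℕ)*δ)^2 = 1 := by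
    have h1 : (x0 + (i:ℝ) + ox c j - (x0 + i + ox c (j+1)))^2 = (ox c j - ox c (j+1))^2 := by ring
    rw [h1, ox_sq]
    push_cast
    nlinarith [hcd]
  rw [this, Real.sqrt_one]



lemma mem_pair_left {α : Type*} {z p q : α} (h : z = p) : z ∈ ({p, q} : Set α) := by simp [h]
lemma mem_pair_right {α : Type*} {z p q : α} (h : z = q) : z ∈ ({p, q} : Set α) := by simp [h]

lemma Q_x (δ c x0 : ℝ) (i j : ℕ) : Q δ c x0 i j 0 = x0 + i + ox c j := rfl
lemma Q_y (δ c x0 : ℝ) (i j : ℕ) : Q δ c x0 i j 1 = j * δ := rfl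

lemma Q_inj {δ c x0 : ℝ} (hδ : 0 < δ) {i j i' j' : ℕ}
    (h : Q δ c x0 i j = Q δ c x0 i' j') : i = i' ∧ j = j' := by
  rw [Q, Q] at h
  obtain ⟨h0, h1⟩ := pt_inj h
  have hj : j = j' := by
    have := mul_right_cancel₀ (ne_of_gt hδ) h1
    exact_mod_cast this
  subst hj
  refine ⟨?_, rfl⟩
  have : (i:ℝ) = i' := by linarith
  exact_mod_cast this

section Geometry
variable {δ c x0 : ℝ} {z : EuclideanSpace ℝ (Fin 2)}

lemma L_HH (hδ : 0 < δ) {i j i' j' : ℕ} (hne : ¬(i = i' ∧ j = j'))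
    (hz1 : z ∈ segment ℝ (Q δ c x0 i j) (Q δ c x0 (i+1) j))
    (hz2 : z ∈ segment ℝ (Q δ c x0 i' j') (Q δ c x0 (i'+1) j')) :
    z ∈ (({Q δ c x0 i j, Q δ c x0 (i+1) j} : Set (EuclideanSpace ℝ (Fin 2))) ∩
          {Q δ c x0 i' j', Q δ c x0 (i'+1) j'}) := by
  simp only [Q] at hz1 hz2 ⊢
  obtain ⟨t, ht0, ht1, hx1, hy1⟩ := seg_pt hz1
  obtain ⟨s, hs0, hs1, hx2, hy2⟩ := seg_pt hz2
  push_cast at hx1 hy1 hx2 hy2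
  have hyj : (j:ℝ) * δ = (j':ℝ) * δ := by linarith
  have hj : j = j' := by
    have := mul_right_cancel₀ (ne_of_gt hδ) hyj
    exact_mod_cast this
  subst hj
  have hii : i ≠ i' := fun h => hne ⟨h, rfl⟩
  rcases lt_or_gt_of_ne hii with h | h
  · have hci : (i:ℝ) + 1 ≤ (i':ℝ) := by exact_mod_cast h
    rcases eq_or_lt_of_le hci with he | hlt
    · have ht : t = 1 := by linarith
      have hs : s = 0 := by linarith
      subst ht; subst hs
      constructor
      · exact mem_pair_right (pt_ext (by push_cast; linarith) (by linarith))
      · exact mem_pair_left (pt_ext (by push_cast; linarith) (by linarith))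
    · exfalso; linarith
  · have hci : (i':ℝ) + 1 ≤ (i:ℝ) := by exact_mod_cast h
    rcases eq_or_lt_of_le hci with he | hlt
    · have hs : s = 1 := by linarith
      have ht : t = 0 := by linarith
      subst ht; subst hs
      constructor
      · exact mem_pair_left (pt_ext (by push_cast; linarith) (by linarith))
      · exact mem_pair_right (pt_ext (by push_cast; linarith) (by linarith))
    · exfalso; linarith

lemma L_HV (hδ : 0 < δ) {i j i' j' : ℕ}
    (hz1 : z ∈ segment ℝ (Q δ c x0 i j) (Q δ c x0 (i+1) j))
    (hz2 : z ∈ segment ℝ (Q δ c x0 i' j') (Q δ c x0 i' (j'+1))) :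
    z ∈ (({Q δ c x0 i j, Q δ c x0 (i+1) j} : Set (EuclideanSpace ℝ (Fin 2))) ∩
          {Q δ c x0 i' j', Q δ c x0 i' (j'+1)}) := by
  simp only [Q] at hz1 hz2 ⊢
  obtain ⟨t, ht0, ht1, hx1, hy1⟩ := seg_pt hz1
  obtain ⟨s, hs0, hs1, hx2, hy2⟩ := seg_pt hz2
  push_cast at hx1 hy1 hx2 hy2
  have hyj : (j:ℝ) * δ = ((j':ℝ) + s) * δ := by ring_nf; ring_nf at hy1 hy2; linarith
  have hjs : (j:ℝ) = (j':ℝ) + s := mul_right_cancel₀ (ne_of_gt hδ) hyj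
  rcases Nat.lt_trichotomy j j' with hc | hc | hc
  · exfalso
    have : (j:ℝ) + 1 ≤ (j':ℝ) := by exact_mod_cast hc
    linarith
  · subst hc
    have hs : s = 0 := by linarith
    subst hs
    have hz : z = pt (x0 + (i':ℝ) + ox c j) ((j:ℝ) * δ) := pt_ext (by linarith) (by linarith)
    have hit : (i':ℝ) = (i:ℝ) + t := by linarith
    have h1 : i ≤ i' := by
      have : (i:ℝ) ≤ (i':ℝ) := by linarith
      exact_mod_cast this
    have h2 : i' ≤ i + 1 := by
      have : (i':ℝ) ≤ (i:ℝ) + 1 := by linarith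
      exact_mod_cast this
    have : i' = i ∨ i' = i + 1 := by omega
    refine ⟨?_, mem_pair_left (by rw [hz])⟩
    rcases this with h3 | h3 <;> subst h3
    · exact mem_pair_left (by rw [hz])
    · exact mem_pair_right (by rw [hz]; try push_cast; try ring_nf)
  · rcases Nat.lt_or_ge (j'+1) j with hc2 | hc2
    · exfalso
      have : (j':ℝ) + 2 ≤ (j:ℝ) := by exact_mod_cast hc2
      linarith
    · have hj : j = j' + 1 := by omega
      subst hj
      have hs : s = 1 := by
        have : ((j':ℝ) + 1) = (j':ℝ) + s := by push_cast at hjs; linarith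
        linarith
      subst hs
      have hz : z = pt (x0 + (i':ℝ) + ox c (j'+1)) (((j':ℕ)+1 : ℕ) * δ) :=
        pt_ext (by linarith) (by push_cast; linarith)
      have hit : (i':ℝ) = (i:ℝ) + t := by linarith
      have h1 : i ≤ i' := by
        have : (i:ℝ) ≤ (i':ℝ) := by linarith
        exact_mod_cast this
      have h2 : i' ≤ i + 1 := by
        have : (i':ℝ) ≤ (i:ℝ) + 1 := by linarith
        exact_mod_cast this
      have : i' = i ∨ i' = i + 1 := by omega
      refine ⟨?_, mem_pair_right (by rw [hz])⟩
      rcases this with h3 | h3 <;> subst h3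
      · exact mem_pair_left (by rw [hz]; try push_cast; try ring_nf)
      · exact mem_pair_right (by rw [hz]; try push_cast; try ring_nf)

lemma L_VV (hδ : 0 < δ) (hc0 : 0 ≤ c) (hc1 : c < 1) {i j i' j' : ℕ}
    (hne : ¬(i = i' ∧ j = j'))
    (hz1 : z ∈ segment ℝ (Q δ c x0 i j) (Q δ c x0 i (j+1)))
    (hz2 : z ∈ segment ℝ (Q δ c x0 i' j') (Q δ c x0 i' (j'+1))) :
    z ∈ (({Q δ c x0 i j, Q δ c x0 i (j+1)} : Set (EuclideanSpace ℝ (Fin 2))) ∩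
          {Q δ c x0 i' j', Q δ c x0 i' (j'+1)}) := by
  simp only [Q] at hz1 hz2 ⊢
  obtain ⟨t, ht0, ht1, hx1, hy1⟩ := seg_pt hz1
  obtain ⟨s, hs0, hs1, hx2, hy2⟩ := seg_pt hz2
  push_cast at hx1 hy1 hx2 hy2
  have hyj : ((j:ℝ) + t) * δ = ((j':ℝ) + s) * δ := by ring_nf; ring_nf at hy1 hy2; linarith
  have hjs : (j:ℝ) + t = (j':ℝ) + s := mul_right_cancel₀ (ne_of_gt hδ) hyj
  rcases Nat.lt_trichotomy j j' with hc | hc | hc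
  · rcases Nat.lt_or_ge (j+1) j' with hc2 | hc2
    · exfalso
      have : (j:ℝ) + 2 ≤ (j':ℝ) := by exact_mod_cast hc2
      linarith
    · have hj : j' = j + 1 := by omega
      subst hj
      have ht : t = 1 := by push_cast at hjs; linarith
      have hs : s = 0 := by push_cast at hjs; linarith
      subst ht; subst hs
      exact ⟨mem_pair_right (pt_ext (by linarith) (by push_cast; linarith)),
             mem_pair_left (pt_ext (by push_cast; linarith) (by push_cast; linarith))⟩
  · subst hc
    have hii : i ≠ i' := fun h => hne ⟨h, rfl⟩
    have hb1a : 0 ≤ (1-t) * ox c j + t * ox c (j+1) := by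
      nlinarith [ox_nonneg hc0 j, ox_nonneg hc0 (j+1)]
    have hb1b : (1-t) * ox c j + t * ox c (j+1) ≤ c := by
      nlinarith [ox_le hc0 j, ox_le hc0 (j+1)]
    have hb2a : 0 ≤ (1-s) * ox c j + s * ox c (j+1) := by
      nlinarith [ox_nonneg hc0 j, ox_nonneg hc0 (j+1)]
    have hb2b : (1-s) * ox c j + s * ox c (j+1) ≤ c := by
      nlinarith [ox_le hc0 j, ox_le hc0 (j+1)]
    exfalso
    rcases lt_or_gt_of_ne hii with h | h
    · have hci : (i:ℝ) + 1 ≤ (i':ℝ) := by exact_mod_cast h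
      linarith
    · have hci : (i':ℝ) + 1 ≤ (i:ℝ) := by exact_mod_cast h
      linarith
  · rcases Nat.lt_or_ge (j'+1) j with hc2 | hc2
    · exfalso
      have : (j':ℝ) + 2 ≤ (j:ℝ) := by exact_mod_cast hc2
      linarith
    · have hj : j = j' + 1 := by omega
      subst hj
      have hs : s = 1 := by push_cast at hjs; linarith
      have ht : t = 0 := by push_cast at hjs; linarith
      subst ht; subst hs
      exact ⟨mem_pair_left (pt_ext (by push_cast; linarith) (by push_cast; linarith)),
             mem_pair_right (pt_ext (by push_cast; linarith) (by push_cast; linarith))⟩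

lemma not_on_H (hδ : 0 < δ) (i j i'' j'' : ℕ) :
    Q δ c x0 i'' j'' ∉ openSegment ℝ (Q δ c x0 i j) (Q δ c x0 (i+1) j) := by
  intro h
  simp only [Q] at h
  obtain ⟨t, ht0, ht1, hx, hy⟩ := oseg_pt h
  simp only [pt_fst, pt_snd] at hx hy
  push_cast at hx hy
  have hj : j'' = j := by
    have hyj : (j'':ℝ) * δ = (j:ℝ) * δ := by linarith
    have := mul_right_cancel₀ (ne_of_gt hδ) hyj
    exact_mod_cast this
  subst hj
  have h1 : (i:ℝ) < (i'':ℝ) := by linarith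
  have h2 : (i'':ℝ) < (i:ℝ) + 1 := by linarith
  have h1' : i < i'' := by exact_mod_cast h1
  have h2' : i'' < i + 1 := by exact_mod_cast h2
  omega

lemma not_on_V (hδ : 0 < δ) (i j i'' j'' : ℕ) :
    Q δ c x0 i'' j'' ∉ openSegment ℝ (Q δ c x0 i j) (Q δ c x0 i (j+1)) := by
  intro h
  simp only [Q] at h
  obtain ⟨t, ht0, ht1, hx, hy⟩ := oseg_pt h
  simp only [pt_fst, pt_snd] at hx hy
  push_cast at hx hy
  have hyj : (j'':ℝ) * δ = ((j:ℝ) + t) * δ := by ring_nf; ring_nf at hy; linarith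
  have hjs : (j'':ℝ) = (j:ℝ) + t := mul_right_cancel₀ (ne_of_gt hδ) hyj
  have h1 : (j:ℝ) < (j'':ℝ) := by linarith
  have h2 : (j'':ℝ) < (j:ℝ) + 1 := by linarith
  have h1' : j < j'' := by exact_mod_cast h1
  have h2' : j'' < j + 1 := by exact_mod_cast h2
  omega

lemma not_on_H' (hδ : 0 < δ) {i j : ℕ} (hz : z 1 = -1) :
    z ∉ openSegment ℝ (Q δ c x0 i j) (Q δ c x0 (i+1) j) := by
  intro h
  simp only [Q] at h
  obtain ⟨t, ht0, ht1, hx, hy⟩ := oseg_pt h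
  rw [hz] at hy
  have : 0 ≤ (j:ℝ) * δ := mul_nonneg (Nat.cast_nonneg j) hδ.le
  nlinarith

lemma not_on_V' (hδ : 0 < δ) {i j : ℕ} (hz : z 1 = -1) :
    z ∉ openSegment ℝ (Q δ c x0 i j) (Q δ c x0 i (j+1)) := by
  intro h
  simp only [Q] at h
  obtain ⟨t, ht0, ht1, hx, hy⟩ := oseg_pt h
  rw [hz] at hy
  push_cast at hy
  have h0 : 0 ≤ (j:ℝ) * δ := mul_nonneg (Nat.cast_nonneg j) hδ.le
  nlinarith

end Geometry


section Master
variable {m mk : ℕ} {δ c x0 : ℝ} {z : EuclideanSpace ℝ (Fin 2)}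

lemma rel_decode_ne {a p : ℕ} (hne : ¬(a = p)) :
    ¬(a % m = p % m ∧ a / m = p / m) := by
  rintro ⟨h1, h2⟩
  apply hne
  conv_lhs => rw [← Nat.div_add_mod a m]
  conv_rhs => rw [← Nat.div_add_mod p m]
  rw [h1, h2]

lemma master (hm0 : 0 < m) (hδ : 0 < δ) (hc0 : 0 ≤ c) (hc1 : c < 1) {a b p q : ℕ}
    (hab : msRel m mk a b) (hpq : msRel m mk p q) (hne : ¬(a = p ∧ b = q))
    (hz1 : z ∈ segment ℝ (P m δ c x0 a) (P m δ c x0 b))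
    (hz2 : z ∈ segment ℝ (P m δ c x0 p) (P m δ c x0 q)) :
    z ∈ (({P m δ c x0 a, P m δ c x0 b} : Set (EuclideanSpace ℝ (Fin 2))) ∩
          {P m δ c x0 p, P m δ c x0 q}) := by
  rcases hab.2 with ⟨rfl, h1⟩ | rfl <;> rcases hpq.2 with ⟨rfl, h2⟩ | rfl
  · -- HH
    rw [P_succ δ c x0 hm0 h1] at hz1 ⊢
    rw [P_succ δ c x0 hm0 h2] at hz2 ⊢
    simp only [P] at hz1 hz2 ⊢
    refine L_HH hδ ?_ hz1 hz2
    refine rel_decode_ne fun hap => hne ⟨hap, by rw [hap]⟩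
  · -- HV
    rw [P_succ δ c x0 hm0 h1] at hz1 ⊢
    rw [P_add_m p δ c x0 hm0] at hz2 ⊢
    simp only [P] at hz1 hz2 ⊢
    exact L_HV hδ hz1 hz2
  · -- VH
    rw [P_add_m a δ c x0 hm0] at hz1 ⊢
    rw [P_succ δ c x0 hm0 h2] at hz2 ⊢
    simp only [P] at hz1 hz2 ⊢
    obtain ⟨hA, hB⟩ := L_HV hδ hz2 hz1
    exact ⟨hB, hA⟩
  · -- VV
    rw [P_add_m a δ c x0 hm0] at hz1 ⊢
    rw [P_add_m p δ c x0 hm0] at hz2 ⊢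
    simp only [P] at hz1 hz2 ⊢
    refine L_VV hδ hc0 hc1 ?_ hz1 hz2
    refine rel_decode_ne fun hap => hne ⟨hap, by rw [hap]⟩

lemma unit_P (hm0 : 0 < m) (hcd : c^2 + δ^2 = 1) {a b : ℕ} (hab : msRel m mk a b) :
    dist (P m δ c x0 a) (P m δ c x0 b) = 1 := by
  rcases hab.2 with ⟨rfl, h1⟩ | rfl
  · rw [P_succ δ c x0 hm0 h1]
    exact dist_H δ c x0 (a % m) (a / m)
  · rw [P_add_m a δ c x0 hm0]
    exact dist_V x0 hcd (a % m) (a / m)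

end Master

section Count

lemma decode_uniq {m : ℕ} (hm0 : 0 < m) {j i j' i' : ℕ} (hi : i < m) (hi' : i' < m)
    (h : j*m + i = j'*m + i') : j = j' ∧ i = i' := by
  have h1 : (i + j*m) % m = i := by rw [Nat.add_mul_mod_self_right, Nat.mod_eq_of_lt hi]
  have h2 : (i' + j'*m) % m = i' := by rw [Nat.add_mul_mod_self_right, Nat.mod_eq_of_lt hi']
  have h3 : (i + j*m) / m = j := by rw [Nat.add_mul_div_right _ _ hm0, Nat.div_eq_of_lt hi]; omega
  have h4 : (i' + j'*m) / m = j' := by rw [Nat.add_mul_div_right _ _ hm0, Nat.div_eq_of_lt hi']; omega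
  have he : i + j*m = i' + j'*m := by omega
  constructor
  · rw [← h3, ← h4, he]
  · rw [← h1, ← h2, he]

lemma card_bound {n m k : ℕ} (hm : 2 ≤ m) (hk : 1 ≤ k) (hmkn : m * k ≤ n)
    (G : SimpleGraph (Fin n))
    (hadj : ∀ a b : ℕ, msRel m (m*k) a b → ∀ (ha : a < n) (hb : b < n),
      G.Adj ⟨a, ha⟩ ⟨b, hb⟩) :
    (k*(m-1) + (k-1)*m : ℕ) ≤ G.edgeSet.ncard := by
  classical
  have hm0 : 0 < m := by omega
  have hb0 : ∀ j i : ℕ, j < k → i < m → j*m + i < m*k := by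
    intro j i hj hi
    calc j*m + i < j*m + m := by omega
    _ = (j+1)*m := by ring
    _ ≤ k*m := Nat.mul_le_mul_right m (by omega)
    _ = m*k := Nat.mul_comm k m
  have hbn : ∀ j i : ℕ, j < k → i < m → j*m + i < n := fun j i hj hi =>
    lt_of_lt_of_le (hb0 j i hj hi) hmkn
  let f : Fin k × Fin (m-1) ⊕ Fin (k-1) × Fin m → Sym2 (Fin n) :=
    Sum.elim
      (fun p => s((⟨p.1*m + p.2, hbn p.1 p.2 p.1.2 (by omega)⟩ : Fin n),
                  (⟨p.1*m + p.2 + 1, by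
                    have := hbn p.1 (p.2+1) p.1.2 (by have := p.2.2; omega)
                    omega⟩ : Fin n)))
      (fun p => s((⟨p.1*m + p.2, hbn p.1 p.2 (by have := p.1.2; omega) p.2.2⟩ : Fin n),
                  (⟨p.1*m + p.2 + m, by
                    have h1 := hbn (p.1+1) p.2 (by have := p.1.2; omega) p.2.2
                    have h2 : ((p.1:ℕ)+1)*m = p.1*m + m := by ring
                    omega⟩ : Fin n)))
  have hinj : Function.Injective f := by
    rintro (⟨j, i⟩ | ⟨j, i⟩) (⟨j', i'⟩ | ⟨j', i'⟩) h <;>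
      simp only [f, Sum.elim_inl, Sum.elim_inr, Sym2.eq_iff, Fin.mk.injEq] at h
    · rcases h with ⟨h1, h2⟩ | ⟨h1, h2⟩
      · obtain ⟨hj, hi⟩ := decode_uniq hm0 (by have := i.2; omega) (by have := i'.2; omega) h1
        simp [Prod.ext_iff, Fin.ext_iff, hj, hi]
      · omega
    · exfalso
      rcases h with ⟨h1, h2⟩ | ⟨h1, h2⟩ <;> omega
    · exfalso
      rcases h with ⟨h1, h2⟩ | ⟨h1, h2⟩ <;> omega
    · rcases h with ⟨h1, h2⟩ | ⟨h1, h2⟩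
      · obtain ⟨hj, hi⟩ := decode_uniq hm0 i.2 i'.2 h1
        simp [Prod.ext_iff, Fin.ext_iff, hj, hi]
      · omega
  have hrange : ∀ x, f x ∈ G.edgeSet := by
    rintro (⟨j, i⟩ | ⟨j, i⟩) <;>
      simp only [f, Sum.elim_inl, Sum.elim_inr, SimpleGraph.mem_edgeSet]
    · apply hadj
      refine ⟨hb0 j (i+1) j.2 (by have := i.2; omega), Or.inl ⟨rfl, ?_⟩⟩
      rw [show (j:ℕ)*m + i + 1 = (i+1) + j*m by ring, Nat.add_mul_mod_self_right,
        Nat.mod_eq_of_lt (by have := i.2; omega)]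
      omega
    · apply hadj
      refine ⟨?_, Or.inr rfl⟩
      have h1 := hb0 (j+1) i (by have := j.2; omega) i.2
      have h2 : ((j:ℕ)+1)*m = j*m + m := by ring
      omega
  have hcard : (Finset.image f Finset.univ).card = k*(m-1) + (k-1)*m := by
    rw [Finset.card_image_of_injective _ hinj, Finset.card_univ]
    simp
  calc (k*(m-1) + (k-1)*m : ℕ) = (Finset.image f Finset.univ).card := hcard.symm
  _ = (↑(Finset.image f Finset.univ) : Set (Sym2 (Fin n))).ncard := (Set.ncard_coe_finset _).symm
  _ ≤ G.edgeSet.ncard := by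
      apply Set.ncard_le_ncard _ (Set.toFinite _)
      intro e he
      rw [Finset.mem_coe, Finset.mem_image] at he
      obtain ⟨x, _, rfl⟩ := he
      exact hrange x

end Count

def translate_emb {V : Type*} {G : SimpleGraph V} (e : MatchstickEmbedding G)
    (o : EuclideanSpace ℝ (Fin 2)) : MatchstickEmbedding G where
  pos v := o + e.pos v
  inj u v h := e.inj (add_left_cancel h)
  unit u v h := by rw [dist_add_left]; exact e.unit u v h
  noVertexInterior w u v h hmem := by
    rw [← openSegment_translate_image ℝ o (e.pos u) (e.pos v)] at hmem
    obtain ⟨x, hx, hxe⟩ := hmem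
    have hxw : x = e.pos w := add_left_cancel hxe
    subst hxw
    exact e.noVertexInterior w u v h hx
  noncross u v a b h1 h2 hne := by
    intro z hz
    rw [Set.mem_inter_iff, ← segment_translate_image ℝ o (e.pos u) (e.pos v),
      ← segment_translate_image ℝ o (e.pos a) (e.pos b)] at hz
    obtain ⟨⟨x, hx, rfl⟩, ⟨x', hx', hxx⟩⟩ := hz
    have hxw : x' = x := add_left_cancel hxx
    subst hxw
    obtain ⟨hA, hB⟩ := e.noncross u v a b h1 h2 hne ⟨hx, hx'⟩
    constructor
    · rcases hA with h | h
      · exact mem_pair_left (by rw [show x' = e.pos u from h])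
      · exact mem_pair_right (by rw [show x' = e.pos v from h])
    · rcases hB with h | h
      · exact mem_pair_left (by rw [show x' = e.pos a from h])
      · exact mem_pair_right (by rw [show x' = e.pos b from h])

end MSAux


set_option maxHeartbeats 1600000 in
/-- **Proposition 3.1.** Let `r ≥ 2` and let `D` be a closed disk of radius `r`.
For every `ε > 0`, for all sufficiently large `n` there is a matchstick graph
on `n` vertices contained in `D` with at least `(2 - 5/r - ε)·n` edges. -/
theorem matchstick_in_disk_lower_bound (r : ℝ) (hr : 2 ≤ r)
    (o : EuclideanSpace ℝ (Fin 2)) (ε : ℝ) (hε : 0 < ε) :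
    ∃ n₀ : ℕ, ∀ n : ℕ, n₀ ≤ n →
      ∃ (G : SimpleGraph (Fin n)) (emb : MatchstickEmbedding G),
        (∀ v, emb.pos v ∈ Metric.closedBall o r) ∧
        (2 - 5 / r - ε) * n ≤ (G.edgeSet.ncard : ℝ) := by
  classical
  refine ⟨⌈r⌉₊ * (⌈3/ε⌉₊ + 1), fun n hn => ?_⟩
  set m := ⌈r⌉₊ with hm_def
  have hr0 : (0:ℝ) < r := by linarith
  have hmr : r ≤ (m:ℝ) := Nat.le_ceil r
  have hm2 : 2 ≤ m := by
    by_contra h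
    push_neg at h
    have : (m:ℝ) < 2 := by exact_mod_cast h
    linarith
  have hm0 : 0 < m := by omega
  have hmr1 : (m:ℝ) ≤ r + 1 := by
    have := Nat.ceil_lt_add_one (le_of_lt hr0)
    linarith
  set k := n / m with hk_def
  have hkc : ⌈3/ε⌉₊ + 1 ≤ k := by
    rw [hk_def]
    calc ⌈3/ε⌉₊ + 1 = m * (⌈3/ε⌉₊ + 1) / m := (Nat.mul_div_cancel_left _ hm0).symm
    _ ≤ n / m := Nat.div_le_div_right hn
  have hk1 : 1 ≤ k := by omega
  have hkR0 : (0:ℝ) < k := by exact_mod_cast hk1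
  have hkRg1 : (1:ℝ) ≤ k := by exact_mod_cast hk1
  have hk3 : 3 / ε ≤ (k:ℝ) := by
    have h1 := Nat.le_ceil (3/ε)
    have h2 : ((⌈3/ε⌉₊ : ℕ) : ℝ) + 1 ≤ (k:ℝ) := by exact_mod_cast hkc
    linarith
  have hmkn : m * k ≤ n := by rw [hk_def, mul_comm]; exact Nat.div_mul_le_self n m
  have hmod : n % m < m := Nat.mod_lt n hm0
  have hdm : m * k + n % m = n := by rw [hk_def]; exact Nat.div_add_mod n m
  set δ : ℝ := 1 / (4*k) with hδ_def
  have hδ : 0 < δ := by rw [hδ_def]; positivity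
  have hδ4 : δ ≤ 1/4 := by
    rw [hδ_def]
    exact one_div_le_one_div_of_le (by norm_num) (by linarith)
  have hkδ : (k:ℝ) * δ = 1/4 := by
    have hk0 : (k:ℝ) ≠ 0 := ne_of_gt hkR0
    rw [hδ_def]
    field_simp
  set c : ℝ := Real.sqrt (1 - δ^2) with hc_def
  have hcd : c^2 + δ^2 = 1 := by
    rw [hc_def, Real.sq_sqrt (by nlinarith)]
    ring
  have hc0 : (0:ℝ) ≤ c := by rw [hc_def]; exact Real.sqrt_nonneg _
  have hc1 : c < 1 := by nlinarith
  set x0 : ℝ := -(m:ℝ)/2 with hx0_def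
  set pos0 : Fin n → EuclideanSpace ℝ (Fin 2) := fun v =>
    if v.val < m*k then MSAux.P m δ c x0 v.val
    else MSAux.pt (x0 + ((v.val : ℝ) - ((m*k : ℕ):ℝ))) (-1) with hpos0_def
  set G : SimpleGraph (Fin n) :=
    SimpleGraph.fromRel (fun u v => MSAux.msRel m (m*k) u.val v.val) with hG_def
  have hposP : ∀ v : Fin n, v.val < m*k → pos0 v = MSAux.P m δ c x0 v.val := by
    intro v h
    rw [hpos0_def]
    exact if_pos h
  have hposL : ∀ v : Fin n, ¬ v.val < m*k →
      pos0 v = MSAux.pt (x0 + ((v.val : ℝ) - ((m*k : ℕ):ℝ))) (-1) := by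
    intro v h
    rw [hpos0_def]
    exact if_neg h
  have rel_lt : ∀ a b : ℕ, MSAux.msRel m (m*k) a b → a < m*k ∧ b < m*k := by
    intro a b h
    have h1 := h.1
    rcases h.2 with ⟨h2, _⟩ | h2 <;> omega
  have hadj : ∀ u v : Fin n, G.Adj u v ↔ u.val ≠ v.val ∧
      (MSAux.msRel m (m*k) u.val v.val ∨ MSAux.msRel m (m*k) v.val u.val) := by
    intro u v
    rw [hG_def, SimpleGraph.fromRel_adj]
    constructor
    · rintro ⟨h1, h2⟩; exact ⟨fun he => h1 (Fin.ext he), h2⟩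
    · rintro ⟨h1, h2⟩; exact ⟨fun he => h1 (congrArg Fin.val he), h2⟩
  have key : ∀ u v : Fin n, G.Adj u v → ∃ a b : ℕ, MSAux.msRel m (m*k) a b ∧
      ({pos0 u, pos0 v} : Set (EuclideanSpace ℝ (Fin 2)))
        = {MSAux.P m δ c x0 a, MSAux.P m δ c x0 b} ∧
      segment ℝ (pos0 u) (pos0 v) = segment ℝ (MSAux.P m δ c x0 a) (MSAux.P m δ c x0 b) ∧
      openSegment ℝ (pos0 u) (pos0 v)
        = openSegment ℝ (MSAux.P m δ c x0 a) (MSAux.P m δ c x0 b) ∧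
      s(u.val, v.val) = s(a, b) := by
    intro u v h
    obtain ⟨hne, hrel | hrel⟩ := (hadj u v).mp h
    · refine ⟨u.val, v.val, hrel, ?_, ?_, ?_, rfl⟩ <;>
        rw [hposP u (rel_lt _ _ hrel).1, hposP v (rel_lt _ _ hrel).2]
    · refine ⟨v.val, u.val, hrel, ?_, ?_, ?_, Sym2.eq_swap⟩
      · rw [hposP u (rel_lt _ _ hrel).2, hposP v (rel_lt _ _ hrel).1]
        exact Set.pair_comm _ _
      · rw [hposP u (rel_lt _ _ hrel).2, hposP v (rel_lt _ _ hrel).1]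
        exact segment_symm ℝ _ _
      · rw [hposP u (rel_lt _ _ hrel).2, hposP v (rel_lt _ _ hrel).1]
        exact openSegment_symm ℝ _ _
  have hinj : Function.Injective pos0 := by
    intro u v h
    by_cases hu : u.val < m*k <;> by_cases hv : v.val < m*k
    · rw [hposP u hu, hposP v hv] at h
      simp only [MSAux.P] at h
      obtain ⟨h1, h2⟩ := MSAux.Q_inj hδ h
      apply Fin.ext
      conv_lhs => rw [← Nat.div_add_mod u.val m]
      conv_rhs => rw [← Nat.div_add_mod v.val m]
      rw [h1, h2]
    · rw [hposP u hu, hposL v hv] at h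
      simp only [MSAux.P, MSAux.Q] at h
      obtain ⟨_, h2⟩ := MSAux.pt_inj h
      exfalso
      have : 0 ≤ ((u.val / m : ℕ):ℝ) * δ := mul_nonneg (Nat.cast_nonneg _) hδ.le
      linarith
    · rw [hposL u hu, hposP v hv] at h
      simp only [MSAux.P, MSAux.Q] at h
      obtain ⟨_, h2⟩ := MSAux.pt_inj h
      exfalso
      have : 0 ≤ ((v.val / m : ℕ):ℝ) * δ := mul_nonneg (Nat.cast_nonneg _) hδ.le
      linarith
    · rw [hposL u hu, hposL v hv] at h
      obtain ⟨h1, _⟩ := MSAux.pt_inj h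
      apply Fin.ext
      have : (u.val : ℝ) = v.val := by linarith
      exact_mod_cast this
  have hunit : ∀ u v : Fin n, G.Adj u v → dist (pos0 u) (pos0 v) = 1 := by
    intro u v h
    obtain ⟨hne, hrel | hrel⟩ := (hadj u v).mp h
    · rw [hposP u (rel_lt _ _ hrel).1, hposP v (rel_lt _ _ hrel).2]
      exact MSAux.unit_P hm0 hcd hrel
    · rw [dist_comm, hposP u (rel_lt _ _ hrel).2, hposP v (rel_lt _ _ hrel).1]
      exact MSAux.unit_P hm0 hcd hrel
  have hnovert : ∀ w u v : Fin n, G.Adj u v → pos0 w ∉ openSegment ℝ (pos0 u) (pos0 v) := by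
    intro w u v h
    obtain ⟨a, b, hrel, _, _, hoseg, _⟩ := key u v h
    rw [hoseg]
    rcases hrel.2 with ⟨hb, h1⟩ | hb <;> subst hb
    · rw [MSAux.P_succ δ c x0 hm0 h1]
      by_cases hw : w.val < m*k
      · rw [hposP w hw]
        simp only [MSAux.P]
        exact MSAux.not_on_H hδ _ _ _ _
      · rw [hposL w hw]
        exact MSAux.not_on_H' hδ rfl
    · rw [MSAux.P_add_m a δ c x0 hm0]
      by_cases hw : w.val < m*k
      · rw [hposP w hw]
        simp only [MSAux.P]
        exact MSAux.not_on_V hδ _ _ _ _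
      · rw [hposL w hw]
        exact MSAux.not_on_V' hδ rfl
  have hnoncross : ∀ u v a b : Fin n, G.Adj u v → G.Adj a b → s(u, v) ≠ s(a, b) →
      segment ℝ (pos0 u) (pos0 v) ∩ segment ℝ (pos0 a) (pos0 b) ⊆
        ({pos0 u, pos0 v} ∩ {pos0 a, pos0 b} : Set (EuclideanSpace ℝ (Fin 2))) := by
    intro u v a b h1 h2 hsne
    obtain ⟨a1, b1, hr1, hset1, hseg1, _, hs1⟩ := key u v h1
    obtain ⟨a2, b2, hr2, hset2, hseg2, _, hs2⟩ := key a b h2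
    rw [hseg1, hseg2, hset1, hset2]
    intro z hz
    refine MSAux.master hm0 hδ hc0 hc1 hr1 hr2 ?_ hz.1 hz.2
    rintro ⟨e1, e2⟩
    apply hsne
    have hv : s(u.val, v.val) = s(a.val, b.val) := by rw [hs1, hs2, e1, e2]
    rcases Sym2.eq_iff.mp hv with ⟨f1, f2⟩ | ⟨f1, f2⟩
    · exact Sym2.eq_iff.mpr (Or.inl ⟨Fin.ext f1, Fin.ext f2⟩)
    · exact Sym2.eq_iff.mpr (Or.inr ⟨Fin.ext f1, Fin.ext f2⟩)
  have sqb : ∀ x A : ℝ, -A ≤ x → x ≤ A → x^2 ≤ A^2 := by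
    intro x A hA1 hA2
    nlinarith
  have hnorm : ∀ v : Fin n, ‖pos0 v‖ ≤ r := by
    intro v
    have key2 : ∀ x y : ℝ, x^2 ≤ ((m:ℝ)/2)^2 → y^2 ≤ 1 → ‖MSAux.pt x y‖ ≤ r := by
      intro x y hx hy
      rw [MSAux.norm_pt]
      have h1 : x^2 + y^2 ≤ r^2 := by nlinarith
      calc Real.sqrt (x^2+y^2) ≤ Real.sqrt (r^2) := Real.sqrt_le_sqrt h1
      _ = r := Real.sqrt_sq (by linarith)
    by_cases hv : v.val < m*k
    · rw [hposP v hv]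
      simp only [MSAux.P, MSAux.Q]
      apply key2
      · have hi : v.val % m < m := Nat.mod_lt _ hm0
        have hiR : ((v.val % m : ℕ):ℝ) ≤ (m:ℝ) - 1 := by
          have h3 : v.val % m + 1 ≤ m := hi
          have h4 : ((v.val % m : ℕ):ℝ) + 1 ≤ (m:ℝ) := by exact_mod_cast h3
          linarith
        have hoxl := MSAux.ox_nonneg hc0 (v.val / m)
        have hoxu := MSAux.ox_le hc0 (v.val / m)
        have hcast0 : (0:ℝ) ≤ ((v.val % m : ℕ):ℝ) := Nat.cast_nonneg _
        apply sqb
        · rw [hx0_def]; linarith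
        · rw [hx0_def]; linarith
      · have hj : v.val / m < k := by
          rw [Nat.div_lt_iff_lt_mul hm0]
          have : k * m = m * k := Nat.mul_comm k m
          omega
        have hjR : ((v.val / m : ℕ):ℝ) ≤ (k:ℝ) := by exact_mod_cast hj.le
        have h0 : 0 ≤ ((v.val / m : ℕ):ℝ) * δ := mul_nonneg (Nat.cast_nonneg _) hδ.le
        have h1 : ((v.val / m : ℕ):ℝ) * δ ≤ (k:ℝ) * δ :=
          mul_le_mul_of_nonneg_right hjR hδ.le
        nlinarith [h0, h1, hkδ]
    · rw [hposL v hv]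
      push_neg at hv
      apply key2
      · have hv2 : v.val < m*k + m := by
          have := v.2
          omega
        have hvR : ((m*k : ℕ):ℝ) ≤ (v.val:ℝ) := by exact_mod_cast hv
        have hvR2 : (v.val:ℝ) + 1 ≤ ((m*k : ℕ):ℝ) + (m:ℝ) := by exact_mod_cast hv2
        apply sqb
        · rw [hx0_def]; linarith
        · rw [hx0_def]; linarith
      · norm_num
  refine ⟨G, MSAux.translate_emb ⟨pos0, hinj, hunit, hnovert, hnoncross⟩ o, ?_, ?_⟩
  · intro v
    show o + pos0 v ∈ Metric.closedBall o r
    rw [Metric.mem_closedBall, dist_eq_norm]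
    have : o + pos0 v - o = pos0 v := by abel
    rw [this]
    exact hnorm v
  · have hcb : (k*(m-1) + (k-1)*m : ℕ) ≤ G.edgeSet.ncard := by
      apply MSAux.card_bound hm2 hk1 hmkn G
      intro a b hrel ha hb
      refine (hadj ⟨a, ha⟩ ⟨b, hb⟩).mpr ⟨?_, Or.inl hrel⟩
      show a ≠ b
      rcases hrel.2 with ⟨h2, _⟩ | h2 <;> omega
    have hmR : (2:ℝ) ≤ (m:ℝ) := by exact_mod_cast hm2
    have hkR1 : (1:ℝ) ≤ (k:ℝ) := by exact_mod_cast hk1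
    have hcast : ((k*(m-1) + (k-1)*m : ℕ):ℝ) = 2*(m:ℝ)*(k:ℝ) - (m:ℝ) - (k:ℝ) := by
      rw [Nat.cast_add, Nat.cast_mul, Nat.cast_mul,
        Nat.cast_sub (by omega : 1 ≤ m), Nat.cast_sub (by omega : 1 ≤ k), Nat.cast_one]
      ring
    set T : ℝ := ((n % m : ℕ):ℝ) with hT_def
    have hnR : (n:ℝ) = (m:ℝ)*(k:ℝ) + T := by
      rw [hT_def]
      have h5 : ((m*k + n%m : ℕ):ℝ) = (n:ℝ) := by rw [hdm]
      push_cast at h5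
      linarith
    have hTm : T ≤ (m:ℝ) := by rw [hT_def]; exact_mod_cast hmod.le
    have hT0 : (0:ℝ) ≤ T := by rw [hT_def]; exact Nat.cast_nonneg _
    have hKε : 3 ≤ ε * (k:ℝ) := by
      have := (div_le_iff₀ hε).mp hk3
      linarith
    have hgoal2 : (2 - 5/r - ε) * (n:ℝ) ≤ 2*(m:ℝ)*(k:ℝ) - (m:ℝ) - (k:ℝ) := by
      rw [hnR]
      have hmkT : (0:ℝ) ≤ (m:ℝ)*(k:ℝ) + T := by nlinarith
      have hmpos : (0:ℝ) < m := by linarith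
      have h1m : 1/(m:ℝ) ≤ 5/r := by
        have h2 : 1/(m:ℝ) ≤ 1/r := one_div_le_one_div_of_le hr0 hmr
        have h3 : (0:ℝ) ≤ 4/r := by positivity
        have h4 : (5:ℝ)/r = 1/r + 4/r := by ring
        linarith
      rcases le_or_gt (2 - 5/r - ε) 0 with hc' | hc'
      · have hRHS : (0:ℝ) ≤ 2*(m:ℝ)*(k:ℝ) - m - k := by nlinarith
        have := mul_nonpos_of_nonpos_of_nonneg hc' hmkT
        linarith
      · have hfac : (2 - 5/r - ε) ≤ 2 - 1/(m:ℝ) - ε := by linarith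
        have hstep : (2 - 5/r - ε)*((m:ℝ)*(k:ℝ) + T) ≤ (2 - 1/(m:ℝ) - ε)*((m:ℝ)*(k:ℝ) + T) :=
          mul_le_mul_of_nonneg_right hfac hmkT
        have hMinv : (1/(m:ℝ)) * (m:ℝ) = 1 := by field_simp
        have expand : (2 - 1/(m:ℝ) - ε)*((m:ℝ)*(k:ℝ) + T)
            = 2*(m:ℝ)*(k:ℝ) + 2*T - ((1/(m:ℝ))*(m:ℝ))*(k:ℝ) - (1/(m:ℝ))*T
              - ε*((m:ℝ)*(k:ℝ)) - ε*T := by ring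
        rw [hMinv, one_mul] at expand
        have hεmk : 3*(m:ℝ) ≤ ε*((m:ℝ)*(k:ℝ)) := by nlinarith
        have hp1 : 0 ≤ (1/(m:ℝ))*T := by positivity
        have hp2 : 0 ≤ ε*T := by positivity
        linarith
    calc (2 - 5/r - ε) * (n:ℝ) ≤ 2*(m:ℝ)*(k:ℝ) - m - k := hgoal2
    _ = ((k*(m-1) + (k-1)*m : ℕ):ℝ) := hcast.symm
    _ ≤ (G.edgeSet.ncard : ℝ) := by exact_mod_cast hcb
end
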